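/- arXiv:2405.08501 — 8 statements merged into one kernel-verified Lean document; each statement's English description precedes it below -/
import Mathlib

section
/- Let R be a discrete valuation ring with fraction field K, let L/K be a finite field extension and S the integral closure of R in L. Then two matrices A, B ∈ Mat_2(R) are similar over R if and only if they are similar over S. -/
/-!
Over a discrete valuation ring every non-scalar `A` can be written as `a + g • M` with `g ≠ 0`
and `M` not scalar modulo the maximal ideal. Such an `M` has a cyclic vector, so its conjugacy
class is determined by its trace and determinant. If `A` is conjugate to `B` over `S`, then
`B = a + g • P` over `S` with `P` conjugate to `M`; since `R` is integrally closed, `S ∩ K = R`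
and divisibility by elements of `R` descends from `S` to `R`, so `B = a + g • N` over `R`. The
same descent shows that `N` is again not scalar modulo the maximal ideal, and `N` has the trace
and determinant of `M`, so `N` and `M`, hence `B` and `A`, are conjugate over `R`.
-/

open IsLocalRing

theorem isConj_iff_exists_units_mul_mul_inv {M : Type*} [Monoid M] {a b : M} :
    IsConj a b ↔ ∃ u : Mˣ, ↑u * a * ↑u⁻¹ = b :=
  exists_congr fun u => (Units.mul_inv_eq_iff_eq_mul u).symm

section Algebra

variable {T A : Type*} [CommSemiring T] [Semiring A] [Algebra T A]

theorem isConj_algebraMap_left_iff {c : T} {y : A} :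
    IsConj (algebraMap T A c) y ↔ y = algebraMap T A c := by
  refine ⟨fun ⟨u, hu⟩ => u.isUnit.mul_right_cancel ?_, fun h => h ▸ IsConj.refl _⟩
  rw [← hu.eq, Algebra.commutes]

theorem IsConj.algebraMap_add_smul {x y : A} (h : IsConj x y) (c g : T) :
    IsConj (algebraMap T A c + g • x) (algebraMap T A c + g • y) := by
  obtain ⟨u, hu⟩ := h
  refine ⟨u, ?_⟩
  simp only [SemiconjBy, mul_add, add_mul, mul_smul_comm, smul_mul_assoc, hu.eq, Algebra.commutes]

theorem IsConj.exists_eq_algebraMap_add_smul {x y : A} {c g : T}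
    (h : IsConj (algebraMap T A c + g • x) y) :
    ∃ z, IsConj x z ∧ y = algebraMap T A c + g • z := by
  obtain ⟨u, hu⟩ := h
  refine ⟨u * x * ↑u⁻¹, ⟨u, by simp [SemiconjBy, mul_assoc]⟩, ?_⟩
  rw [← (Units.mul_inv_eq_iff_eq_mul u).mpr hu.eq, mul_add, add_mul, ← Algebra.commutes,
    mul_assoc, Units.mul_inv, mul_one, mul_smul_comm, smul_mul_assoc]

end Algebra

theorem exists_eq_smul_of_ne_zero {R ι : Type*} [CommRing R] [IsDomain R]
    [IsPrincipalIdealRing R] [IsLocalRing R] [Fintype ι] {v : ι → R} (hv : v ≠ 0) :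
    ∃ g : R, g ≠ 0 ∧ ∃ w : ι → R, v = g • w ∧ ∃ i, IsUnit (w i) := by
  obtain ⟨g, hg⟩ := Submodule.IsPrincipal.principal (Ideal.span (Set.range v))
  change Ideal.span (Set.range v) = Ideal.span {g} at hg
  have hvg : ∀ i, ∃ w, w * g = v i := fun i =>
    Ideal.mem_span_singleton'.mp (hg ▸ Ideal.subset_span ⟨i, rfl⟩)
  choose w hw using hvg
  have hg0 : g ≠ 0 := by
    rintro rfl
    exact hv (funext fun i => by simp [← hw])
  obtain ⟨c, hc⟩ := (Submodule.mem_span_range_iff_exists_fun R).mp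
    (hg ▸ Ideal.mem_span_singleton_self g)
  refine ⟨g, hg0, w, funext fun i => by simp [← hw, mul_comm], ?_⟩
  by_contra! hw_nonunit
  have hsum : ∑ i, c i * w i = 1 := by
    refine mul_left_cancel₀ hg0 ?_
    calc g * ∑ i, c i * w i = ∑ i, c i • v i := by
          simp only [Finset.mul_sum, smul_eq_mul, ← hw]
          exact Finset.sum_congr rfl fun i _ => by ring
      _ = g * 1 := by rw [hc, mul_one]
  exact (maximalIdeal R).ne_top_iff_one.mp (maximalIdeal.isMaximal R).ne_top
    (hsum ▸ Ideal.sum_mem _ fun i _ => Ideal.mul_mem_left _ _ (hw_nonunit i))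

section IntegralClosure

variable {R L : Type*} [CommRing R] [Field L] [Algebra R L]

theorem algebraMap_integralClosure_injective (K : Type*) [Field K] [Algebra R K]
    [IsFractionRing R K] [Algebra K L] [IsScalarTower R K L] :
    Function.Injective (algebraMap R (integralClosure R L)) := by
  intro a b h
  have : algebraMap R L a = algebraMap R L b := congrArg Subtype.val h
  rw [IsScalarTower.algebraMap_apply R K L, IsScalarTower.algebraMap_apply R K L b] at this
  exact IsFractionRing.injective R K ((algebraMap K L).injective this)

theorem exists_algebraMap_eq_of_algebraMap_mul_eq [IsIntegrallyClosed R] (K : Type*) [Field K]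
    [Algebra R K] [IsFractionRing R K] [Algebra K L] [IsScalarTower R K L] {g c : R}
    (hg : g ≠ 0) {x : integralClosure R L}
    (h : algebraMap R (integralClosure R L) g * x = algebraMap R (integralClosure R L) c) :
    ∃ r, algebraMap R (integralClosure R L) r = x ∧ g * r = c := by
  have hgK : algebraMap R K g ≠ 0 := (map_ne_zero_iff _ (IsFractionRing.injective R K)).mpr hg
  have hx : (x : L) = algebraMap K L (algebraMap R K c / algebraMap R K g) := by
    have hL : algebraMap R L g * x = algebraMap R L c := congrArg Subtype.val h
    rw [IsScalarTower.algebraMap_apply R K L, IsScalarTower.algebraMap_apply R K L c] at hL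
    rw [map_div₀, eq_div_iff ((map_ne_zero _).mpr hgK), mul_comm, hL]
  obtain ⟨r, hr⟩ := IsIntegrallyClosed.isIntegral_iff.mp
    ((isIntegral_algHom_iff (IsScalarTower.toAlgHom R K L) (algebraMap K L).injective).mp
      (hx ▸ x.2))
  refine ⟨r, Subtype.ext ?_, IsFractionRing.injective R K ?_⟩
  · simp [IsScalarTower.algebraMap_apply R K L, hr, hx]
  · rw [map_mul, hr, mul_div_cancel₀ _ hgK]

end IntegralClosure

namespace Matrix

section CommRing

variable {n T : Type*} [Fintype n] [DecidableEq n] [CommRing T]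

theorem det_eq_of_isConj {M N : Matrix n n T} (h : IsConj M N) : M.det = N.det := by
  obtain ⟨u, rfl⟩ := isConj_iff_exists_units_mul_mul_inv.mp h
  exact (det_units_conj u M).symm

theorem trace_eq_of_isConj {M N : Matrix n n T} (h : IsConj M N) : M.trace = N.trace := by
  obtain ⟨u, rfl⟩ := isConj_iff_exists_units_mul_mul_inv.mp h
  exact (trace_units_conj u M).symm

theorem isConj_of_mul_eq_mul {M N U : Matrix n n T} (hU : IsUnit U.det) (h : U * M = N * U) :
    IsConj M N :=
  ⟨(U.isUnit_iff_isUnit_det.mpr hU).unit, h⟩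

def IsScalarMod (I : Ideal T) (M : Matrix n n T) : Prop :=
  ∃ c : T, ∀ i j, (M - algebraMap T (Matrix n n T) c) i j ∈ I

theorem isScalarMod_span_singleton_iff {g : T} {M : Matrix n n T} :
    IsScalarMod (Ideal.span {g}) M ↔ ∃ c N, M = algebraMap T _ c + g • N := by
  simp only [IsScalarMod, Ideal.mem_span_singleton']
  refine ⟨fun ⟨c, hc⟩ => ?_, fun ⟨c, N, hN⟩ => ⟨c, fun i j => ⟨N i j, by simp [hN, mul_comm]⟩⟩⟩
  choose N hN using hc
  exact ⟨c, of N, by ext i j; simp [mul_comm g, hN]⟩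

theorem map_algebraMap_add_smul {R S : Type*} [CommSemiring R] [Semiring S] [Algebra R S]
    (c g : R) (M : Matrix n n R) :
    (algebraMap R (Matrix n n R) c + g • M).map (algebraMap R S) =
      algebraMap R (Matrix n n S) c + g • M.map (algebraMap R S) := by
  ext i j
  simp only [map_apply, add_apply, smul_apply, algebraMap_matrix_apply]
  split_ifs <;> simp [Algebra.smul_def]

/-- In the basis `(v, M v)`, `M` acts by its companion matrix (Cayley–Hamilton). -/
theorem isConj_companion_of_isUnit_det {M : Matrix (Fin 2) (Fin 2) T} (v : Fin 2 → T)
    (hv : IsUnit (of ![v, M *ᵥ v]).det) : IsConj M !![0, -M.det; 1, M.trace] := by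
  refine (isConj_of_mul_eq_mul (U := (of ![v, M *ᵥ v])ᵀ) (by rwa [det_transpose]) ?_).symm
  ext i j
  fin_cases i <;> fin_cases j <;>
    simp [mul_apply, Fin.sum_univ_two, det_fin_two, trace_fin_two] <;> ring

theorem isConj_companion [IsLocalRing T] {M : Matrix (Fin 2) (Fin 2) T}
    (hM : ¬ IsScalarMod (maximalIdeal T) M) : IsConj M !![0, -M.det; 1, M.trace] := by
  by_cases h10 : M 1 0 ∈ maximalIdeal T
  swap
  · exact isConj_companion_of_isUnit_det ![1, 0]
      (by simpa [det_fin_two] using notMem_maximalIdeal.mp h10)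
  by_cases h01 : M 0 1 ∈ maximalIdeal T
  swap
  · exact isConj_companion_of_isUnit_det ![0, 1]
      (by simpa [det_fin_two] using (notMem_maximalIdeal.mp h01).neg)
  refine isConj_companion_of_isUnit_det ![1, 1]
    (notMem_maximalIdeal.mp fun hdet => hM ⟨M 0 0, ?_⟩)
  have h11 : M 1 1 - M 0 0 = (of ![![1, 1], M *ᵥ ![1, 1]]).det + (M 0 1 - M 1 0) := by
    simp [det_fin_two]; ring
  intro i j
  fin_cases i <;> fin_cases j <;> simp [algebraMap_matrix_apply]
  exacts [h01, h10, h11 ▸ add_mem hdet (sub_mem h01 h10)]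

theorem isConj_of_not_isScalarMod [IsLocalRing T] {M N : Matrix (Fin 2) (Fin 2) T}
    (hM : ¬ IsScalarMod (maximalIdeal T) M) (hN : ¬ IsScalarMod (maximalIdeal T) N)
    (hdet : M.det = N.det) (htr : M.trace = N.trace) : IsConj M N :=
  (isConj_companion hM).trans (hdet ▸ htr ▸ (isConj_companion hN).symm)

theorem exists_eq_algebraMap_add_smul [IsDomain T] [IsPrincipalIdealRing T] [IsLocalRing T]
    {A : Matrix n n T} (hA : ∀ c, A ≠ algebraMap T _ c) :
    ∃ a g : T, g ≠ 0 ∧ ∃ M : Matrix n n T, ¬ M.IsScalarMod (maximalIdeal T) ∧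
      A = algebraMap T _ a + g • M := by
  obtain ⟨i₀⟩ : Nonempty n := by
    by_contra! h
    exact hA 0 (Subsingleton.elim _ _)
  have hv : (fun p : n × n => (A - algebraMap T _ (A i₀ i₀)) p.1 p.2) ≠ 0 := fun h =>
    hA _ (sub_eq_zero.mp (ext fun i j => congrFun h (i, j)))
  obtain ⟨g, hg, w, hvw, p, hp⟩ := exists_eq_smul_of_ne_zero hv
  have hA_eq : ∀ i j, A i j = algebraMap T (Matrix n n T) (A i₀ i₀) i j + g * w (i, j) :=
    fun i j => by simpa [sub_eq_iff_eq_add'] using congrFun hvw (i, j)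
  refine ⟨A i₀ i₀, g, hg, of fun i j => w (i, j), ?_, ext fun i j => by simp [hA_eq i j]⟩
  rintro ⟨c, hc⟩
  have hw₀ : w (i₀, i₀) = 0 := by simpa [algebraMap_matrix_apply, hg] using hA_eq i₀ i₀
  have hcm : c ∈ maximalIdeal T := by simpa [algebraMap_matrix_apply, hw₀] using hc i₀ i₀
  have hc_diag : algebraMap T (Matrix n n T) c p.1 p.2 ∈ maximalIdeal T := by
    rw [algebraMap_matrix_apply]
    split_ifs <;> simp [hcm]
  exact notMem_maximalIdeal.mpr hp (by simpa using add_mem (hc p.1 p.2) hc_diag)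

end CommRing

section IntegralClosure

variable {n R L : Type*} [Fintype n] [DecidableEq n] [CommRing R] [Field L] [Algebra R L]

theorem exists_eq_algebraMap_add_smul_of_map [IsIntegrallyClosed R] (K : Type*) [Field K]
    [Algebra R K] [IsFractionRing R K] [Algebra K L] [IsScalarTower R K L] {X : Matrix n n R}
    {P : Matrix n n (integralClosure R L)} {c g : R} (hg : g ≠ 0)
    (h : X.map (algebraMap R (integralClosure R L)) =
      algebraMap R (Matrix n n (integralClosure R L)) c + g • P) :
    ∃ N, X = algebraMap R (Matrix n n R) c + g • N ∧ N.map (algebraMap R _) = P := by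
  have h_entry : ∀ i j, algebraMap R (integralClosure R L) g * P i j =
      algebraMap R _ ((X - algebraMap R (Matrix n n R) c) i j) := fun i j => by
    have := congrFun (congrFun h i) j
    simp only [map_apply, add_apply, smul_apply, algebraMap_matrix_apply] at this
    simp only [sub_apply, algebraMap_matrix_apply, map_sub, this, Algebra.smul_def]
    split_ifs <;> simp
  choose N hN hgN using fun i j => exists_algebraMap_eq_of_algebraMap_mul_eq K hg (h_entry i j)
  exact ⟨of N, by ext i j; simp [hgN], by ext i j; simp [hN]⟩

variable [IsDomain R] [IsDiscreteValuationRing R]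

theorem not_isScalarMod_of_isConj_map (K : Type*) [Field K] [Algebra R K] [IsFractionRing R K]
    [Algebra K L] [IsScalarTower R K L] {M N : Matrix n n R}
    (hM : ¬ M.IsScalarMod (maximalIdeal R))
    (h : IsConj (N.map (algebraMap R (integralClosure R L)))
      (M.map (algebraMap R (integralClosure R L)))) :
    ¬ N.IsScalarMod (maximalIdeal R) := by
  obtain ⟨ϖ, hϖ⟩ := IsDiscreteValuationRing.exists_irreducible R
  rw [hϖ.maximalIdeal_eq, isScalarMod_span_singleton_iff] at hM ⊢
  rintro ⟨c, N', rfl⟩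
  rw [map_algebraMap_add_smul] at h
  obtain ⟨P, -, hP⟩ := h.exists_eq_algebraMap_add_smul
  obtain ⟨M', hM', -⟩ := exists_eq_algebraMap_add_smul_of_map K hϖ.ne_zero hP
  exact hM ⟨c, M', hM'⟩

theorem isConj_of_isConj_map (K : Type*) [Field K] [Algebra R K] [IsFractionRing R K]
    [Algebra K L] [IsScalarTower R K L] {A B : Matrix (Fin 2) (Fin 2) R}
    (h : IsConj (A.map (algebraMap R (integralClosure R L)))
      (B.map (algebraMap R (integralClosure R L)))) : IsConj A B := by
  have hinj := algebraMap_integralClosure_injective (R := R) (L := L) K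
  by_cases hA : ∃ c, A = algebraMap R _ c
  · obtain ⟨c, rfl⟩ := hA
    rw [map_algebraMap _ _ (map_zero _) rfl, isConj_algebraMap_left_iff,
      ← map_algebraMap c _ (map_zero _) rfl] at h
    rw [map_injective hinj h]
  push Not at hA
  obtain ⟨a, g, hg, M, hM, rfl⟩ := exists_eq_algebraMap_add_smul hA
  rw [map_algebraMap_add_smul] at h
  obtain ⟨P, hMP, hP⟩ := h.exists_eq_algebraMap_add_smul
  obtain ⟨N, rfl, rfl⟩ := exists_eq_algebraMap_add_smul_of_map K hg hP
  have hdet : M.det = N.det := hinj <| by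
    rw [RingHom.map_det, RingHom.map_det]
    exact det_eq_of_isConj hMP
  have htr : M.trace = N.trace := hinj <| by
    rw [AddMonoidHom.map_trace, AddMonoidHom.map_trace]
    exact trace_eq_of_isConj hMP
  exact (isConj_of_not_isScalarMod hM (not_isScalarMod_of_isConj_map K hM hMP.symm) hdet
    htr).algebraMap_add_smul a g

end IntegralClosure

end Matrix

theorem similar_over_R_iff_similar_over_integral_closure_general
    (R : Type*) [CommRing R] [IsDomain R] [IsDiscreteValuationRing R]
    (K : Type*) [Field K] [Algebra R K] [IsFractionRing R K]
    (L : Type*) [Field L] [Algebra K L]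
    [Algebra R L] [IsScalarTower R K L]
    (A B : Matrix (Fin 2) (Fin 2) R) :
    (∃ U : (Matrix (Fin 2) (Fin 2) R)ˣ,
        (U : Matrix (Fin 2) (Fin 2) R) * A * (U⁻¹ : _) = B) ↔
      (∃ V : (Matrix (Fin 2) (Fin 2) (integralClosure R L))ˣ,
        (V : Matrix (Fin 2) (Fin 2) (integralClosure R L)) *
            A.map (algebraMap R (integralClosure R L)) * (V⁻¹ : _) =
          B.map (algebraMap R (integralClosure R L))) := by
  simp only [← isConj_iff_exists_units_mul_mul_inv]
  exact ⟨fun h => (algebraMap R (integralClosure R L)).mapMatrix.toMonoidHom.map_isConj h,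
    Matrix.isConj_of_isConj_map K⟩

/-- Let `R` be a discrete valuation ring with fraction field `K`,
`L/K` a finite field extension and `S` the integral closure of `R` in `L`. Then two
matrices `A, B ∈ Mat_2(R)` are similar over `R` if and only if they are similar over
`S`. -/
theorem similar_over_R_iff_similar_over_integral_closure
    (R : Type*) [CommRing R] [IsDomain R] [IsDiscreteValuationRing R]
    (K : Type*) [Field K] [Algebra R K] [IsFractionRing R K]
    (L : Type*) [Field L] [Algebra K L] [FiniteDimensional K L]
    [Algebra R L] [IsScalarTower R K L]
    (A B : Matrix (Fin 2) (Fin 2) R) :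
    (∃ U : (Matrix (Fin 2) (Fin 2) R)ˣ,
        (U : Matrix (Fin 2) (Fin 2) R) * A * (U⁻¹ : _) = B) ↔
      (∃ V : (Matrix (Fin 2) (Fin 2) (integralClosure R L))ˣ,
        (V : Matrix (Fin 2) (Fin 2) (integralClosure R L)) *
            A.map (algebraMap R (integralClosure R L)) * (V⁻¹ : _) =
          B.map (algebraMap R (integralClosure R L))) :=
  similar_over_R_iff_similar_over_integral_closure_general R K L A B
end

section
/- Let R be a principal ideal domain with fraction field K, let f ∈ R[x] be a monic irreducible polynomial of degree n, and let θ be the class of x in R[θ] := R[x]/(f). Then there is a bijection between the set of GL_n(R)-conjugacy classes of matrices A ∈ Mat_n(R) with f(A) = 0 and the set of ideal classes of R[θ], where two nonzero ideals J₁, J₂ of R[θ] are in the same class if there exist nonzero α₁, α₂ ∈ R[θ] with α₁J₁ = α₂J₂. -/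
/-!
Let `S = R[θ]`. A nonzero ideal `J` of `S` is a free `R`-module of rank `n` (`R` is a PID), and the
matrix of multiplication by `θ` in an `R`-basis of `J` is a root of `f`, well defined up to
conjugation. Two such matrices are conjugate iff some `R`-isomorphism of the ideals commutes with
`θ`, i.e. is `S`-linear, and two nonzero ideals of the domain `S` are `S`-isomorphic iff they are
in the same class.

Every root `A` of `f` arises this way. By Gauss's lemma `f` stays irreducible over `K`, so it is the
characteristic polynomial of `A`; hence `det (θ - A) = f(θ) = 0` in the domain `S`, and some nonzero
`w ∈ Sⁿ` satisfies `θ w = w A`. The `R`-span of the entries of `w` is then an ideal, they form an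
`R`-basis of it, and `θ` acts on that basis by `A`.
-/

open Polynomial

noncomputable def Quot.equivOfRelIff {α β : Type*} {r : α → α → Prop} {s : β → β → Prop}
    (hs : Equivalence s) (φ : α → β) (hφ : ∀ a₁ a₂, r a₁ a₂ ↔ s (φ a₁) (φ a₂))
    (hsurj : ∀ b, ∃ a, s (φ a) b) : Quot r ≃ Quot s :=
  Equiv.ofBijective (Quot.map φ fun a₁ a₂ => (hφ a₁ a₂).1) <| by
    refine ⟨fun x y hxy => ?_, fun y => ?_⟩
    · induction x using Quot.ind
      induction y using Quot.ind
      exact Quot.sound ((hφ _ _).2 (hs.eqvGen_iff.1 (Quot.eqvGen_exact hxy)))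
    · induction y using Quot.ind with | mk b =>
      obtain ⟨a, ha⟩ := hsurj b
      exact ⟨Quot.mk r a, Quot.sound ha⟩

theorem exists_units_conj_iff_isConj {M : Type*} [Monoid M] {a b : M} :
    (∃ u : Mˣ, (u : M) * a * (u⁻¹ : Mˣ) = b) ↔ IsConj a b := by
  simp only [IsConj, SemiconjBy, Units.mul_inv_eq_iff_eq_mul]

theorem equivalence_exists_units_conj (M : Type*) [Monoid M] :
    Equivalence fun a b : M => ∃ u : Mˣ, (u : M) * a * (u⁻¹ : Mˣ) = b := by
  simp only [exists_units_conj_iff_isConj]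
  exact ⟨IsConj.refl, IsConj.symm, IsConj.trans⟩

theorem Matrix.charpoly_eq_of_aeval_eq_zero {R ι : Type*} [CommRing R] [IsDomain R]
    [IsIntegrallyClosed R] [Fintype ι] [DecidableEq ι] {f : R[X]} (hf : f.Monic)
    (hirr : Irreducible f) (hdeg : f.natDegree = Fintype.card ι) {A : Matrix ι ι R}
    (hA : aeval A f = 0) : A.charpoly = f := by
  let K := FractionRing R
  have : Nonempty ι := Fintype.card_pos_iff.mp <| hdeg ▸ Nat.pos_of_ne_zero fun h =>
    hirr.not_isUnit (hf.natDegree_eq_zero.mp h ▸ isUnit_one)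
  have hAK : aeval (A.map (algebraMap R K)) (f.map (algebraMap R K)) = 0 := by
    rw [aeval_map_algebraMap, show A.map (algebraMap R K) = (Algebra.ofId R K).mapMatrix A from rfl,
      aeval_algHom_apply, hA, map_zero]
  have hminpoly := minpoly.eq_of_irreducible_of_monic
    (hf.irreducible_iff_irreducible_map_fraction_map.mp hirr) hAK (hf.map _)
  have hdvd := hminpoly ▸ Matrix.minpoly_dvd_charpoly (A.map (algebraMap R K))
  rw [Matrix.charpoly_map] at hdvd
  refine Polynomial.map_injective _ (IsFractionRing.injective R K) ?_
  refine eq_of_monic_of_dvd_of_natDegree_le (hf.map _) (A.charpoly_monic.map _) hdvd ?_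
  rw [hf.natDegree_map, A.charpoly_monic.natDegree_map, A.charpoly_natDegree_eq_dim, hdeg]

theorem LinearMap.map_smul_of_adjoin_eq_top {R S M N : Type*} [CommSemiring R] [CommSemiring S]
    [Algebra R S] [AddCommMonoid M] [Module R M] [Module S M] [IsScalarTower R S M]
    [AddCommMonoid N] [Module R N] [Module S N] [IsScalarTower R S N] {x : S}
    (hx : Algebra.adjoin R {x} = ⊤) (g : M →ₗ[R] N) (hg : ∀ m, g (x • m) = x • g m) (s : S)
    (m : M) : g (s • m) = s • g m := by
  induction (hx ▸ Algebra.mem_top : s ∈ Algebra.adjoin R {x}) using Algebra.adjoin_induction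
    generalizing m with
  | mem y hy => rw [Set.mem_singleton_iff.mp hy, hg]
  | algebraMap r => rw [algebraMap_smul, algebraMap_smul, map_smul]
  | add y z _ _ hy hz => rw [add_smul, add_smul, map_add, hy, hz]
  | mul y z _ _ hy hz => rw [mul_smul, mul_smul, hy, hz]

theorem Submodule.smul_mem_of_adjoin_eq_top {R S M : Type*} [CommSemiring R] [CommSemiring S]
    [Algebra R S] [AddCommMonoid M] [Module R M] [Module S M] [IsScalarTower R S M] {x : S}
    (hx : Algebra.adjoin R {x} = ⊤) (N : Submodule R M) (hN : ∀ m ∈ N, x • m ∈ N) (s : S)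
    {m : M} (hm : m ∈ N) : s • m ∈ N := by
  induction (hx ▸ Algebra.mem_top : s ∈ Algebra.adjoin R {x}) using Algebra.adjoin_induction
    generalizing m with
  | mem y hy => exact Set.mem_singleton_iff.mp hy ▸ hN m hm
  | algebraMap r => rw [algebraMap_smul]; exact N.smul_mem r hm
  | add y z _ _ hy hz => rw [add_smul]; exact N.add_mem (hy hm) (hz hm)
  | mul y z _ _ hy hz => rw [mul_smul]; exact hy (hz hm)

theorem LinearMap.exists_conj_toMatrix_iff {R M₁ M₂ ι : Type*} [CommRing R] [AddCommGroup M₁]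
    [Module R M₁] [AddCommGroup M₂] [Module R M₂] [Fintype ι] [DecidableEq ι]
    (b₁ : Module.Basis ι R M₁) (b₂ : Module.Basis ι R M₂) (g₁ : Module.End R M₁)
    (g₂ : Module.End R M₂) :
    (∃ U : (Matrix ι ι R)ˣ,
        (U : Matrix ι ι R) * toMatrix b₁ b₁ g₁ * (U⁻¹ : (Matrix ι ι R)ˣ) = toMatrix b₂ b₂ g₂) ↔
      ∃ e : M₁ ≃ₗ[R] M₂, e.toLinearMap ∘ₗ g₁ = g₂ ∘ₗ e.toLinearMap := by
  simp only [Units.mul_inv_eq_iff_eq_mul]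
  constructor
  · rintro ⟨U, hU⟩
    refine ⟨.ofLinearMap (Matrix.toLin b₁ b₂ U) (Matrix.toLin b₂ b₁ ↑U⁻¹) ?_ ?_, ?_⟩
    · rw [← Matrix.toLin_mul, U.mul_inv, Matrix.toLin_one]
    · rw [← Matrix.toLin_mul, U.inv_mul, Matrix.toLin_one]
    · rw [LinearEquiv.toLinearMap_ofLinearMap, ← Matrix.toLin_toMatrix b₁ b₁ g₁,
        ← Matrix.toLin_toMatrix b₂ b₂ g₂, ← Matrix.toLin_mul, ← Matrix.toLin_mul, hU]
  · rintro ⟨e, he⟩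
    refine ⟨⟨toMatrix b₁ b₂ e, toMatrix b₂ b₁ e.symm, ?_, ?_⟩, ?_⟩
    · rw [← toMatrix_comp, e.comp_symm, toMatrix_id]
    · rw [← toMatrix_comp, e.symm_comp, toMatrix_id]
    · rw [← toMatrix_comp, ← toMatrix_comp, he]

namespace Ideal

theorem linearMap_apply_mul_eq_mul_apply {S : Type*} [CommRing S] {I J : Ideal S}
    (g : I →ₗ[S] J) (x y : I) : (g x : S) * y = x * g y := by
  have hxy : (y : S) • x = (x : S) • y := Subtype.ext (mul_comm _ _)
  simpa [mul_comm] using congrArg Subtype.val (congrArg g hxy)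

variable {S : Type*} [CommRing S] [IsDomain S]

noncomputable def equivSpanSingletonMul (I : Ideal S) {a : S} (ha : a ≠ 0) :
    I ≃ₗ[S] ↥(span {a} * I) :=
  (Submodule.equivMapOfInjective (LinearMap.mulLeft S a) (mul_right_injective₀ ha) I).trans <|
    LinearEquiv.ofEq _ _ <| by ext; simp [mem_span_singleton_mul]

theorem exists_span_singleton_mul_eq_iff {I J : Ideal S} (hI : I ≠ ⊥) :
    (∃ a b : S, a ≠ 0 ∧ b ≠ 0 ∧ span {a} * I = span {b} * J) ↔ Nonempty (I ≃ₗ[S] J) := by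
  constructor
  · rintro ⟨a, b, ha, hb, h⟩
    exact ⟨(equivSpanSingletonMul I ha).trans <|
      (LinearEquiv.ofEq _ _ h).trans
        (equivSpanSingletonMul J hb).symm⟩
  · rintro ⟨e⟩
    obtain ⟨x, hxI, hx0⟩ := Submodule.exists_mem_ne_zero_of_ne_bot hI
    have key := linearMap_apply_mul_eq_mul_apply e.toLinearMap ⟨x, hxI⟩
    refine ⟨e ⟨x, hxI⟩, x, by simpa using hx0, hx0, ?_⟩
    ext z
    simp only [mem_span_singleton_mul]
    constructor
    · rintro ⟨y, hy, rfl⟩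
      exact ⟨e ⟨y, hy⟩, (e _).2, (key ⟨y, hy⟩).symm⟩
    · rintro ⟨y, hy, rfl⟩
      exact ⟨e.symm ⟨y, hy⟩, (e.symm _).2, by simpa using key (e.symm ⟨y, hy⟩)⟩

end Ideal

namespace AdjoinRoot

variable {R : Type*} [CommRing R] {f : R[X]} {ι : Type*} [Fintype ι] [DecidableEq ι]

noncomputable def rootMatrix {J : Ideal (AdjoinRoot f)} (b : Module.Basis ι R J) :
    Matrix ι ι R :=
  LinearMap.toMatrix b b (Algebra.lsmul R R J (root f))

theorem aeval_rootMatrix {J : Ideal (AdjoinRoot f)} (b : Module.Basis ι R J) :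
    aeval (rootMatrix b) f = 0 := by
  change aeval (((LinearMap.toMatrixAlgEquiv b).toAlgHom.comp (Algebra.lsmul R R J)) (root f)) f = 0
  rw [aeval_algHom_apply, aeval_eq, mk_self, map_zero]

theorem exists_conj_rootMatrix_iff {J₁ J₂ : Ideal (AdjoinRoot f)} (b₁ : Module.Basis ι R J₁)
    (b₂ : Module.Basis ι R J₂) :
    (∃ U : (Matrix ι ι R)ˣ,
        (U : Matrix ι ι R) * rootMatrix b₁ * (U⁻¹ : (Matrix ι ι R)ˣ) = rootMatrix b₂) ↔
      Nonempty (J₁ ≃ₗ[AdjoinRoot f] J₂) := by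
  rw [rootMatrix, rootMatrix, LinearMap.exists_conj_toMatrix_iff]
  constructor
  · rintro ⟨e, he⟩
    exact ⟨{ e with
      map_smul' := LinearMap.map_smul_of_adjoin_eq_top adjoinRoot_eq_top e.toLinearMap
        (LinearMap.congr_fun he) }⟩
  · rintro ⟨e⟩
    exact ⟨e.restrictScalars R, LinearMap.ext (e.map_smul (root f))⟩

theorem exists_root_mul_eq_sum [IsDomain R] [IsIntegrallyClosed R] [IsDomain (AdjoinRoot f)]
    (hf : f.Monic) (hirr : Irreducible f) (hdeg : f.natDegree = Fintype.card ι)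
    {A : Matrix ι ι R} (hA : aeval A f = 0) :
    ∃ w : ι → AdjoinRoot f, w ≠ 0 ∧ ∀ j, root f * w j = ∑ k, A k j • w k := by
  have hdet : (Matrix.scalar ι (root f) - A.map (algebraMap R (AdjoinRoot f))).det = 0 := by
    rw [← Matrix.eval_charpoly, Matrix.charpoly_map,
      Matrix.charpoly_eq_of_aeval_eq_zero hf hirr hdeg hA, eval_map_algebraMap, aeval_eq, mk_self]
  obtain ⟨w, hw, hvec⟩ := Matrix.exists_vecMul_eq_zero_iff.mpr hdet
  rw [Matrix.vecMul_sub, sub_eq_zero] at hvec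
  refine ⟨w, hw, fun j => ?_⟩
  have := congrFun hvec j
  rw [Matrix.scalar_apply, Matrix.vecMul_diagonal] at this
  simp only [Matrix.vecMul, dotProduct, Matrix.map_apply] at this
  rw [mul_comm, this]
  exact Finset.sum_congr rfl fun k _ => by rw [Algebra.smul_def, mul_comm]

theorem exists_basis_rootMatrix_eq_of_root_mul_eq_sum [IsDomain R] [IsPrincipalIdealRing R]
    [IsDomain (AdjoinRoot f)] (hf : f.Monic) (hdeg : f.natDegree = Fintype.card ι)
    {A : Matrix ι ι R} {w : ι → AdjoinRoot f} (hw : w ≠ 0)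
    (hAw : ∀ j, root f * w j = ∑ k, A k j • w k) :
    ∃ (J : Ideal (AdjoinRoot f)) (_ : J ≠ ⊥) (b : Module.Basis ι R J), rootMatrix b = A := by
  let N := Submodule.span R (Set.range w)
  have hN : ∀ x ∈ N, root f • x ∈ N := fun x hx => by
    induction hx using Submodule.span_induction with
    | mem x hx =>
      obtain ⟨j, rfl⟩ := hx
      rw [smul_eq_mul, hAw j]
      exact Submodule.sum_mem _ fun k _ => N.smul_mem _ (Submodule.subset_span ⟨k, rfl⟩)
    | zero => rw [smul_zero]; exact N.zero_mem
    | add x y _ _ hx hy => rw [smul_add]; exact N.add_mem hx hy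
    | smul r x _ hx => rw [smul_comm]; exact N.smul_mem r hx
  let J : Ideal (AdjoinRoot f) :=
    { N with smul_mem' := fun s _ hx => N.smul_mem_of_adjoin_eq_top adjoinRoot_eq_top hN s hx }
  have hwJ : ∀ i, w i ∈ J := fun i => Submodule.subset_span ⟨i, rfl⟩
  have hJ : J ≠ ⊥ := fun h => hw <| funext fun i => by simpa [h] using hwJ i
  let w' : ι → J := fun i => ⟨w i, hwJ i⟩
  have hspan : ⊤ ≤ Submodule.span R (Set.range w') := fun x _ => by
    obtain ⟨c, hc⟩ := Submodule.mem_span_range_iff_exists_fun R |>.mp x.2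
    rw [Submodule.mem_span_range_iff_exists_fun]
    exact ⟨c, Subtype.ext (by simpa [w'] using hc)⟩
  have hcard : Fintype.card ι = Module.finrank R J := by
    rw [Module.finrank_eq_card_basis (Ideal.selfBasis (powerBasis' hf).basis J hJ),
      Fintype.card_fin, powerBasis'_dim, hdeg]
  let b := basisOfTopLeSpanOfCardEqFinrank w' hspan hcard
  refine ⟨J, hJ, b, Matrix.ext fun i j => ?_⟩
  have hb : ∀ k, b k = w' k := fun k => by simp [b]
  have hroot : root f • b j = ∑ k, A k j • b k := Subtype.ext <| by simpa [hb, w'] using hAw j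
  rw [rootMatrix, LinearMap.toMatrix_apply, Algebra.lsmul_apply, hroot, b.repr_sum_self]

theorem exists_basis_rootMatrix_eq [IsDomain R] [IsPrincipalIdealRing R] [IsDomain (AdjoinRoot f)]
    (hf : f.Monic) (hirr : Irreducible f) (hdeg : f.natDegree = Fintype.card ι)
    {A : Matrix ι ι R} (hA : aeval A f = 0) :
    ∃ (J : Ideal (AdjoinRoot f)) (_ : J ≠ ⊥) (b : Module.Basis ι R J), rootMatrix b = A :=
  have ⟨_, hw, hAw⟩ := exists_root_mul_eq_sum hf hirr hdeg hA
  exists_basis_rootMatrix_eq_of_root_mul_eq_sum hf hdeg hw hAw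

end AdjoinRoot

theorem latimer_macduffee_over_pid_general
    (R : Type*) [CommRing R] [IsDomain R] [IsPrincipalIdealRing R]
    (n : ℕ) (f : R[X]) (hf : f.Monic) (hirr : Irreducible f) (hdeg : f.natDegree = n) :
    Nonempty (
      Quot (fun (A B : {A : Matrix (Fin n) (Fin n) R // aeval A f = 0}) =>
        ∃ U : (Matrix (Fin n) (Fin n) R)ˣ,
          (U : Matrix (Fin n) (Fin n) R) * A.1 * (U⁻¹ : _) = B.1) ≃
      Quot (fun (J₁ J₂ : {J : Ideal (R[X] ⧸ Ideal.span {f}) // J ≠ ⊥}) =>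
        ∃ α₁ α₂ : R[X] ⧸ Ideal.span {f}, α₁ ≠ 0 ∧ α₂ ≠ 0 ∧
          Ideal.span {α₁} * J₁.1 = Ideal.span {α₂} * J₂.1)) := by
  subst hdeg
  -- `AdjoinRoot f` is by definition `R[X] ⧸ (f)`.
  change Nonempty (_ ≃ Quot fun (J₁ J₂ : {J : Ideal (AdjoinRoot f) // J ≠ ⊥}) =>
    ∃ α₁ α₂ : AdjoinRoot f, α₁ ≠ 0 ∧ α₂ ≠ 0 ∧ Ideal.span {α₁} * J₁.1 = Ideal.span {α₂} * J₂.1)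
  have := AdjoinRoot.isDomain_of_prime (UniqueFactorizationMonoid.irreducible_iff_prime.mp hirr)
  let b := (AdjoinRoot.powerBasis' hf).basis
  refine ⟨(Quot.equivOfRelIff ((equivalence_exists_units_conj _).comap Subtype.val)
    (fun J : {J : Ideal (AdjoinRoot f) // J ≠ ⊥} =>
      ⟨AdjoinRoot.rootMatrix (Ideal.selfBasis b J.1 J.2), AdjoinRoot.aeval_rootMatrix _⟩)
    (fun J₁ J₂ => (Ideal.exists_span_singleton_mul_eq_iff J₁.2).trans
      (AdjoinRoot.exists_conj_rootMatrix_iff _ _).symm) fun ⟨A, hA⟩ => ?_).symm⟩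
  obtain ⟨J, hJ, b', rfl⟩ :=
    AdjoinRoot.exists_basis_rootMatrix_eq hf hirr (Fintype.card_fin _).symm hA
  exact ⟨⟨J, hJ⟩, (AdjoinRoot.exists_conj_rootMatrix_iff _ b').2 ⟨.refl _ _⟩⟩

/-- Latimer–MacDuffee over a PID. Let `R` be a PID with fraction
field `K`, `f ∈ R[x]` monic irreducible of degree `n`, and `θ` the class of `x` in
`R[θ] := R[x]/(f)`. Then there is a bijection between `GL_n(R)`-conjugacy classes of
matrices `A ∈ Mat_n(R)` with `f(A) = 0` and ideal classes of `R[θ]`, where two nonzero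
ideals `J₁, J₂` are in the same class iff `α₁J₁ = α₂J₂` for some nonzero
`α₁, α₂ ∈ R[θ]`. -/
theorem latimer_macduffee_over_pid
    (R : Type*) [CommRing R] [IsDomain R] [IsPrincipalIdealRing R]
    (K : Type*) [Field K] [Algebra R K] [IsFractionRing R K]
    (n : ℕ) (f : R[X]) (hf : f.Monic) (hirr : Irreducible f) (hdeg : f.natDegree = n) :
    Nonempty (
      Quot (fun (A B : {A : Matrix (Fin n) (Fin n) R // aeval A f = 0}) =>
        ∃ U : (Matrix (Fin n) (Fin n) R)ˣ,
          (U : Matrix (Fin n) (Fin n) R) * A.1 * (U⁻¹ : _) = B.1) ≃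
      Quot (fun (J₁ J₂ : {J : Ideal (R[X] ⧸ Ideal.span {f}) // J ≠ ⊥}) =>
        ∃ α₁ α₂ : R[X] ⧸ Ideal.span {f}, α₁ ≠ 0 ∧ α₂ ≠ 0 ∧
          Ideal.span {α₁} * J₁.1 = Ideal.span {α₂} * J₂.1)) :=
  latimer_macduffee_over_pid_general R n f hf hirr hdeg
end

section
/- Let R be a principal ideal domain with fraction field K and let A ∈ Mat_n(R). Then A is similar over R to a block upper-triangular matrix with diagonal blocks A₁₁, A₂₂, …, A_rr, where each A_ii is a square matrix with entries in R whose characteristic polynomial det(xI − A_ii) is irreducible in K[x] (and all blocks below the diagonal are zero). -/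
/-!
Over `K`, an endomorphism with no invariant subspaces other than `0` and the whole space has
irreducible characteristic polynomial: every nonzero vector is cyclic, so the minimal polynomial
has full degree, and `K[f]` has no zero divisors, so a factorisation `χ = p q` forces `p(f) = 0`
or `q(f) = 0`, which the degree bound only allows when the other factor is a unit.

So if `χ_A` is reducible in `K[x]` there is a proper nonzero `A`-invariant subspace `W ⊆ Kⁿ`.
Its saturation `M = W ∩ Rⁿ` is `A`-invariant with torsion-free, hence free, quotient, because
`R` is a PID; thus `M` is a direct summand of `Rⁿ`, and a basis adapted to `Rⁿ = M ⊕ S`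
conjugates `A` over `R` to `[[B₁, C], [0, B₂]]`. Induction on `n` applied to `B₁` and `B₂`,
followed by conjugation with `diag(U₁, U₂)`, gives the block triangular form.
-/

open Polynomial Module

namespace Module.End

theorem aeval_eq_zero_or_of_forall_mem_invtSubmodule {R M : Type*} [CommRing R] [AddCommGroup M]
    [Module R M] (f : End R M) (hf : ∀ W ∈ f.invtSubmodule, W = ⊥ ∨ W = ⊤) {p q : R[X]}
    (hpq : aeval f (p * q) = 0) : aeval f p = 0 ∨ aeval f q = 0 := by
  refine or_iff_not_imp_right.2 fun hq => ?_
  have hker : LinearMap.ker (aeval f p) ∈ f.invtSubmodule := fun x hx => by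
    have hcomm : aeval f p * f = f * aeval f p := by
      simpa using congrArg (aeval f) (mul_comm p X)
    simp only [LinearMap.mem_ker, Submodule.mem_comap] at hx ⊢
    rw [← mul_apply, hcomm, mul_apply, hx, map_zero]
  obtain hbot | htop := hf _ hker
  · refine absurd (LinearMap.ext fun x => ?_) hq
    rw [LinearMap.zero_apply, ← Submodule.mem_bot R, ← hbot, LinearMap.mem_ker, ← mul_apply,
      ← map_mul, hpq, LinearMap.zero_apply]
  · exact LinearMap.ker_eq_top.1 htop

variable {K V : Type*} [Field K] [AddCommGroup V] [Module K V] [FiniteDimensional K V]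

theorem exists_mem_invtSubmodule_finrank_le_natDegree_minpoly (f : End K V) (v : V) :
    ∃ W ∈ f.invtSubmodule, v ∈ W ∧ finrank K W ≤ (minpoly K f).natDegree := by
  set d := (minpoly K f).natDegree
  let θ : K[X] →ₗ[K] V := LinearMap.applyₗ v ∘ₗ (aeval f).toLinearMap
  have hθ : ∀ p, θ p = aeval f p v := fun _ => rfl
  have hmonic : (minpoly K f).Monic := minpoly.monic (Algebra.IsIntegral.isIntegral f)
  refine ⟨LinearMap.range θ, ?_, ⟨1, by simp [hθ]⟩, ?_⟩
  · rintro _ ⟨p, rfl⟩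
    exact ⟨X * p, by simp [hθ]⟩
  · have hle : LinearMap.range θ ≤ LinearMap.range (θ ∘ₗ (degreeLT K d).subtype) := by
      rintro _ ⟨p, rfl⟩
      refine ⟨⟨p %ₘ minpoly K f, mem_degreeLT.2 ?_⟩, ?_⟩
      · rw [← degree_eq_natDegree hmonic.ne_zero]
        exact degree_modByMonic_lt p hmonic
      · simp [hθ, modByMonic_eq_sub_mul_div p (minpoly K f)]
    calc finrank K (LinearMap.range θ)
        ≤ finrank K (LinearMap.range (θ ∘ₗ (degreeLT K d).subtype)) :=
          Submodule.finrank_mono hle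
      _ ≤ finrank K (degreeLT K d) := LinearMap.finrank_range_le _
      _ = d := by simp [(degreeLTEquiv K d).finrank_eq]

theorem finrank_le_natDegree_minpoly_of_forall_mem_invtSubmodule [Nontrivial V] (f : End K V)
    (hf : ∀ W ∈ f.invtSubmodule, W = ⊥ ∨ W = ⊤) :
    finrank K V ≤ (minpoly K f).natDegree := by
  obtain ⟨v, hv⟩ := exists_ne (0 : V)
  obtain ⟨W, hW, hvW, hdim⟩ := f.exists_mem_invtSubmodule_finrank_le_natDegree_minpoly v
  obtain rfl | rfl := hf W hW
  · exact absurd ((Submodule.mem_bot K).1 hvW) hv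
  · rwa [finrank_top] at hdim

theorem irreducible_charpoly_of_forall_mem_invtSubmodule [Nontrivial V] (f : End K V)
    (hf : ∀ W ∈ f.invtSubmodule, W = ⊥ ∨ W = ⊤) : Irreducible f.charpoly := by
  have hdeg : f.charpoly.natDegree = finrank K V := f.charpoly_natDegree
  have hunit_of_aeval : ∀ p q, f.charpoly = p * q → aeval f p = 0 → IsUnit q := by
    intro p q hpq hp
    have hp0 : p ≠ 0 := left_ne_zero_of_mul (hpq ▸ f.charpoly_monic.ne_zero)
    have hq0 : q ≠ 0 := right_ne_zero_of_mul (hpq ▸ f.charpoly_monic.ne_zero)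
    have hmin : (minpoly K f).natDegree ≤ p.natDegree :=
      natDegree_le_of_dvd (minpoly.dvd K f hp) hp0
    have hrank := f.finrank_le_natDegree_minpoly_of_forall_mem_invtSubmodule hf
    rw [← hdeg, hpq, natDegree_mul hp0 hq0] at hrank
    exact isUnit_iff_degree_eq_zero.2 (by rw [degree_eq_natDegree hq0]; norm_cast; omega)
  refine ⟨fun hunit => ?_, fun p q hpq => ?_⟩
  · have := natDegree_eq_zero_of_isUnit hunit
    have := finrank_pos (R := K) (M := V)
    omega
  · obtain hp | hq := f.aeval_eq_zero_or_of_forall_mem_invtSubmodule hf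
      (hpq ▸ f.aeval_self_charpoly)
    · exact .inr (hunit_of_aeval p q hpq hp)
    · exact .inl (hunit_of_aeval q p (hpq.trans (mul_comm p q)) hq)

end Module.End

theorem Fin.monotone_append {α : Type*} [Preorder α] {m n : ℕ} {u : Fin m → α}
    {v : Fin n → α} (hu : Monotone u) (hv : Monotone v) (huv : ∀ i j, u i ≤ v j) :
    Monotone (Fin.append u v) := by
  intro x y hxy
  induction x using Fin.addCases <;> induction y using Fin.addCases <;>
    simp only [Fin.append_left, Fin.append_right] at hxy ⊢
  · exact hu (by rwa [Fin.le_def] at hxy ⊢)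
  · exact huv _ _
  · simp [Fin.le_def] at hxy
    omega
  · exact hv (by rw [Fin.le_def] at hxy ⊢; simpa using hxy)

namespace Matrix

theorem BlockTriangular.fromBlocks_zero₂₁ {R α m n : Type*} [Zero R] [LT α] {A : Matrix m m R}
    {B : Matrix m n R} {D : Matrix n n R} {b₁ : m → α} {b₂ : n → α}
    (hA : A.BlockTriangular b₁) (hD : D.BlockTriangular b₂) (hb : ∀ i j, ¬ b₂ j < b₁ i) :
    (fromBlocks A B 0 D).BlockTriangular (Sum.elim b₁ b₂) := by
  rintro (i | i) (j | j) hij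
  exacts [hA hij, absurd hij (hb i j), rfl, hD hij]

theorem blockTriangular_reindex_fromBlocks_append {R : Type*} [Zero R] {k l r₁ r₂ : ℕ}
    {B₁ : Matrix (Fin k) (Fin k) R} {B₂ : Matrix (Fin l) (Fin l) R} {b₁ : Fin k → Fin r₁}
    {b₂ : Fin l → Fin r₂} (h₁ : B₁.BlockTriangular b₁) (h₂ : B₂.BlockTriangular b₂)
    (C : Matrix (Fin k) (Fin l) R) :
    (reindex finSumFinEquiv finSumFinEquiv (fromBlocks B₁ C 0 B₂)).BlockTriangular
      (Fin.append (Fin.castAdd r₂ ∘ b₁) (Fin.natAdd r₁ ∘ b₂)) := by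
  have hb : Fin.append (Fin.castAdd r₂ ∘ b₁) (Fin.natAdd r₁ ∘ b₂) ∘ finSumFinEquiv
      = Sum.elim (Fin.castAdd r₂ ∘ b₁) (Fin.natAdd r₁ ∘ b₂) := by
    ext (x | x) <;> simp
  rw [blockTriangular_reindex_iff, hb]
  refine BlockTriangular.fromBlocks_zero₂₁ (fun x y h => h₁ ?_) (fun x y h => h₂ ?_)
    fun x y => ?_
  · exact (Fin.strictMono_castAdd r₂).lt_iff_lt.1 h
  · exact (Fin.strictMono_natAdd r₁).lt_iff_lt.1 h
  · simp [Fin.lt_def]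
    omega

variable {R : Type*} [CommRing R]

theorem charpoly_toSquareBlock_eq_of_injective {m n α β : Type*} [Fintype m] [DecidableEq m]
    [Fintype n] [DecidableEq n] [DecidableEq α] [DecidableEq β] {M : Matrix m m R}
    {N : Matrix n n R} {b : m → α} {b' : n → β} {i : α} {s : β} {g : n → m}
    (hg : Function.Injective g) (hMN : ∀ x y, M (g x) (g y) = N x y)
    (hb : ∀ x, b (g x) = i ↔ b' x = s) (hsurj : ∀ y, b y = i → y ∈ Set.range g) :
    (M.toSquareBlock b i).charpoly = (N.toSquareBlock b' s).charpoly := by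
  let σ : {x // b' x = s} ≃ {y // b y = i} :=
    Equiv.ofBijective (fun x => ⟨g x, (hb x).2 x.2⟩)
      ⟨fun x x' h => Subtype.ext (hg (congrArg Subtype.val h)), fun ⟨y, hy⟩ => by
        obtain ⟨x, rfl⟩ := hsurj y hy
        exact ⟨⟨x, (hb x).1 hy⟩, rfl⟩⟩
  have : N.toSquareBlock b' s = reindex σ.symm σ.symm (M.toSquareBlock b i) := by
    ext x y
    simp only [toSquareBlock_def, reindex_apply, Equiv.symm_symm, submatrix_apply, of_apply]
    exact (hMN x y).symm
  rw [this, charpoly_reindex]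

theorem isConj_reindex {m n : Type*} [Fintype m] [Fintype n] [DecidableEq m] [DecidableEq n]
    (e : m ≃ n) {A B : Matrix m m R} (h : IsConj A B) : IsConj (reindex e e A) (reindex e e B) :=
  MonoidHom.map_isConj (reindexAlgEquiv R R e : Matrix m m R →* Matrix n n R) h

theorem isConj_fromBlocks_zero₂₁ {m n : Type*} [Fintype m] [Fintype n] [DecidableEq m]
    [DecidableEq n] {A A' : Matrix m m R} {D D' : Matrix n n R} (hA : IsConj A A')
    (hD : IsConj D D') (B : Matrix m n R) :
    ∃ B', IsConj (fromBlocks A B 0 D) (fromBlocks A' B' 0 D') := by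
  obtain ⟨U, hU⟩ := hA
  obtain ⟨V, hV⟩ := hD
  let W : (Matrix (m ⊕ n) (m ⊕ n) R)ˣ :=
    ⟨fromBlocks U 0 0 V, fromBlocks ↑U⁻¹ 0 0 ↑V⁻¹, by simp [fromBlocks_multiply],
      by simp [fromBlocks_multiply]⟩
  refine ⟨(U : Matrix m m R) * B * (↑V⁻¹ : Matrix n n R), W, ?_⟩
  simp [SemiconjBy, W, fromBlocks_multiply, hU.eq, hV.eq, Matrix.mul_assoc]

def IsBlockTriangularWithCharpolys (Q : R[X] → Prop) {n : ℕ} (B : Matrix (Fin n) (Fin n) R) :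
    Prop :=
  ∃ (r : ℕ) (b : Fin n → Fin r), Monotone b ∧ B.BlockTriangular b ∧
    ∀ i, Q (B.toSquareBlock b i).charpoly

namespace IsBlockTriangularWithCharpolys

variable {Q : R[X] → Prop}

theorem of_fin_zero (B : Matrix (Fin 0) (Fin 0) R) : IsBlockTriangularWithCharpolys Q B :=
  ⟨0, id, monotone_id, fun i => i.elim0, fun i => i.elim0⟩

theorem of_charpoly {n : ℕ} {B : Matrix (Fin n) (Fin n) R} (h : Q B.charpoly) :
    IsBlockTriangularWithCharpolys Q B := by
  refine ⟨1, fun _ => 0, monotone_const, fun _ _ h => absurd h (lt_irrefl _), fun i => ?_⟩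
  let e : {x // (fun _ => 0 : Fin n → Fin 1) x = i} ≃ Fin n :=
    Equiv.subtypeUnivEquiv fun _ => Subsingleton.elim _ _
  have : B.toSquareBlock (fun _ => 0) i = reindex e.symm e.symm B := rfl
  rwa [this, charpoly_reindex]

theorem fromBlocks {k l : ℕ} {B₁ : Matrix (Fin k) (Fin k) R} {B₂ : Matrix (Fin l) (Fin l) R}
    (h₁ : IsBlockTriangularWithCharpolys Q B₁) (h₂ : IsBlockTriangularWithCharpolys Q B₂)
    (C : Matrix (Fin k) (Fin l) R) :
    IsBlockTriangularWithCharpolys Q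
      (reindex finSumFinEquiv finSumFinEquiv (Matrix.fromBlocks B₁ C 0 B₂)) := by
  obtain ⟨r₁, b₁, hmono₁, htri₁, hQ₁⟩ := h₁
  obtain ⟨r₂, b₂, hmono₂, htri₂, hQ₂⟩ := h₂
  refine ⟨r₁ + r₂, _, Fin.monotone_append ((Fin.strictMono_castAdd r₂).monotone.comp hmono₁)
      ((Fin.strictMono_natAdd r₁).monotone.comp hmono₂) fun i j => ?_, ?_, fun i => ?_⟩
  · simp [Fin.le_def]
    omega
  · exact blockTriangular_reindex_fromBlocks_append htri₁ htri₂ C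
  · induction i using Fin.addCases with
    | left s =>
      rw [charpoly_toSquareBlock_eq_of_injective (N := B₁) (b' := b₁) (s := s)
        (Fin.castAdd_injective k l) (fun x y => by simp) (fun x => by simp) fun y hy => ?_]
      · exact hQ₁ s
      · induction y using Fin.addCases
        · exact ⟨_, rfl⟩
        · simp [Fin.ext_iff] at hy
          omega
    | right s =>
      rw [charpoly_toSquareBlock_eq_of_injective (N := B₂) (b' := b₂) (s := s)
        (Fin.natAdd_injective l k) (fun x y => by simp) (fun x => by simp) fun y hy => ?_]
      · exact hQ₂ s
      · induction y using Fin.addCases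
        · simp [Fin.ext_iff] at hy
          omega
        · exact ⟨_, rfl⟩

end IsBlockTriangularWithCharpolys

end Matrix

theorem LinearMap.isConj_toMatrix_reindex {R V ι κ : Type*} [CommRing R] [AddCommGroup V]
    [Module R V] [Fintype ι] [DecidableEq ι] [Fintype κ] [DecidableEq κ] (b : Basis ι R V)
    (c : Basis κ R V) (e : κ ≃ ι) (f : End R V) :
    IsConj (toMatrix b b f) (Matrix.reindex e e (toMatrix c c f)) := by
  let c' := c.reindex e
  have hc' : Matrix.reindex e e (toMatrix c c f) = toMatrix c' c' f := by
    ext i j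
    simp [c', LinearMap.toMatrix_apply]
  let U : (Matrix ι ι R)ˣ := ⟨c'.toMatrix b, b.toMatrix c', c'.toMatrix_mul_toMatrix_flip b,
    b.toMatrix_mul_toMatrix_flip c'⟩
  refine ⟨U, ?_⟩
  show c'.toMatrix b * _ = _ * c'.toMatrix b
  rw [hc', ← basis_toMatrix_mul_linearMap_toMatrix_mul_basis_toMatrix c' b c' b,
    Matrix.mul_assoc, Matrix.mul_assoc, b.toMatrix_mul_toMatrix_flip, Matrix.mul_one]

theorem LinearMap.toBlocks₂₁_toMatrix_eq_zero {R V κ μ : Type*} [CommRing R] [AddCommGroup V]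
    [Module R V] [Fintype κ] [Fintype μ] [DecidableEq κ] [DecidableEq μ]
    (c : Basis (κ ⊕ μ) R V) {f : End R V}
    (hf : Submodule.span R (Set.range (c ∘ Sum.inl)) ∈ f.invtSubmodule) :
    (toMatrix c c f).toBlocks₂₁ = 0 := by
  ext i j
  have hmem : f (c (Sum.inl j)) ∈ Submodule.span R (c '' Set.range Sum.inl) := by
    rw [← Set.range_comp]
    exact hf (Submodule.subset_span ⟨j, rfl⟩)
  rw [c.mem_span_image] at hmem
  rw [Matrix.toBlocks₂₁, Matrix.of_apply, toMatrix_apply, Matrix.zero_apply]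
  by_contra h
  obtain ⟨j', hj'⟩ := hmem (Finsupp.mem_support_iff.2 h)
  exact Sum.inl_ne_inr hj'

namespace Submodule

theorem isTorsionFree_quotient_comap {R K V W : Type*} [CommRing R] [IsDomain R] [Field K]
    [Algebra R K] [FaithfulSMul R K] [AddCommGroup V] [Module R V] [AddCommGroup W] [Module K W]
    [Module R W] [IsScalarTower R K W] (g : V →ₗ[R] W) (U : Submodule K W) :
    IsTorsionFree R (V ⧸ (U.restrictScalars R).comap g) := by
  refine .of_smul_eq_zero fun r x hrx => ?_
  induction x using Quotient.induction_on with | _ x => ?_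
  rw [← Quotient.mk_smul, Quotient.mk_eq_zero] at hrx
  rw [Quotient.mk_eq_zero]
  refine or_iff_not_imp_left.2 fun hr => ?_
  have hr' : algebraMap R K r ≠ 0 :=
    (map_ne_zero_iff _ (FaithfulSMul.algebraMap_injective R K)).2 hr
  simp only [mem_comap, restrictScalars_mem, map_smul, ← algebraMap_smul K r (g x)] at hrx ⊢
  exact (U.smul_mem_iff hr').1 hrx

variable {R V : Type*} [CommRing R] [IsDomain R] [IsPrincipalIdealRing R] [AddCommGroup V]
  [Module R V] [Module.Finite R V]

theorem exists_isCompl_of_isTorsionFree_quotient (M : Submodule R V) [IsTorsionFree R (V ⧸ M)] :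
    ∃ S : Submodule R V, IsCompl M S := by
  obtain ⟨s, hs⟩ := M.mkQ.exists_rightInverse_of_surjective M.range_mkQ
  have hproj : ∀ x, x - s (M.mkQ x) ∈ M := fun x => by
    rw [← Quotient.mk_eq_zero, ← mkQ_apply, map_sub, ← LinearMap.comp_apply, hs,
      LinearMap.id_apply, sub_self]
  exact ⟨_, LinearMap.isCompl_of_proj (f := (LinearMap.id - s ∘ₗ M.mkQ).codRestrict M hproj)
    fun x => by ext; simp [(Quotient.mk_eq_zero M).2 x.2]⟩

theorem exists_basis_span_range_inl_eq [Module.Free R V] (M : Submodule R V)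
    [IsTorsionFree R (V ⧸ M)] :
    ∃ (k l : ℕ) (c : Basis (Fin k ⊕ Fin l) R V), span R (Set.range (c ∘ Sum.inl)) = M := by
  obtain ⟨S, hS⟩ := M.exists_isCompl_of_isTorsionFree_quotient
  let c := ((finBasis R M).prod (finBasis R S)).map (M.prodEquivOfIsCompl S hS)
  have hc : c ∘ Sum.inl = M.subtype ∘ finBasis R M := by
    ext
    simp [c]
  refine ⟨_, _, c, ?_⟩
  rw [hc, Set.range_comp, span_image, (finBasis R M).span_eq, map_subtype_top]

end Submodule

section FractionRing

variable {R K : Type*} [CommRing R] [Field K] [Algebra R K]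

theorem Matrix.comap_compLeft_algebraMap_mem_invtSubmodule {ι : Type*} [Fintype ι]
    [DecidableEq ι] (A : Matrix ι ι R) {W : Submodule K (ι → K)}
    (hW : W ∈ End.invtSubmodule (A.map (algebraMap R K)).toLin') :
    (W.restrictScalars R).comap ((Algebra.linearMap R K).compLeft ι) ∈
      End.invtSubmodule A.toLin' := fun x hx => by
  have hmap : (Algebra.linearMap R K).compLeft ι (A.mulVec x) =
      (A.map (algebraMap R K)).mulVec ((Algebra.linearMap R K).compLeft ι x) :=
    funext fun i => RingHom.map_mulVec _ _ _ i
  simpa [hmap] using hW hx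

variable [IsDomain R] [IsFractionRing R K] {ι : Type*} [Finite ι]

theorem IsFractionRing.exists_compLeft_algebraMap_eq_smul (w : ι → K) :
    ∃ d : R, algebraMap R K d ≠ 0 ∧
      ∃ x : ι → R, (Algebra.linearMap R K).compLeft ι x = algebraMap R K d • w := by
  obtain ⟨d, hd⟩ := IsLocalization.exist_integer_multiples_of_finite (nonZeroDivisors R) w
  choose x hx using hd
  exact ⟨d, IsFractionRing.to_map_ne_zero_of_mem_nonZeroDivisors d.2, x,
    funext fun i => (hx i).trans (algebraMap_smul K (d : R) (w i)).symm⟩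

theorem Submodule.comap_compLeft_algebraMap_ne_bot {W : Submodule K (ι → K)} (hW : W ≠ ⊥) :
    (W.restrictScalars R).comap ((Algebra.linearMap R K).compLeft ι) ≠ ⊥ := by
  obtain ⟨w, hwW, hw⟩ := W.exists_mem_ne_zero_of_ne_bot hW
  obtain ⟨d, hd, x, hx⟩ := IsFractionRing.exists_compLeft_algebraMap_eq_smul (R := R) w
  refine (Submodule.ne_bot_iff _).2 ⟨x, ?_, ?_⟩
  · simpa [hx] using W.smul_mem (algebraMap R K d) hwW
  · rintro rfl
    rw [map_zero, eq_comm, smul_eq_zero] at hx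
    exact hx.elim hd hw

theorem Submodule.comap_compLeft_algebraMap_ne_top {W : Submodule K (ι → K)} (hW : W ≠ ⊤) :
    (W.restrictScalars R).comap ((Algebra.linearMap R K).compLeft ι) ≠ ⊤ := by
  refine fun h => hW (eq_top_iff.2 fun w _ => ?_)
  obtain ⟨d, hd, x, hx⟩ := IsFractionRing.exists_compLeft_algebraMap_eq_smul (R := R) w
  have hxW : (Algebra.linearMap R K).compLeft ι x ∈ W := by
    simpa using h.ge (mem_top (x := x))
  rwa [hx, W.smul_mem_iff hd] at hxW

end FractionRing

namespace Matrix

variable {R K : Type*} [CommRing R] [IsDomain R] [IsPrincipalIdealRing R] [Field K]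
  [Algebra R K] [IsFractionRing R K]

theorem exists_isConj_reindex_fromBlocks {n : ℕ} (A : Matrix (Fin n) (Fin n) R)
    {W : Submodule K (Fin n → K)} (hW : W ∈ End.invtSubmodule (A.map (algebraMap R K)).toLin')
    (hbot : W ≠ ⊥) (htop : W ≠ ⊤) :
    ∃ k l, 0 < k ∧ 0 < l ∧ ∃ (h : k + l = n) (B₁ : Matrix (Fin k) (Fin k) R)
      (C : Matrix (Fin k) (Fin l) R) (B₂ : Matrix (Fin l) (Fin l) R),
      IsConj A (reindex (finSumFinEquiv.trans (finCongr h)) (finSumFinEquiv.trans (finCongr h))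
        (fromBlocks B₁ C 0 B₂)) := by
  let toK := (Algebra.linearMap R K).compLeft (Fin n)
  let M := (W.restrictScalars R).comap toK
  have := Submodule.isTorsionFree_quotient_comap toK W
  obtain ⟨k, l, c, hc⟩ := M.exists_basis_span_range_inl_eq
  have hk : 0 < k := by
    refine Nat.pos_of_ne_zero fun hk => Submodule.comap_compLeft_algebraMap_ne_bot (R := R) hbot ?_
    subst hk
    show M = ⊥
    rw [← hc, Set.range_eq_empty, Submodule.span_empty]
  have hl : 0 < l := by
    refine Nat.pos_of_ne_zero fun hl => Submodule.comap_compLeft_algebraMap_ne_top (R := R) htop ?_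
    subst hl
    show M = ⊤
    rw [← hc, eq_top_iff, ← c.span_eq]
    refine Submodule.span_mono ?_
    rintro _ ⟨i | i, rfl⟩
    exacts [⟨i, rfl⟩, i.elim0]
  have hkl : k + l = n := by
    simpa using Fintype.card_congr (c.indexEquiv (Pi.basisFun R (Fin n)))
  let T := LinearMap.toMatrix c c A.toLin'
  have hT : T.toBlocks₂₁ = 0 := LinearMap.toBlocks₂₁_toMatrix_eq_zero c
    (hc ▸ A.comap_compLeft_algebraMap_mem_invtSubmodule hW)
  refine ⟨k, l, hk, hl, hkl, T.toBlocks₁₁, T.toBlocks₁₂, T.toBlocks₂₂, ?_⟩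
  have := LinearMap.isConj_toMatrix_reindex (Pi.basisFun R (Fin n)) c
    (finSumFinEquiv.trans (finCongr hkl)) A.toLin'
  rw [LinearMap.toMatrix_eq_toMatrix', LinearMap.toMatrix'_toLin'] at this
  rwa [← hT, fromBlocks_toBlocks]

variable (K) in
theorem exists_isConj_isBlockTriangularWithCharpolys {n : ℕ} (A : Matrix (Fin n) (Fin n) R) :
    ∃ B, IsConj A B ∧
      B.IsBlockTriangularWithCharpolys fun p => Irreducible (p.map (algebraMap R K)) := by
  induction n using Nat.strong_induction_on with
  | _ n ih =>
  obtain rfl | hn := Nat.eq_zero_or_pos n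
  · exact ⟨A, .refl A, .of_fin_zero A⟩
  by_cases h : ∃ W ∈ End.invtSubmodule (A.map (algebraMap R K)).toLin', W ≠ ⊥ ∧ W ≠ ⊤
  · obtain ⟨W, hW, hbot, htop⟩ := h
    obtain ⟨k, l, hk, hl, rfl, B₁, C, B₂, hA⟩ :=
      A.exists_isConj_reindex_fromBlocks hW hbot htop
    obtain ⟨D₁, h₁, hD₁⟩ := ih k (by omega) B₁
    obtain ⟨D₂, h₂, hD₂⟩ := ih l (by omega) B₂
    obtain ⟨C', hC'⟩ := isConj_fromBlocks_zero₂₁ h₁ h₂ C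
    simp only [finCongr_refl, Equiv.trans_refl] at hA
    exact ⟨_, hA.trans (isConj_reindex finSumFinEquiv hC'), hD₁.fromBlocks hD₂ C'⟩
  · push Not at h
    have : Nonempty (Fin n) := ⟨⟨0, hn⟩⟩
    refine ⟨A, .refl A, .of_charpoly ?_⟩
    rw [← charpoly_map, ← charpoly_toLin']
    exact End.irreducible_charpoly_of_forall_mem_invtSubmodule _ fun W hW =>
      or_iff_not_imp_left.2 (h W hW)

end Matrix

/-- Let `R` be a principal ideal domain with fraction field `K` and
`A ∈ Mat_n(R)`. Then `A` is similar over `R` to a block upper-triangular matrix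
(blocks below the diagonal zero, blocks ordered by a monotone indexing) whose diagonal
blocks have characteristic polynomials irreducible in `K[x]`. -/
theorem similar_to_blockTriangular_with_irreducible_diagonal_blocks
    (R : Type*) [CommRing R] [IsDomain R] [IsPrincipalIdealRing R]
    (K : Type*) [Field K] [Algebra R K] [IsFractionRing R K]
    (n : ℕ) (A : Matrix (Fin n) (Fin n) R) :
    ∃ (B : Matrix (Fin n) (Fin n) R) (U : (Matrix (Fin n) (Fin n) R)ˣ),
      (U : Matrix (Fin n) (Fin n) R) * A * (U⁻¹ : _) = B ∧
      ∃ (r : ℕ) (b : Fin n → Fin r), Monotone b ∧ B.BlockTriangular b ∧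
        ∀ i : Fin r, Irreducible ((B.toSquareBlock b i).charpoly.map (algebraMap R K)) := by
  obtain ⟨B, ⟨U, hU⟩, hB⟩ := A.exists_isConj_isBlockTriangularWithCharpolys K
  exact ⟨B, U, by rw [hU.eq, Matrix.mul_assoc, Units.mul_inv, Matrix.mul_one], hB⟩
end

section
/- Let R be a discrete valuation ring with valuation v, let λ₁, λ₂ ∈ R, and let τ₁, τ₂ ∈ R be nonzero. Then the matrices [[λ₁, τ₁],[0, λ₂]] and [[λ₁, τ₂],[0, λ₂]] are similar over R if and only if v(τ₁) = v(τ₂), or v(λ₁ − λ₂) ≤ min{v(τ₁), v(τ₂)}. -/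
/-!
Conjugating `!![λ₁, τ₁; 0, λ₂]` into `!![λ₁, τ₂; 0, λ₂]` by `U = !![x, y; z, w]` forces
`τ₂ z = 0`, so `U` is upper triangular with unit diagonal, and the one remaining condition is
`x τ₁ - τ₂ w = (λ₁ - λ₂) y`. Hence the matrices are similar iff `λ₁ - λ₂` divides
`x τ₁ - τ₂ w` for some units `x, w`. In a DVR, if `v(τ₁) ≠ v(τ₂)` then
`v(x τ₁ - τ₂ w) = min (v τ₁) (v τ₂)`, which gives the valuation condition; conversely one takes
`x` to be the unit relating `τ₁` and `τ₂`, or `x = w = 1`.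
-/

open IsDiscreteValuationRing

theorem AddValuation.map_sub_of_distinct_val {R Γ₀ : Type*} [Ring R]
    [LinearOrderedAddCommMonoidWithTop Γ₀] (v : AddValuation R Γ₀) {x y : R} (h : v x ≠ v y) :
    v (x - y) = min (v x) (v y) := by
  rw [sub_eq_add_neg, v.map_add_of_distinct_val (by rwa [v.map_neg]), v.map_neg]

section Similarity

variable {R : Type*} [CommRing R]

theorem Matrix.exists_units_conj_eq_iff {n : Type*} [Fintype n] [DecidableEq n]
    (A B : Matrix n n R) :
    (∃ U : (Matrix n n R)ˣ, (U : Matrix n n R) * A * (U⁻¹ : _) = B) ↔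
      ∃ U : Matrix n n R, IsUnit U.det ∧ U * A = B * U := by
  constructor
  · rintro ⟨U, hU⟩
    exact ⟨U, (Matrix.isUnit_iff_isUnit_det _).1 U.isUnit, (Units.mul_inv_eq_iff_eq_mul U).1 hU⟩
  · rintro ⟨U, hdet, hU⟩
    obtain ⟨V, rfl⟩ := (Matrix.isUnit_iff_isUnit_det U).2 hdet
    exact ⟨V, (Units.mul_inv_eq_iff_eq_mul V).2 hU⟩

variable [IsDomain R]

theorem Matrix.upperTriangular_intertwine_iff (l1 l2 : R) {t1 t2 : R} (ht2 : t2 ≠ 0)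
    (x y z w : R) :
    !![x, y; z, w] * !![l1, t1; 0, l2] = !![l1, t2; 0, l2] * !![x, y; z, w] ↔
      z = 0 ∧ x * t1 - t2 * w = (l1 - l2) * y := by
  simp only [Matrix.mul_fin_two, EmbeddingLike.apply_eq_iff_eq, Matrix.vecCons_inj, and_true,
    mul_zero, add_zero, zero_mul]
  constructor
  · rintro ⟨⟨h00, h01⟩, -, -⟩
    have hz : z = 0 := (mul_eq_zero.1 (by linear_combination -h00 : t2 * z = 0)).resolve_left ht2
    exact ⟨hz, by linear_combination h01⟩
  · rintro ⟨rfl, h⟩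
    exact ⟨⟨by ring, by linear_combination h⟩, by ring, by ring⟩

theorem Matrix.exists_units_conj_upperTriangular_iff (l1 l2 : R) {t1 t2 : R} (ht2 : t2 ≠ 0) :
    (∃ U : (Matrix (Fin 2) (Fin 2) R)ˣ,
        (U : Matrix (Fin 2) (Fin 2) R) * !![l1, t1; 0, l2] * (U⁻¹ : _) = !![l1, t2; 0, l2]) ↔
      ∃ x w : Rˣ, l1 - l2 ∣ x * t1 - t2 * w := by
  rw [Matrix.exists_units_conj_eq_iff]
  constructor
  · rintro ⟨U, hdet, hU⟩
    rw [Matrix.eta_fin_two U] at hdet hU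
    obtain ⟨hz, hxw⟩ := (Matrix.upperTriangular_intertwine_iff l1 l2 ht2 _ _ _ _).1 hU
    rw [Matrix.det_fin_two_of, hz, mul_zero, sub_zero, IsUnit.mul_iff] at hdet
    exact ⟨hdet.1.unit, hdet.2.unit, U 0 1, hxw⟩
  · rintro ⟨x, w, y, hxw⟩
    refine ⟨!![(x : R), y; 0, w], ?_, (Matrix.upperTriangular_intertwine_iff l1 l2 ht2 _ _ _ _).2
      ⟨rfl, hxw⟩⟩
    simp [Matrix.det_fin_two_of]

end Similarity

theorem IsDiscreteValuationRing.exists_units_dvd_mul_sub_mul_iff {R : Type*} [CommRing R]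
    [IsDomain R] [IsDiscreteValuationRing R] (d a b : R) :
    (∃ x w : Rˣ, d ∣ x * a - b * w) ↔
      addVal R a = addVal R b ∨ addVal R d ≤ min (addVal R a) (addVal R b) := by
  constructor
  · rintro ⟨x, w, hd⟩
    refine or_iff_not_imp_left.2 fun hab => ?_
    have hxa : addVal R (x * a) = addVal R a := by simp
    have hbw : addVal R (b * w) = addVal R b := by simp
    have hsub : addVal R (x * a - b * w) = min (addVal R a) (addVal R b) := by
      rw [AddValuation.map_sub_of_distinct_val _ (by rwa [hxa, hbw]), hxa, hbw]
    exact hsub ▸ addVal_le_iff_dvd.2 hd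
  · rintro (hab | hd)
    · obtain ⟨u, hu⟩ := (addVal_eq_iff_associated a b).1 hab
      exact ⟨u, 1, by rw [Units.val_one, mul_one, ← hu, mul_comm, sub_self]; exact dvd_zero d⟩
    · refine ⟨1, 1, ?_⟩
      rw [Units.val_one, one_mul, mul_one]
      exact dvd_sub (addVal_le_iff_dvd.1 (hd.trans (min_le_left _ _)))
        (addVal_le_iff_dvd.1 (hd.trans (min_le_right _ _)))

theorem upper_triangular_similar_iff_general
    (R : Type*) [CommRing R] [IsDomain R] [IsDiscreteValuationRing R]
    (lam1 lam2 : R) (tau1 tau2 : R) (h2 : tau2 ≠ 0) :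
    (∃ U : (Matrix (Fin 2) (Fin 2) R)ˣ,
        (U : Matrix (Fin 2) (Fin 2) R) * !![lam1, tau1; 0, lam2] * (U⁻¹ : _) =
          !![lam1, tau2; 0, lam2]) ↔
      (addVal R tau1 = addVal R tau2 ∨
        addVal R (lam1 - lam2) ≤ min (addVal R tau1) (addVal R tau2)) := by
  rw [Matrix.exists_units_conj_upperTriangular_iff lam1 lam2 h2]
  exact exists_units_dvd_mul_sub_mul_iff (lam1 - lam2) tau1 tau2

/-- Let `R` be a discrete valuation ring with (additive) valuation
`v`, `λ₁, λ₂ ∈ R`, and `τ₁, τ₂ ∈ R` nonzero. Then `[[λ₁, τ₁],[0, λ₂]]` and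
`[[λ₁, τ₂],[0, λ₂]]` are similar over `R` iff `v(τ₁) = v(τ₂)` or
`v(λ₁ − λ₂) ≤ min{v(τ₁), v(τ₂)}`. -/
theorem upper_triangular_similar_iff
    (R : Type*) [CommRing R] [IsDomain R] [IsDiscreteValuationRing R]
    (lam1 lam2 : R) (tau1 tau2 : R) (h1 : tau1 ≠ 0) (h2 : tau2 ≠ 0) :
    (∃ U : (Matrix (Fin 2) (Fin 2) R)ˣ,
        (U : Matrix (Fin 2) (Fin 2) R) * !![lam1, tau1; 0, lam2] * (U⁻¹ : _) =
          !![lam1, tau2; 0, lam2]) ↔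
      (addVal R tau1 = addVal R tau2 ∨
        addVal R (lam1 - lam2) ≤ min (addVal R tau1) (addVal R tau2)) :=
  upper_triangular_similar_iff_general R lam1 lam2 tau1 tau2 h2
end

section
/- Let R be a discrete valuation ring with uniformizer π and valuation v, and let λ₁, λ₂ ∈ R with v(λ₁) ≥ v(λ₂). If λ₁ ≠ λ₂, then every matrix A ∈ Mat_2(R) with characteristic polynomial (x − λ₁)(x − λ₂) is similar over R to exactly one matrix of the form [[λ₁, π^j],[0, λ₂]] with 0 ≤ j ≤ v(λ₁ − λ₂). If λ₁ = λ₂, then every such A is similar over R to exactly one of the diagonal matrix [[λ₁, 0],[0, λ₁]] or [[λ₁, π^j],[0, λ₁]] with j ≥ 0. -/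
/-!
Write `A = λ₂ + π^k N` with `N` primitive (some entry a unit). Then `det N = 0` and
`π^k tr N = λ₁ - λ₂`. A primitive `2 × 2` matrix over a local ring that is singular is not
scalar modulo the maximal ideal, so it has a cyclic vector `v`; in the basis `(N v, v)` it
becomes `[[tr N, 1], [0, 0]]`, and `A` becomes `[[λ₁, π^k], [0, λ₂]]`. For uniqueness,
`[[λ₁, π^j], [0, λ₂]] = λ₂ + π^j [[c, 1], [0, 0]]` when `π^j ∣ λ₁ - λ₂`, so every conjugate
of it has off-diagonal entries divisible by `π^j`. Only the scalar matrix is conjugate to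
a scalar matrix.
-/

open Polynomial IsDiscreteValuationRing Matrix

theorem isConj_iff_exists_units_conj {M : Type*} [Monoid M] {a b : M} :
    IsConj a b ↔ ∃ U : Mˣ, ↑U * a * ↑U⁻¹ = b := by
  simp only [IsConj, SemiconjBy, Units.mul_inv_eq_iff_eq_mul]

theorem isConj_smul_one_left_iff {R A : Type*} [CommSemiring R] [Semiring A] [Algebra R A]
    {r : R} {a : A} : IsConj (r • 1) a ↔ a = r • 1 := by
  refine ⟨fun h => (h.eq_of_left_mem_center ?_).symm, fun h => h ▸ IsConj.refl _⟩
  rw [← Algebra.algebraMap_eq_smul_one]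
  exact Set.algebraMap_mem_center r

theorem Units.conj_smul_one_add_smul {R A : Type*} [CommSemiring R] [Semiring A] [Algebra R A]
    (U : Aˣ) (s r : R) (a : A) :
    ↑U * (s • 1 + r • a) * ↑U⁻¹ = s • 1 + r • (↑U * a * ↑U⁻¹) := by
  simp [mul_add, add_mul]

namespace Matrix

section CommRing

variable {R : Type*} [CommRing R]

theorem trace_eq_add_and_det_eq_mul_of_charpoly [Nontrivial R]
    {A : Matrix (Fin 2) (Fin 2) R} {a b : R}
    (h : A.charpoly = (X - C a) * (X - C b)) : A.trace = a + b ∧ A.det = a * b := by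
  have hab : (X - C a) * (X - C b) = X ^ 2 - C (a + b) * X + C (a * b) := by
    simp only [C_add, C_mul]; ring
  rw [charpoly_fin_two, hab] at h
  have h1 := congrArg (coeff · 1) h
  have h0 := congrArg (coeff · 0) h
  simp [coeff_X, coeff_C] at h1 h0
  exact ⟨by linear_combination -h1, h0⟩

/-- `det [A v | v]` for `v = (x, y)`. -/
def cyclicDet (A : Matrix (Fin 2) (Fin 2) R) (x y : R) : R :=
  A 0 1 * y ^ 2 + (A 0 0 - A 1 1) * x * y - A 1 0 * x ^ 2

/-- By Cayley–Hamilton, `A` acts on the basis `(A v, v)` by the companion matrix. -/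
theorem isConj_companion_of_isUnit_cyclicDet (A : Matrix (Fin 2) (Fin 2) R) {x y : R}
    (h : IsUnit (A.cyclicDet x y)) : IsConj A !![A.trace, 1; -A.det, 0] := by
  set V : Matrix (Fin 2) (Fin 2) R := !![A 0 0 * x + A 0 1 * y, x; A 1 0 * x + A 1 1 * y, y]
  have hV : IsUnit V := by
    rw [isUnit_iff_isUnit_det, det_fin_two_of]
    convert h using 1
    rw [cyclicDet]; ring
  refine ⟨hV.unit⁻¹, ?_⟩
  rw [SemiconjBy, Units.eq_mul_inv_iff_mul_eq, mul_assoc, Units.inv_mul_eq_iff_eq_mul,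
    IsUnit.unit_spec]
  ext i j
  fin_cases i <;> fin_cases j <;>
    simp [V, trace_fin_two, det_fin_two, mul_apply, Fin.sum_univ_two] <;> ring

theorem dvd_apply_of_isConj_upperTriangular {a b r : R} {M : Matrix (Fin 2) (Fin 2) R}
    (hr : r ∣ a - b) (h : IsConj !![a, r; 0, b] M) : r ∣ M 0 1 := by
  obtain ⟨c, hc⟩ := hr
  obtain ⟨U, rfl⟩ := isConj_iff_exists_units_conj.1 h
  have hT : !![a, r; 0, b] = b • 1 + r • !![c, 1; 0, 0] := by
    ext i j
    fin_cases i <;> fin_cases j <;> simp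
    linear_combination hc
  rw [hT, Units.conj_smul_one_add_smul]
  simp

theorem eq_of_isConj_upperTriangular [IsDomain R] {π a b : R} (hπ₀ : π ≠ 0) (hπ : ¬IsUnit π)
    {j k : ℕ} (hj : π ^ j ∣ a - b) (hk : π ^ k ∣ a - b)
    (h : IsConj !![a, π ^ j; 0, b] !![a, π ^ k; 0, b]) : j = k := by
  have hjk := dvd_apply_of_isConj_upperTriangular hj h
  have hkj := dvd_apply_of_isConj_upperTriangular hk h.symm
  simp only [of_apply, cons_val', cons_val_zero, cons_val_one, empty_val', cons_val_fin_one]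
    at hjk hkj
  exact le_antisymm ((pow_dvd_pow_iff hπ₀ hπ).1 hjk) ((pow_dvd_pow_iff hπ₀ hπ).1 hkj)

theorem exists_isUnit_cyclicDet [IsLocalRing R] (A : Matrix (Fin 2) (Fin 2) R)
    (hA : ∃ i j, IsUnit (A i j)) (hdet : ¬IsUnit A.det) :
    ∃ x y : R, IsUnit (A.cyclicDet x y) := by
  by_contra! hq
  set m := IsLocalRing.maximalIdeal R
  have hm : ∀ r, r ∈ m ↔ ¬IsUnit r := IsLocalRing.mem_maximalIdeal
  have h10 : A 1 0 ∈ m := by simpa [cyclicDet, hm] using hq 1 0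
  have h01 : A 0 1 ∈ m := by simpa [cyclicDet, hm] using hq 0 1
  have hdiff : A 0 0 - A 1 1 ∈ m := by
    have := (hm _).2 (hq 1 1)
    convert m.sub_mem (m.add_mem this h10) h01 using 1
    rw [cyclicDet]; ring
  have hprod : A 0 0 * A 1 1 ∈ m := by
    have := m.add_mem ((hm _).2 hdet) (m.mul_mem_right (A 1 0) h01)
    rwa [det_fin_two, sub_add_cancel] at this
  have hdiag : A 0 0 ∈ m ∧ A 1 1 ∈ m := by
    rcases (IsLocalRing.maximalIdeal.isMaximal R).isPrime.mem_or_mem hprod with h | h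
    · exact ⟨h, by simpa using m.sub_mem h hdiff⟩
    · exact ⟨by simpa using m.add_mem hdiff h, h⟩
  obtain ⟨i, j, hij⟩ := hA
  refine (hm _).1 ?_ hij
  fin_cases i <;> fin_cases j
  exacts [hdiag.1, h01, h10, hdiag.2]

end CommRing

section DVR

variable {R : Type*} [CommRing R] [IsDomain R] [IsDiscreteValuationRing R] {π : R}

theorem exists_eq_pow_smul_of_ne_zero {m n : Type*} [Fintype m] [Fintype n]
    (hπ : Irreducible π) {B : Matrix m n R} (hB : B ≠ 0) :
    ∃ (k : ℕ) (N : Matrix m n R), B = π ^ k • N ∧ ∃ i j, IsUnit (N i j) := by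
  obtain ⟨i₀, j₀, hB₀⟩ : ∃ i j, B i j ≠ 0 := by
    by_contra! h
    exact hB (Matrix.ext h)
  obtain ⟨⟨i, j⟩, -, hmin⟩ := Finset.exists_min_image Finset.univ
    (fun p : m × n => addVal R (B p.1 p.2)) ⟨(i₀, j₀), Finset.mem_univ _⟩
  have hij : B i j ≠ 0 := by
    intro h
    have := hmin (i₀, j₀) (Finset.mem_univ _)
    simp [h, addVal_eq_top_iff, hB₀] at this
  obtain ⟨k, u, hu⟩ := eq_unit_mul_pow_irreducible hij hπ
  have hdvd : ∀ i' j', π ^ k ∣ B i' j' := fun i' j' =>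
    (Dvd.intro_left _ hu.symm).trans (addVal_le_iff_dvd.1 (hmin (i', j') (Finset.mem_univ _)))
  choose N hN using hdvd
  refine ⟨k, Matrix.of N, Matrix.ext fun i' j' => hN i' j', i, j, ?_⟩
  have : N i j = u := mul_left_cancel₀ (pow_ne_zero k hπ.ne_zero) (by rw [← hN, hu, mul_comm])
  simp [this]

theorem exists_isConj_upperTriangular (hπ : Irreducible π)
    {A : Matrix (Fin 2) (Fin 2) R} {a b : R} (hA : A.charpoly = (X - C a) * (X - C b))
    (hne : A ≠ b • 1) : ∃ k : ℕ, π ^ k ∣ a - b ∧ IsConj A !![a, π ^ k; 0, b] := by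
  obtain ⟨htr, hdet⟩ := trace_eq_add_and_det_eq_mul_of_charpoly hA
  obtain ⟨k, N, hN, hunit⟩ := exists_eq_pow_smul_of_ne_zero hπ (sub_ne_zero.2 hne)
  have hA' : A = b • 1 + π ^ k • N := by rw [← hN]; abel
  have htrN : π ^ k * N.trace = a - b := by
    have := congrArg trace hA'
    simp [trace_fin_two] at this htr ⊢
    linear_combination htr - this
  have hdetN : N.det = 0 := by
    have hzero : (A - b • 1).det = 0 := by
      rw [det_fin_two] at hdet ⊢
      rw [trace_fin_two] at htr
      simp
      linear_combination hdet - b * htr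
    rw [hN, det_smul, Fintype.card_fin] at hzero
    exact (mul_eq_zero.1 hzero).resolve_left (pow_ne_zero _ (pow_ne_zero _ hπ.ne_zero))
  obtain ⟨x, y, hxy⟩ := exists_isUnit_cyclicDet N hunit (by simp [hdetN])
  obtain ⟨U, hU⟩ := isConj_iff_exists_units_conj.1 (isConj_companion_of_isUnit_cyclicDet N hxy)
  refine ⟨k, ⟨_, htrN.symm⟩, isConj_iff_exists_units_conj.2 ⟨U, ?_⟩⟩
  rw [hA', Units.conj_smul_one_add_smul, hU, hdetN]
  ext i j
  fin_cases i <;> fin_cases j <;> simp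
  linear_combination htrN

end DVR

end Matrix

theorem reducible_charpoly_classification_general
    (R : Type*) [CommRing R] [IsDomain R] [IsDiscreteValuationRing R]
    (π : R) (hπ : Irreducible π)
    (lam1 lam2 : R) :
    (lam1 ≠ lam2 →
      ∀ A : Matrix (Fin 2) (Fin 2) R,
        A.charpoly = (X - C lam1) * (X - C lam2) →
          ∃! j : ℕ, (j : ℕ∞) ≤ addVal R (lam1 - lam2) ∧
            ∃ U : (Matrix (Fin 2) (Fin 2) R)ˣ,
              (U : Matrix (Fin 2) (Fin 2) R) * A * (U⁻¹ : _) = !![lam1, π ^ j; 0, lam2]) ∧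
    (lam1 = lam2 →
      ∀ A : Matrix (Fin 2) (Fin 2) R,
        A.charpoly = (X - C lam1) * (X - C lam2) →
          ∃! o : Option ℕ,
            ∃ U : (Matrix (Fin 2) (Fin 2) R)ˣ,
              (U : Matrix (Fin 2) (Fin 2) R) * A * (U⁻¹ : _) =
                o.elim !![lam1, 0; 0, lam1] (fun j => !![lam1, π ^ j; 0, lam1])) := by
  have hval : ∀ j : ℕ, (j : ℕ∞) ≤ addVal R (lam1 - lam2) ↔ π ^ j ∣ lam1 - lam2 := fun j => by
    rw [← hπ.addVal_pow, addVal_le_iff_dvd]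
  simp_rw [← isConj_iff_exists_units_conj]
  refine ⟨fun hne A hA => ?_, fun heq A hA => ?_⟩
  · have hA' : A ≠ lam2 • 1 := by
      rintro rfl
      have := (trace_eq_add_and_det_eq_mul_of_charpoly hA).1
      simp at this
      exact hne (by linear_combination -this)
    obtain ⟨k, hk, hAk⟩ := exists_isConj_upperTriangular hπ hA hA'
    refine ⟨k, ⟨(hval k).2 hk, hAk⟩, fun j ⟨hj, hAj⟩ => ?_⟩
    exact eq_of_isConj_upperTriangular hπ.ne_zero hπ.not_isUnit ((hval j).1 hj) hk
      (hAj.symm.trans hAk)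
  · subst heq
    have hscalar : !![lam1, 0; 0, lam1] = lam1 • (1 : Matrix (Fin 2) (Fin 2) R) := by
      ext i j; fin_cases i <;> fin_cases j <;> simp
    by_cases hs : A = lam1 • 1
    · subst hs
      refine ⟨none, hscalar ▸ IsConj.refl _, ?_⟩
      rintro (_ | j) hj
      · rfl
      · have h01 := congrArg (· 0 1) (isConj_smul_one_left_iff.1 hj)
        simp [hπ.ne_zero] at h01
    · obtain ⟨k, -, hAk⟩ := exists_isConj_upperTriangular hπ hA hs
      refine ⟨some k, hAk, ?_⟩
      rintro (_ | j) hj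
      · exact absurd (isConj_smul_one_left_iff.1 (by simpa [hscalar] using hj.symm)) hs
      · exact congrArg some (eq_of_isConj_upperTriangular hπ.ne_zero hπ.not_isUnit
          (by simp) (by simp) (hj.symm.trans hAk))

/-- Let `R` be a DVR with uniformizer `π` and valuation `v`, and
`λ₁, λ₂ ∈ R` with `v(λ₁) ≥ v(λ₂)`. If `λ₁ ≠ λ₂`, every `A ∈ Mat_2(R)` with
characteristic polynomial `(x − λ₁)(x − λ₂)` is similar over `R` to exactly one matrix
`[[λ₁, π^j],[0, λ₂]]` with `0 ≤ j ≤ v(λ₁ − λ₂)`. If `λ₁ = λ₂`, every such `A` is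
similar over `R` to exactly one of the diagonal matrix `[[λ₁, 0],[0, λ₁]]` or the
matrices `[[λ₁, π^j],[0, λ₁]]`, `j ≥ 0`. -/
theorem reducible_charpoly_classification
    (R : Type*) [CommRing R] [IsDomain R] [IsDiscreteValuationRing R]
    (π : R) (hπ : Irreducible π)
    (lam1 lam2 : R) (hv : addVal R lam2 ≤ addVal R lam1) :
    (lam1 ≠ lam2 →
      ∀ A : Matrix (Fin 2) (Fin 2) R,
        A.charpoly = (X - C lam1) * (X - C lam2) →
          ∃! j : ℕ, (j : ℕ∞) ≤ addVal R (lam1 - lam2) ∧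
            ∃ U : (Matrix (Fin 2) (Fin 2) R)ˣ,
              (U : Matrix (Fin 2) (Fin 2) R) * A * (U⁻¹ : _) = !![lam1, π ^ j; 0, lam2]) ∧
    (lam1 = lam2 →
      ∀ A : Matrix (Fin 2) (Fin 2) R,
        A.charpoly = (X - C lam1) * (X - C lam2) →
          ∃! o : Option ℕ,
            ∃ U : (Matrix (Fin 2) (Fin 2) R)ˣ,
              (U : Matrix (Fin 2) (Fin 2) R) * A * (U⁻¹ : _) =
                o.elim !![lam1, 0; 0, lam1] (fun j => !![lam1, π ^ j; 0, lam1])) :=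
  reducible_charpoly_classification_general R π hπ lam1 lam2
end

section
/- Let R be a discrete valuation ring with uniformizer π and valuation v, let f(x) = x² − ax − b ∈ R[x] be monic irreducible over the fraction field K, let θ be the class of x in R[θ] := R[x]/(f), and fix r ∈ R; write T := b − r(r + a). Consider the R-submodules J_n := Rπⁿ + R(r + θ) of R[θ] (n ≥ 0) that are ideals of R[θ]. Then every such ideal J_n is equivalent to J_k for some k with 0 ≤ k ≤ min{v(2r + a), ⌊½v(T)⌋}, and for distinct k, n in this range the ideals J_k and J_n are not equivalent. -/
/-!
Put `η = r + θ`, `A = 2r + a`, `T = b - r(r + a)`: then `(1, η)` is an `R`-basis of `R[θ]`,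
`η² = Aη + T` and `J_n = R πⁿ + R η`.

Two invariants separate the classes. If `α₁ J_k = α₂ J_n`, the determinant (in the basis
`(1, η)`) of `α₁ πᵏ, α₁ η` is `N(α₁) πᵏ`, and it is `N(α₂)` times the determinant of two elements
of `J_n`, so `N(α₂) πⁿ ∣ N(α₁) πᵏ`. Since `N(s πⁿ + t η) = πⁿ s (πⁿ s + t A) - t² T`, for `n` in the
range every norm from `J_n` is divisible by `π^{2n}`, so `N(α₂) π^{2n} ∣ N(α₁ πᵏ) = N(α₁) π^{2k}`.
With the symmetric relations this forces `k = n`.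

Conversely, if `n` is out of range then `πᵏ J_n = (m + η) J_k` as soon as `πⁿ ∣ m`, `πᵏ ∣ m + A` and
the norm `m (m + A) - T` of `m + η` has valuation exactly `k + n` (its conjugate `m + A - η` lies in
`J_k`). Such `k, m` exist: `k = v(T) - n`, `m = 0` if `π^{v(T) - n} ∣ A`, and otherwise `k = v(A)`,
`m = πⁿ u⁻¹` where `A = u π^{v(A)}`.
-/

open Polynomial

namespace Module.Basis

variable {R S : Type*} [CommRing R]

theorem det_fin_two_apply {M : Type*} [AddCommGroup M] [Module R M] (e : Basis (Fin 2) R M)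
    (x y : M) :
    e.det ![x, y] = e.equivFun x 0 * e.equivFun y 1 - e.equivFun y 0 * e.equivFun x 1 := by
  simp [det_apply, Matrix.det_fin_two, toMatrix_apply]

variable [CommRing S] [Algebra R S]

theorem det_smul_left {ι : Type*} [Fintype ι] [DecidableEq ι] (e : Basis ι R S) (α : S)
    (v : ι → S) : e.det (α • v) = Algebra.norm R α * e.det v := by
  rw [Algebra.norm_apply, ← e.det_comp]
  rfl

variable {η : S}

theorem equivFun_algebraMap_add_smul (e : Basis (Fin 2) R S) (he : ⇑e = ![1, η]) (c t : R) :
    e.equivFun (algebraMap R S c + t • η) = ![c, t] := by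
  rw [← e.equivFun.apply_symm_apply ![c, t], e.equivFun_symm_apply]
  simp [he, Algebra.algebraMap_eq_smul_one]

theorem algebraMap_add_smul_inj (e : Basis (Fin 2) R S) (he : ⇑e = ![1, η]) {c t c' t' : R} :
    algebraMap R S c + t • η = algebraMap R S c' + t' • η ↔ c = c' ∧ t = t' := by
  refine ⟨fun h => ?_, fun ⟨hc, ht⟩ => hc ▸ ht ▸ rfl⟩
  have := congrArg e.equivFun h
  rw [e.equivFun_algebraMap_add_smul he, e.equivFun_algebraMap_add_smul he] at this
  simpa using this

theorem algebraMap_add_smul_eq_zero_iff (e : Basis (Fin 2) R S) (he : ⇑e = ![1, η]) {c t : R} :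
    algebraMap R S c + t • η = 0 ↔ c = 0 ∧ t = 0 := by
  simpa using e.algebraMap_add_smul_inj he (c' := 0) (t' := 0)

theorem exists_algebraMap_add_smul_eq (e : Basis (Fin 2) R S) (he : ⇑e = ![1, η]) (x : S) :
    ∃ c t : R, algebraMap R S c + t • η = x := by
  refine ⟨e.equivFun x 0, e.equivFun x 1, ?_⟩
  conv_rhs => rw [← e.equivFun.symm_apply_apply x, e.equivFun_symm_apply]
  simp [he, Algebra.algebraMap_eq_smul_one]

theorem det_algebraMap_add_smul (e : Basis (Fin 2) R S) (he : ⇑e = ![1, η]) (c t c' t' : R) :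
    e.det ![algebraMap R S c + t • η, algebraMap R S c' + t' • η] = c * t' - c' * t := by
  simp [det_fin_two_apply, e.equivFun_algebraMap_add_smul he]

-- The norm of `z` is `det (z, z η)`, since `det (1, η) = 1`.
theorem norm_algebraMap_add_smul (e : Basis (Fin 2) R S) (he : ⇑e = ![1, η]) {A T : R}
    (hη : η ^ 2 = algebraMap R S A * η + algebraMap R S T) (c t : R) :
    Algebra.norm R (algebraMap R S c + t • η) = c * (c + t * A) - t * T * t := by
  set z := algebraMap R S c + t • η
  have hzη : z * η = algebraMap R S (t * T) + (c + t * A) • η := by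
    simp only [z, Algebra.smul_def, map_add, map_mul]
    linear_combination algebraMap R S t * hη
  calc Algebra.norm R z = e.det (z • ⇑e) := by rw [e.det_smul_left, e.det_self, mul_one]
    _ = e.det ![z, algebraMap R S (t * T) + (c + t * A) • η] := by
      rw [he, Matrix.smul_cons, Matrix.smul_cons, smul_eq_mul, smul_eq_mul, mul_one, hzη,
        Matrix.smul_empty]
    _ = c * (c + t * A) - t * T * t := e.det_algebraMap_add_smul he c t _ _

theorem exists_basis_algebraMap_add (e₀ : Basis (Fin 2) R S) {θ : S} (he₀ : ⇑e₀ = ![1, θ])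
    (r : R) : ∃ e : Basis (Fin 2) R S, ⇑e = ![1, algebraMap R S r + θ] := by
  have hdet : e₀.det ![1, algebraMap R S r + θ] = 1 := by
    simpa using e₀.det_algebraMap_add_smul he₀ 1 0 r 1
  have hbasis := (e₀.is_basis_iff_det).mpr (hdet ▸ isUnit_one)
  exact ⟨.mk hbasis.1 hbasis.2.ge, coe_mk _ _⟩

end Module.Basis

theorem Associated.of_mul_of_mul_sq {M : Type*} [CommMonoidWithZero M] [IsCancelMulZero M]
    {x y p q : M} (hx : x ≠ 0) (hp : p ≠ 0) (h₁ : Associated (x * p) (y * q))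
    (h₂ : Associated (x * p ^ 2) (y * q ^ 2)) : Associated p q := by
  have hsq : Associated (x * (x * p ^ 2)) (y * (x * p ^ 2)) := by
    have h := h₁.mul_mul h₁
    rw [show x * p * (x * p) = x * (x * p ^ 2) by rw [sq]; ac_rfl,
      show y * q * (y * q) = y * (y * q ^ 2) by rw [sq]; ac_rfl] at h
    exact h.trans ((Associated.refl y).mul_mul h₂.symm)
  have hxy := hsq.of_mul_right (Associated.refl _) (mul_ne_zero hx (pow_ne_zero 2 hp))
  exact h₁.of_mul_left hxy hx

theorem IsLocalRing.isUnit_one_add_mul {R : Type*} [CommRing R] [IsLocalRing R] {π : R}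
    (hπ : ¬IsUnit π) (y : R) : IsUnit (1 + π * y) :=
  (isUnit_or_isUnit_of_add_one (b := -(π * y)) (by ring)).resolve_right
    fun h => hπ (isUnit_of_mul_isUnit_left ((IsUnit.neg_iff _).mp h))

namespace DVRQuadratic

variable {R S : Type*} [CommRing R] [CommRing S] [Algebra R S]

def jLattice (π : R) (η : S) (n : ℕ) : Submodule R S :=
  Submodule.span R {algebraMap R S (π ^ n), η}

variable {π : R} {η : S} {n : ℕ}

theorem mem_jLattice {z : S} :
    z ∈ jLattice π η n ↔ ∃ s t : R, algebraMap R S (s * π ^ n) + t • η = z := by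
  simp [jLattice, Submodule.mem_span_pair, Algebra.smul_def]

variable {A T : R}

theorem pow_dvd_det_of_mem_jLattice (e : Module.Basis (Fin 2) R S) (he : ⇑e = ![1, η]) {z₁ z₂ : S}
    (hz₁ : z₁ ∈ jLattice π η n) (hz₂ : z₂ ∈ jLattice π η n) : π ^ n ∣ e.det ![z₁, z₂] := by
  obtain ⟨s₁, t₁, rfl⟩ := mem_jLattice.mp hz₁
  obtain ⟨s₂, t₂, rfl⟩ := mem_jLattice.mp hz₂
  rw [e.det_algebraMap_add_smul he]
  exact ⟨s₁ * t₂ - s₂ * t₁, by ring⟩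

theorem pow_dvd_norm_of_mem_jLattice (e : Module.Basis (Fin 2) R S) (he : ⇑e = ![1, η])
    (hη : η ^ 2 = algebraMap R S A * η + algebraMap R S T) (hA : π ^ n ∣ A)
    (hT : π ^ (2 * n) ∣ T) {z : S} (hz : z ∈ jLattice π η n) :
    π ^ (2 * n) ∣ Algebra.norm R z := by
  obtain ⟨s, t, rfl⟩ := mem_jLattice.mp hz
  obtain ⟨A', rfl⟩ := hA
  obtain ⟨T', rfl⟩ := hT
  rw [e.norm_algebraMap_add_smul he hη]
  exact ⟨s * (s + t * A') - t * T' * t, by ring⟩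

theorem mul_mem_jLattice (e : Module.Basis (Fin 2) R S) (he : ⇑e = ![1, η])
    (hη : η ^ 2 = algebraMap R S A * η + algebraMap R S T) (hT : π ^ n ∣ T) (y : S) {z : S}
    (hz : z ∈ jLattice π η n) : y * z ∈ jLattice π η n := by
  have hηz : η * z ∈ jLattice π η n := by
    obtain ⟨s, t, rfl⟩ := mem_jLattice.mp hz
    obtain ⟨T', rfl⟩ := hT
    refine mem_jLattice.mpr ⟨t * T', s * π ^ n + t * A, ?_⟩
    simp only [Algebra.smul_def, map_add, map_mul] at hη ⊢
    linear_combination -(algebraMap R S t * hη)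
  obtain ⟨c, d, rfl⟩ := e.exists_algebraMap_add_smul_eq he y
  rw [add_mul, smul_mul_assoc, ← Algebra.smul_def]
  exact add_mem (Submodule.smul_mem _ c hz) (Submodule.smul_mem _ d hηz)

theorem exists_ideal_coe_eq_jLattice (e : Module.Basis (Fin 2) R S) (he : ⇑e = ![1, η])
    (hη : η ^ 2 = algebraMap R S A * η + algebraMap R S T) (hT : π ^ n ∣ T) :
    ∃ J : Ideal S, (J : Set S) = jLattice π η n :=
  ⟨{ toAddSubmonoid := (jLattice π η n).toAddSubmonoid
     smul_mem' := fun y _ hz => mul_mem_jLattice e he hη hT y hz }, rfl⟩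

theorem pow_dvd_of_coe_eq_jLattice (e : Module.Basis (Fin 2) R S) (he : ⇑e = ![1, η])
    (hη : η ^ 2 = algebraMap R S A * η + algebraMap R S T) {J : Ideal S}
    (hJ : (J : Set S) = jLattice π η n) : π ^ n ∣ T := by
  have hηJ : η ∈ J := by
    rw [← SetLike.mem_coe, hJ]
    exact Submodule.subset_span (by simp)
  have hTJ : algebraMap R S T ∈ (J : Set S) := by
    rw [show algebraMap R S T = η * η - algebraMap R S A * η by linear_combination -hη]
    exact J.sub_mem (J.mul_mem_left η hηJ) (J.mul_mem_left _ hηJ)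
  rw [hJ, SetLike.mem_coe, mem_jLattice] at hTJ
  obtain ⟨s, t, hst⟩ := hTJ
  rw [← add_zero (algebraMap R S T), ← zero_smul R η, e.algebraMap_add_smul_inj he] at hst
  exact ⟨s, by rw [← hst.1, mul_comm]⟩

theorem eq_span_of_coe_eq_jLattice {J : Ideal S} (hJ : (J : Set S) = jLattice π η n) :
    J = Ideal.span {algebraMap R S (π ^ n), η} := by
  refine le_antisymm (fun z hz => ?_) (Ideal.span_le.mpr ?_)
  · rw [← SetLike.mem_coe, hJ, SetLike.mem_coe, mem_jLattice] at hz
    obtain ⟨s, t, rfl⟩ := hz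
    refine Ideal.mem_span_pair.mpr ⟨algebraMap R S s, algebraMap R S t, ?_⟩
    rw [Algebra.smul_def, map_mul]
  · rw [hJ]
    exact Submodule.subset_span

theorem norm_mul_pow_dvd_of_span_mul_le (e : Module.Basis (Fin 2) R S) (he : ⇑e = ![1, η])
    (hη : η ^ 2 = algebraMap R S A * η + algebraMap R S T) {k : ℕ} {J J' : Ideal S}
    (hJ : (J : Set S) = jLattice π η k) (hJ' : (J' : Set S) = jLattice π η n)
    (hA : π ^ n ∣ A) (hT : π ^ (2 * n) ∣ T) {α₁ α₂ : S}
    (hle : Ideal.span {α₁} * J ≤ Ideal.span {α₂} * J') :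
    Algebra.norm R α₂ * π ^ n ∣ Algebra.norm R α₁ * π ^ k ∧
      Algebra.norm R α₂ * π ^ (2 * n) ∣ Algebra.norm R α₁ * π ^ (2 * k) := by
  have transport : ∀ g ∈ jLattice π η k, ∃ z ∈ jLattice π η n, α₂ * z = α₁ * g := by
    intro g hg
    rw [← SetLike.mem_coe, ← hJ, SetLike.mem_coe] at hg
    obtain ⟨z, hz, hαz⟩ := Ideal.mem_span_singleton_mul.mp
      (hle (Ideal.mul_mem_mul (Ideal.mem_span_singleton_self α₁) hg))
    rw [← SetLike.mem_coe, hJ'] at hz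
    exact ⟨z, hz, hαz⟩
  obtain ⟨z₁, hz₁, h₁⟩ := transport (algebraMap R S (π ^ k)) (Submodule.subset_span (by simp))
  obtain ⟨z₂, hz₂, h₂⟩ := transport η (Submodule.subset_span (by simp))
  have hdet : e.det ![algebraMap R S (π ^ k), η] = π ^ k := by
    simpa using e.det_algebraMap_add_smul he (π ^ k) 0 0 1
  constructor
  · calc Algebra.norm R α₂ * π ^ n ∣ Algebra.norm R α₂ * e.det ![z₁, z₂] :=
          mul_dvd_mul_left _ (pow_dvd_det_of_mem_jLattice e he hz₁ hz₂)
      _ = Algebra.norm R α₁ * π ^ k := by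
        rw [← e.det_smul_left, ← hdet, ← e.det_smul_left]
        simp only [Matrix.smul_cons, Matrix.smul_empty, smul_eq_mul, h₁, h₂]
  · calc Algebra.norm R α₂ * π ^ (2 * n) ∣ Algebra.norm R α₂ * Algebra.norm R z₁ :=
          mul_dvd_mul_left _ (pow_dvd_norm_of_mem_jLattice e he hη hA hT hz₁)
      _ = Algebra.norm R α₁ * π ^ (2 * k) := by
        rw [← map_mul, h₁, map_mul, Algebra.norm_algebraMap_of_basis e, Fintype.card_fin,
          ← pow_mul, mul_comm k]

theorem span_mul_ne_of_ne [IsDomain R] [IsDomain S] (e : Module.Basis (Fin 2) R S)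
    (he : ⇑e = ![1, η]) (hη : η ^ 2 = algebraMap R S A * η + algebraMap R S T)
    (hπ : Irreducible π) {k : ℕ} (hkn : k ≠ n) (hkA : π ^ k ∣ A) (hkT : π ^ (2 * k) ∣ T)
    (hnA : π ^ n ∣ A) (hnT : π ^ (2 * n) ∣ T) {J J' : Ideal S}
    (hJ : (J : Set S) = jLattice π η k) (hJ' : (J' : Set S) = jLattice π η n) {α₁ α₂ : S}
    (hα₁ : α₁ ≠ 0) : Ideal.span {α₁} * J ≠ Ideal.span {α₂} * J' := by
  intro h
  obtain ⟨hdet₁, hnorm₁⟩ := norm_mul_pow_dvd_of_span_mul_le e he hη hJ hJ' hnA hnT h.le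
  obtain ⟨hdet₂, hnorm₂⟩ := norm_mul_pow_dvd_of_span_mul_le e he hη hJ' hJ hkA hkT h.ge
  have hnorm : Algebra.norm R α₁ ≠ 0 := mt (Algebra.norm_eq_zero_iff_of_basis e).mp hα₁
  have hassoc : Associated (π ^ k) (π ^ n) := by
    refine .of_mul_of_mul_sq hnorm (pow_ne_zero k hπ.ne_zero)
      (associated_of_dvd_dvd hdet₂ hdet₁) ?_
    simpa only [← pow_mul, mul_comm _ 2] using associated_of_dvd_dvd hnorm₂ hnorm₁
  have hpow := pow_dvd_pow_iff (n := k) (m := n) hπ.ne_zero hπ.not_isUnit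
  have hpow' := pow_dvd_pow_iff (n := n) (m := k) hπ.ne_zero hπ.not_isUnit
  exact hkn (le_antisymm (hpow.mp hassoc.dvd) (hpow'.mp hassoc.symm.dvd))

theorem ne_zero_of_sq_eq_mul_add [IsDomain R] [IsDomain S] (e : Module.Basis (Fin 2) R S)
    (he : ⇑e = ![1, η]) (hη : η ^ 2 = algebraMap R S A * η + algebraMap R S T) : T ≠ 0 := by
  intro hT
  have hnorm := e.norm_algebraMap_add_smul he hη 0 1
  rw [hT, map_zero, one_smul, zero_add] at hnorm
  refine e.ne_zero 1 ?_
  rw [he]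
  exact (Algebra.norm_eq_zero_iff_of_basis e).mp (by simpa using hnorm)

theorem exists_pow_dvd_associated [IsDomain R] [IsDiscreteValuationRing R] (hπ : Irreducible π)
    (hT0 : T ≠ 0) (hTn : π ^ n ∣ T) (hout : ¬(π ^ n ∣ A ∧ π ^ (2 * n) ∣ T)) :
    ∃ (k : ℕ) (m : R), π ^ k ∣ A ∧ π ^ (2 * k) ∣ T ∧ π ^ n ∣ m ∧ π ^ k ∣ m + A ∧
      Associated (π ^ (k + n)) (m * (m + A) - T) := by
  have pow_dvd_unit_mul_pow {u : Rˣ} {j v : ℕ} : π ^ j ∣ u * π ^ v ↔ j ≤ v := by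
    rw [Units.dvd_mul_left, pow_dvd_pow_iff hπ.ne_zero hπ.not_isUnit]
  obtain ⟨w, uT, rfl⟩ := IsDiscreteValuationRing.eq_unit_mul_pow_irreducible hT0 hπ
  have hnw : n ≤ w := pow_dvd_unit_mul_pow.mp hTn
  by_cases hA : π ^ (w - n) ∣ A
  · have hw : w < 2 * n := by
      by_contra! h
      exact hout ⟨(pow_dvd_pow π (by omega)).trans hA, pow_dvd_unit_mul_pow.mpr h⟩
    refine ⟨w - n, 0, hA, pow_dvd_unit_mul_pow.mpr (by omega), dvd_zero _, by simpa using hA, ?_⟩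
    rw [Nat.sub_add_cancel hnw, zero_mul, zero_sub, mul_comm]
    exact (associated_mul_unit_right _ _ uT.isUnit).neg_right
  · have hA0 : A ≠ 0 := by
      rintro rfl
      exact hA (dvd_zero _)
    obtain ⟨s, uA, rfl⟩ := IsDiscreteValuationRing.eq_unit_mul_pow_irreducible hA0 hπ
    have hsw : s < w - n := by
      by_contra! h
      exact hA (pow_dvd_unit_mul_pow.mpr h)
    have hsn : s < n := by
      by_contra! h
      exact hout ⟨pow_dvd_unit_mul_pow.mpr h, pow_dvd_unit_mul_pow.mpr (by omega)⟩
    obtain ⟨i, rfl⟩ := Nat.exists_eq_add_of_lt hsn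
    obtain ⟨j, rfl⟩ : ∃ j, w = s + i + 1 + s + j + 1 := ⟨w - (2 * s + i + 2), by omega⟩
    have hunit := Units.inv_mul uA
    refine ⟨s, π ^ (s + i + 1) * ↑uA⁻¹, pow_dvd_unit_mul_pow.mpr le_rfl,
      pow_dvd_unit_mul_pow.mpr (by omega), dvd_mul_right _ _,
      ⟨π ^ (i + 1) * ↑uA⁻¹ + uA, by ring⟩, ?_⟩
    have hfactor : π ^ (s + i + 1) * ↑uA⁻¹ * (π ^ (s + i + 1) * ↑uA⁻¹ + ↑uA * π ^ s) -
          ↑uT * π ^ (s + i + 1 + s + j + 1) =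
        π ^ (s + (s + i + 1)) * (1 + π * (π ^ i * ↑uA⁻¹ ^ 2 - ↑uT * π ^ j)) := by
      linear_combination π ^ (2 * s + i + 1) * hunit
    rw [hfactor]
    exact associated_mul_unit_right _ _ (IsLocalRing.isUnit_one_add_mul hπ.not_isUnit _)

theorem span_mul_span_pair_eq {S : Type*} [CommRing S] {η A T M M' P Q A' ε : S}
    (hη : η ^ 2 = A * η + T) (hM : M = Q * M') (hMA : M + A = P * A') (hε : IsUnit ε)
    (hN : M * (M + A) - T = P * Q * ε) :
    Ideal.span {P} * Ideal.span {Q, η} = Ideal.span {M + η} * Ideal.span {P, η} := by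
  obtain ⟨ε', hε'⟩ := hε.exists_right_inv
  simp only [Ideal.span_mul_span', Set.singleton_mul, Set.image_pair]
  apply le_antisymm <;>
    simp only [Ideal.span_le, Set.insert_subset_iff, Set.singleton_subset_iff, SetLike.mem_coe,
      Ideal.mem_span_pair]
  -- `(M + η) (P A' - η) = (M + η) (M + A - η) = M (M + A) - T = P Q ε`
  · have hPQ : ε' * A' * ((M + η) * P) + -ε' * ((M + η) * η) = P * Q := by
      linear_combination (-ε' * (M + η)) * hMA - ε' * hη + ε' * hN + P * Q * hε'
    exact ⟨⟨_, _, hPQ⟩, ⟨1 - M' * ε' * A', M' * ε', by linear_combination P * hM - M' * hPQ⟩⟩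
  · exact ⟨⟨M', 1, by linear_combination (-P) * hM⟩,
      ⟨M' * A' - ε, A', by
        linear_combination (-1 : S) * hη + hN - (P * A') * hM - (η + M) * hMA⟩⟩

theorem exists_equiv_jLattice [IsDomain R] [IsDiscreteValuationRing R] [IsDomain S]
    (e : Module.Basis (Fin 2) R S) (he : ⇑e = ![1, η])
    (hη : η ^ 2 = algebraMap R S A * η + algebraMap R S T) (hπ : Irreducible π) {J : Ideal S}
    (hJ : (J : Set S) = jLattice π η n) :
    ∃ (k : ℕ) (J' : Ideal S), π ^ k ∣ A ∧ π ^ (2 * k) ∣ T ∧ (J' : Set S) = jLattice π η k ∧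
      ∃ α₁ α₂ : S, α₁ ≠ 0 ∧ α₂ ≠ 0 ∧ Ideal.span {α₁} * J = Ideal.span {α₂} * J' := by
  by_cases hin : π ^ n ∣ A ∧ π ^ (2 * n) ∣ T
  · exact ⟨n, J, hin.1, hin.2, hJ, 1, 1, one_ne_zero, one_ne_zero, rfl⟩
  obtain ⟨k, m, hkA, hkT, ⟨m', hm'⟩, ⟨A', hA'⟩, ⟨ε, hε⟩⟩ := exists_pow_dvd_associated hπ
    (ne_zero_of_sq_eq_mul_add e he hη) (pow_dvd_of_coe_eq_jLattice e he hη hJ) hin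
  obtain ⟨J', hJ'⟩ := exists_ideal_coe_eq_jLattice e he hη
    ((pow_dvd_pow π (by omega : k ≤ 2 * k)).trans hkT)
  refine ⟨k, J', hkA, hkT, hJ', algebraMap R S (π ^ k), algebraMap R S m + η, fun h => ?_,
    fun h => ?_, ?_⟩
  · exact pow_ne_zero k hπ.ne_zero
      ((e.algebraMap_add_smul_eq_zero_iff he (t := 0)).mp (by simpa using h)).1
  · exact one_ne_zero ((e.algebraMap_add_smul_eq_zero_iff he (t := 1)).mp (by simpa using h)).2
  rw [eq_span_of_coe_eq_jLattice hJ, eq_span_of_coe_eq_jLattice hJ']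
  refine span_mul_span_pair_eq (A' := algebraMap R S A') hη (by rw [hm', map_mul])
    (by rw [← map_add, hA', map_mul]) (ε.isUnit.map (algebraMap R S)) ?_
  rw [← map_add, ← map_mul, ← map_sub, ← hε, pow_add]
  simp only [map_mul]

end DVRQuadratic

namespace AdjoinRoot

variable {R : Type*} [CommRing R]

theorem exists_basis_fin_two {f : R[X]} (hf : f.Monic) (hdeg : f.natDegree = 2) :
    ∃ e : Module.Basis (Fin 2) R (AdjoinRoot f), ⇑e = ![1, root f] := by
  refine ⟨(powerBasis' hf).basis.reindex (finCongr (by rw [powerBasis'_dim, hdeg])), ?_⟩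
  ext i
  fin_cases i <;> simp [Module.Basis.reindex_apply, PowerBasis.coe_basis]

theorem root_sq_of_eq {a b : R} {f : R[X]} (hf : f = X ^ 2 - C a * X - C b) :
    root f ^ 2 = algebraMap R (AdjoinRoot f) a * root f + algebraMap R (AdjoinRoot f) b := by
  have h : mk f (X ^ 2 - C a * X - C b) = 0 := hf ▸ mk_self
  simp only [map_sub, map_mul, map_pow, mk_X, mk_C] at h
  rw [algebraMap_eq]
  linear_combination h

end AdjoinRoot

theorem ideal_classes_J_n_general
    (R : Type*) [CommRing R] [IsDomain R] [IsDiscreteValuationRing R]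
    (K : Type*) [Field K] [Algebra R K]
    (π : R) (hπ : Irreducible π)
    (a b : R) (f : R[X]) (hf : f = X ^ 2 - C a * X - C b)
    (hirr : Irreducible (f.map (algebraMap R K)))
    (θ : R[X] ⧸ Ideal.span {f}) (hθ : θ = Ideal.Quotient.mk (Ideal.span {f}) X)
    (r : R) :
    (∀ (n : ℕ) (J : Ideal (R[X] ⧸ Ideal.span {f})),
      (J : Set (R[X] ⧸ Ideal.span {f})) =
        (Submodule.span R
          {algebraMap R (R[X] ⧸ Ideal.span {f}) (π ^ n),
            algebraMap R (R[X] ⧸ Ideal.span {f}) r + θ} :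
          Submodule R (R[X] ⧸ Ideal.span {f})) →
      ∃ (k : ℕ) (J' : Ideal (R[X] ⧸ Ideal.span {f})),
        π ^ k ∣ (2 * r + a) ∧ π ^ (2 * k) ∣ (b - r * (r + a)) ∧
        (J' : Set (R[X] ⧸ Ideal.span {f})) =
          (Submodule.span R
            {algebraMap R (R[X] ⧸ Ideal.span {f}) (π ^ k),
              algebraMap R (R[X] ⧸ Ideal.span {f}) r + θ} :
            Submodule R (R[X] ⧸ Ideal.span {f})) ∧
        ∃ α₁ α₂ : R[X] ⧸ Ideal.span {f}, α₁ ≠ 0 ∧ α₂ ≠ 0 ∧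
          Ideal.span {α₁} * J = Ideal.span {α₂} * J') ∧
    (∀ k n : ℕ, k ≠ n →
      π ^ k ∣ (2 * r + a) → π ^ (2 * k) ∣ (b - r * (r + a)) →
      π ^ n ∣ (2 * r + a) → π ^ (2 * n) ∣ (b - r * (r + a)) →
      ∀ J J' : Ideal (R[X] ⧸ Ideal.span {f}),
        (J : Set (R[X] ⧸ Ideal.span {f})) =
          (Submodule.span R
            {algebraMap R (R[X] ⧸ Ideal.span {f}) (π ^ k),
              algebraMap R (R[X] ⧸ Ideal.span {f}) r + θ} :
            Submodule R (R[X] ⧸ Ideal.span {f})) →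
        (J' : Set (R[X] ⧸ Ideal.span {f})) =
          (Submodule.span R
            {algebraMap R (R[X] ⧸ Ideal.span {f}) (π ^ n),
              algebraMap R (R[X] ⧸ Ideal.span {f}) r + θ} :
            Submodule R (R[X] ⧸ Ideal.span {f})) →
        ¬ ∃ α₁ α₂ : R[X] ⧸ Ideal.span {f}, α₁ ≠ 0 ∧ α₂ ≠ 0 ∧
            Ideal.span {α₁} * J = Ideal.span {α₂} * J') := by
  subst hθ
  have hmonic : f.Monic := by rw [hf]; monicity!
  have hdeg : f.natDegree = 2 := by rw [hf]; compute_degree!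
  have : IsDomain (AdjoinRoot f) := AdjoinRoot.isDomain_of_prime
    (hmonic.irreducible_of_irreducible_map (algebraMap R K) _ hirr).prime
  obtain ⟨e₀, he₀⟩ := AdjoinRoot.exists_basis_fin_two hmonic hdeg
  obtain ⟨e, he⟩ := e₀.exists_basis_algebraMap_add he₀ r
  have hη : (algebraMap R (AdjoinRoot f) r + AdjoinRoot.root f) ^ 2 =
      algebraMap R _ (2 * r + a) * (algebraMap R _ r + AdjoinRoot.root f) +
        algebraMap R _ (b - r * (r + a)) := by
    simp only [map_add, map_mul, map_sub, map_ofNat]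
    linear_combination AdjoinRoot.root_sq_of_eq hf
  exact ⟨fun n J hJ => DVRQuadratic.exists_equiv_jLattice e he hη hπ hJ,
    fun k n hkn hkA hkT hnA hnT J J' hJ hJ' ⟨α₁, α₂, hα₁, _, h⟩ =>
      DVRQuadratic.span_mul_ne_of_ne e he hη hπ hkn hkA hkT hnA hnT hJ hJ' hα₁ h⟩

/-- Let `R` be a DVR with uniformizer `π` and valuation `v`,
`f(x) = x² − ax − b ∈ R[x]` monic irreducible over the fraction field `K`, `θ` the
class of `x` in `R[θ] := R[x]/(f)`, and fix `r ∈ R`; write `T := b − r(r + a)`.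
Consider the `R`-submodules `J_n := Rπⁿ + R(r + θ)` of `R[θ]` that are ideals of
`R[θ]`. Then every such ideal `J_n` is equivalent to some `J_k` with
`0 ≤ k ≤ min{v(2r + a), ⌊½v(T)⌋}` (i.e. `π^k ∣ 2r + a` and `π^(2k) ∣ T`), and for
distinct `k, n` in this range the corresponding ideals are not equivalent. -/
theorem ideal_classes_J_n
    (R : Type*) [CommRing R] [IsDomain R] [IsDiscreteValuationRing R]
    (K : Type*) [Field K] [Algebra R K] [IsFractionRing R K]
    (π : R) (hπ : Irreducible π)
    (a b : R) (f : R[X]) (hf : f = X ^ 2 - C a * X - C b)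
    (hirr : Irreducible (f.map (algebraMap R K)))
    (θ : R[X] ⧸ Ideal.span {f}) (hθ : θ = Ideal.Quotient.mk (Ideal.span {f}) X)
    (r : R) :
    (∀ (n : ℕ) (J : Ideal (R[X] ⧸ Ideal.span {f})),
      (J : Set (R[X] ⧸ Ideal.span {f})) =
        (Submodule.span R
          {algebraMap R (R[X] ⧸ Ideal.span {f}) (π ^ n),
            algebraMap R (R[X] ⧸ Ideal.span {f}) r + θ} :
          Submodule R (R[X] ⧸ Ideal.span {f})) →
      ∃ (k : ℕ) (J' : Ideal (R[X] ⧸ Ideal.span {f})),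
        π ^ k ∣ (2 * r + a) ∧ π ^ (2 * k) ∣ (b - r * (r + a)) ∧
        (J' : Set (R[X] ⧸ Ideal.span {f})) =
          (Submodule.span R
            {algebraMap R (R[X] ⧸ Ideal.span {f}) (π ^ k),
              algebraMap R (R[X] ⧸ Ideal.span {f}) r + θ} :
            Submodule R (R[X] ⧸ Ideal.span {f})) ∧
        ∃ α₁ α₂ : R[X] ⧸ Ideal.span {f}, α₁ ≠ 0 ∧ α₂ ≠ 0 ∧
          Ideal.span {α₁} * J = Ideal.span {α₂} * J') ∧
    (∀ k n : ℕ, k ≠ n →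
      π ^ k ∣ (2 * r + a) → π ^ (2 * k) ∣ (b - r * (r + a)) →
      π ^ n ∣ (2 * r + a) → π ^ (2 * n) ∣ (b - r * (r + a)) →
      ∀ J J' : Ideal (R[X] ⧸ Ideal.span {f}),
        (J : Set (R[X] ⧸ Ideal.span {f})) =
          (Submodule.span R
            {algebraMap R (R[X] ⧸ Ideal.span {f}) (π ^ k),
              algebraMap R (R[X] ⧸ Ideal.span {f}) r + θ} :
            Submodule R (R[X] ⧸ Ideal.span {f})) →
        (J' : Set (R[X] ⧸ Ideal.span {f})) =
          (Submodule.span R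
            {algebraMap R (R[X] ⧸ Ideal.span {f}) (π ^ n),
              algebraMap R (R[X] ⧸ Ideal.span {f}) r + θ} :
            Submodule R (R[X] ⧸ Ideal.span {f})) →
        ¬ ∃ α₁ α₂ : R[X] ⧸ Ideal.span {f}, α₁ ≠ 0 ∧ α₂ ≠ 0 ∧
            Ideal.span {α₁} * J = Ideal.span {α₂} * J') :=
  ideal_classes_J_n_general R K π hπ a b f hf hirr θ hθ r
end

section
/- Let R be a discrete valuation ring with uniformizer π in which 2 is a unit, let f(x) = x² − ax − b ∈ R[x] be monic irreducible over the fraction field K, and let θ be the class of x in R[θ] := R[x]/(f). Then every nonzero ideal of R[θ] is equivalent to an ideal of the form Rπᵏ + R(θ − a/2) for some integer k ≥ 0 (for which this R-submodule is an ideal of R[θ]). -/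
/-!
Put `δ = θ - a/2`, so that `δ² = D := b + (a/2)²`, `R[θ] = R ⊕ Rδ`, and `D` is not a square in `R`
because `f` has no root in `K`. For a nonzero ideal `J`, the contraction `J ∩ R = (πⁿ)` and the
ideal `(πᵐ)` of `δ`-coordinates of `J` give the Hermite form `J = πᵐ (Rπᵏ + R(c + δ))` with
`πᵏ ∣ D - c²`. Replacing `c` modulo `πᵏ` by `g = 0`, `c` or `c + πᵏ` (the last choice needs `2` to be
a unit) gives `D - g² ~ πˢ⁺ᵏ` with `πˢ ∣ g`; since `(g + δ)(δ - g) = D - g²`, then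
`(g + δ)(Rπˢ + Rδ) = πˢ (Rπᵏ + R(g + δ))`.
-/

open Polynomial

theorem Ideal.span_singleton_mul_span_pair {S : Type*} [CommRing S] (a x y : S) :
    Ideal.span {a} * Ideal.span {x, y} = Ideal.span {a * x, a * y} := by
  rw [Ideal.span_mul_span', Set.singleton_mul, Set.image_pair]

section DVR

variable {R : Type*} [CommRing R] [IsDomain R] [IsDiscreteValuationRing R] {π : R}

theorem associated_sub_mul_self_add_pow (hπ : Irreducible π) (h2 : IsUnit (2 : R))
    {D c : R} {j k n : ℕ} (e e₂ : Rˣ) (hc : c = e * π ^ j) (hn : D - c * c = e₂ * π ^ n)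
    (hjk : j < k) (hjkn : j + k < n) :
    Associated (π ^ j * π ^ k) (D - (c + π ^ k) * (c + π ^ k)) := by
  obtain ⟨p, rfl⟩ := Nat.exists_eq_add_of_lt hjkn
  obtain ⟨q, rfl⟩ := Nat.exists_eq_add_of_lt hjk
  set y := e₂ * π ^ p - π ^ q
  -- the middle term `2 c π ^ k` of `(c + π ^ k) ^ 2` has strictly the smallest valuation
  have hW : IsUnit (π * y - 2 * e) := by
    refine (IsLocalRing.isUnit_or_isUnit_of_isUnit_add (a := π * y - 2 * e) (b := -(π * y))
      (by convert (h2.mul e.isUnit).neg using 1; ring)).resolve_right fun h => ?_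
    exact hπ.not_isUnit (isUnit_of_mul_isUnit_left ((IsUnit.neg_iff _).1 h))
  refine ⟨hW.unit, ?_⟩
  rw [IsUnit.unit_spec]
  linear_combination (-1 : R) * hn + (2 * π ^ (j + q + 1)) * hc

theorem exists_associated_sub_mul_self (hπ : Irreducible π) (h2 : IsUnit (2 : R)) {D c : R}
    {k : ℕ} (hD : ∀ x : R, x * x ≠ D) (hk : π ^ k ∣ D - c * c) :
    ∃ g : R, ∃ s : ℕ,
      π ^ k ∣ g - c ∧ π ^ s ∣ g ∧ Associated (π ^ s * π ^ k) (D - g * g) := by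
  by_cases hck : π ^ k ∣ c
  · obtain ⟨N, hN⟩ := IsDiscreteValuationRing.associated_pow_irreducible
      (show D ≠ 0 from fun h => hD 0 (by rw [h, mul_zero])) hπ
    have hkN : π ^ k ∣ π ^ N :=
      hN.dvd_iff_dvd_right.1 (by simpa using dvd_add hk (hck.mul_left c))
    obtain ⟨s, rfl⟩ :=
      Nat.exists_eq_add_of_le ((pow_dvd_pow_iff hπ.ne_zero hπ.not_isUnit).1 hkN)
    refine ⟨0, s, by simpa using hck, dvd_zero _, ?_⟩
    simpa [← pow_add, add_comm] using hN.symm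
  obtain ⟨j, e, hc⟩ := IsDiscreteValuationRing.eq_unit_mul_pow_irreducible
    (show c ≠ 0 from fun h => hck (h ▸ dvd_zero _)) hπ
  have hjk : j < k := by
    by_contra! h
    exact hck (hc ▸ (pow_dvd_pow π h).mul_left _)
  obtain ⟨n, e₂, hn⟩ := IsDiscreteValuationRing.eq_unit_mul_pow_irreducible
    (sub_ne_zero.2 (hD c).symm) hπ
  have hkn : k ≤ n := by
    rw [hn, Units.dvd_mul_left, pow_dvd_pow_iff hπ.ne_zero hπ.not_isUnit] at hk
    exact hk
  by_cases hnjk : n ≤ j + k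
  · refine ⟨c, n - k, by simp, hc ▸ (pow_dvd_pow π (by omega)).mul_left _, ?_⟩
    rw [← pow_add, Nat.sub_add_cancel hkn, hn]
    exact ⟨e₂, mul_comm _ _⟩
  · exact ⟨c + π ^ k, j, by simp, dvd_add (hc ▸ dvd_mul_left _ _) (pow_dvd_pow π hjk.le),
      associated_sub_mul_self_add_pow hπ h2 e e₂ hc hn hjk (by omega)⟩

end DVR

section SqrtBasis

variable {R S : Type*} [CommRing R] [CommRing S] [Algebra R S]

structure IsSqrtBasis (δ : S) (D : R) : Prop where
  mul_self : δ * δ = algebraMap R S D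
  exists_eq : ∀ z : S, ∃ r s : R, z = algebraMap R S r + algebraMap R S s * δ
  eq_zero_of_add_eq_zero :
    ∀ r s : R, algebraMap R S r + algebraMap R S s * δ = 0 → r = 0 ∧ s = 0

def coeffIdeal (δ : S) (J : Ideal S) : Ideal R where
  carrier := {s | ∃ r : R, algebraMap R S r + algebraMap R S s * δ ∈ J}
  add_mem' := by
    rintro s₁ s₂ ⟨r₁, h₁⟩ ⟨r₂, h₂⟩
    refine ⟨r₁ + r₂, ?_⟩
    simpa only [map_add, add_mul, add_add_add_comm] using J.add_mem h₁ h₂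
  zero_mem' := ⟨0, by simp⟩
  smul_mem' := by
    rintro t s ⟨r, h⟩
    refine ⟨t * r, ?_⟩
    simpa only [smul_eq_mul, map_mul, mul_add, mul_assoc] using J.mul_mem_left (algebraMap R S t) h

theorem comap_le_coeffIdeal (δ : S) (J : Ideal S) : J.comap (algebraMap R S) ≤ coeffIdeal δ J :=
  fun s hs => ⟨0, by simpa using J.mul_mem_right δ hs⟩

theorem span_add_mul_span_pair {δ : S} {D g e d : R} (hδ : δ * δ = algebraMap R S D)
    (he : e ∣ g) (hD : Associated (e * d) (D - g * g)) :
    Ideal.span {algebraMap R S g + δ} * Ideal.span {algebraMap R S e, δ} =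
      Ideal.span {algebraMap R S e} * Ideal.span {algebraMap R S d, algebraMap R S g + δ} := by
  obtain ⟨g₁, rfl⟩ := he
  obtain ⟨u, hu⟩ := hD
  have hu' := congrArg (algebraMap R S) hu
  have hu₁ : algebraMap R S ↑u⁻¹ * algebraMap R S ↑u = 1 := by
    rw [← map_mul, Units.inv_mul, map_one]
  simp only [map_mul, map_sub] at hu'
  rw [Ideal.span_singleton_mul_span_pair, Ideal.span_singleton_mul_span_pair]
  apply le_antisymm <;> refine Ideal.span_le.2 (Set.pair_subset ?_ ?_) <;>
    refine Ideal.mem_span_pair.2 ?_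
  · exact ⟨0, 1, by ring⟩
  · refine ⟨algebraMap R S u, algebraMap R S g₁, ?_⟩
    simp only [map_mul]
    linear_combination hu' - hδ
  · refine ⟨-(algebraMap R S ↑u⁻¹ * algebraMap R S g₁), algebraMap R S ↑u⁻¹, ?_⟩
    simp only [map_mul]
    linear_combination algebraMap R S ↑u⁻¹ * hδ - algebraMap R S ↑u⁻¹ * hu' +
      algebraMap R S e * algebraMap R S d * hu₁
  · exact ⟨1, 0, by ring⟩

namespace IsSqrtBasis

variable {δ : S} {D : R}

theorem algebraMap_injective (hδ : IsSqrtBasis δ D) : Function.Injective (algebraMap R S) :=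
  (injective_iff_map_eq_zero _).2 fun r hr => (hδ.eq_zero_of_add_eq_zero r 0 (by simp [hr])).1

theorem algebraMap_add_ne_zero [Nontrivial R] (hδ : IsSqrtBasis δ D) (g : R) :
    algebraMap R S g + δ ≠ 0 :=
  fun h => one_ne_zero (hδ.eq_zero_of_add_eq_zero g 1 (by simpa using h)).2

theorem coe_span_pair (hδ : IsSqrtBasis δ D) {d g : R} (hd : d ∣ D - g * g) :
    (Ideal.span {algebraMap R S d, algebraMap R S g + δ} : Set S) =
      Submodule.span R {algebraMap R S d, algebraMap R S g + δ} := by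
  set M := Submodule.span R {algebraMap R S d, algebraMap R S g + δ}
  obtain ⟨q, hq⟩ := hd
  have hδM : M ≤ M.comap (LinearMap.mulLeft R δ) := by
    refine Submodule.span_le.2 (Set.pair_subset ?_ ?_) <;> refine Submodule.mem_span_pair.2 ?_
    · refine ⟨-g, d, ?_⟩
      simp only [Algebra.smul_def, LinearMap.mulLeft_apply, map_neg]
      ring
    · refine ⟨q, g, ?_⟩
      have := congrArg (algebraMap R S) hq
      simp only [map_sub, map_mul] at this
      simp only [Algebra.smul_def, LinearMap.mulLeft_apply]
      linear_combination -hδ.mul_self - this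
  refine le_antisymm (fun x hx => ?_) (Submodule.span_le_restrictScalars R S _)
  refine Submodule.span_induction (fun y hy => Submodule.subset_span hy) M.zero_mem
    (fun _ _ _ _ => M.add_mem) (fun z y _ hy => ?_) hx
  obtain ⟨r, s, rfl⟩ := hδ.exists_eq z
  rw [smul_eq_mul, add_mul, mul_assoc, ← Algebra.smul_def, ← Algebra.smul_def]
  exact M.add_mem (M.smul_mem r hy) (M.smul_mem s (hδM hy))

theorem eq_span_of_comap_eq (hδ : IsSqrtBasis δ D) {J : Ideal S} {a e c : R}
    (ha : J.comap (algebraMap R S) = Ideal.span {a}) (he : coeffIdeal δ J = Ideal.span {e})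
    (hc : algebraMap R S c + algebraMap R S e * δ ∈ J) :
    J = Ideal.span {algebraMap R S a, algebraMap R S c + algebraMap R S e * δ} := by
  have haJ : algebraMap R S a ∈ J := by
    rw [← Ideal.mem_comap, ha]; exact Ideal.mem_span_singleton_self a
  refine le_antisymm (fun x hx => ?_) (Ideal.span_le.2 (Set.pair_subset haJ hc))
  obtain ⟨r, s, rfl⟩ := hδ.exists_eq x
  obtain ⟨t, rfl⟩ : e ∣ s := by
    rw [← Ideal.mem_span_singleton, ← he]; exact ⟨r, hx⟩
  obtain ⟨u, hu⟩ : a ∣ r - t * c := by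
    rw [← Ideal.mem_span_singleton, ← ha, Ideal.mem_comap]
    convert J.sub_mem hx (J.mul_mem_left (algebraMap R S t) hc) using 1
    simp only [map_sub, map_mul]; ring
  refine Ideal.mem_span_pair.2 ⟨algebraMap R S u, algebraMap R S t, ?_⟩
  rw [show r = a * u + t * c by linear_combination hu]
  simp only [map_add, map_mul]; ring

theorem comap_ne_bot [IsDomain S] (hδ : IsSqrtBasis δ D) {J : Ideal S} (hJ : J ≠ ⊥) :
    J.comap (algebraMap R S) ≠ ⊥ := by
  obtain ⟨ξ, hξ, hξ0⟩ := Submodule.exists_mem_ne_zero_of_ne_bot hJ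
  obtain ⟨r, s, rfl⟩ := hδ.exists_eq ξ
  have hnorm : algebraMap R S (r * r - D * (s * s)) =
      (algebraMap R S r + algebraMap R S s * δ) *
        (algebraMap R S r + algebraMap R S (-s) * δ) := by
    simp only [map_sub, map_mul, map_neg]
    linear_combination (algebraMap R S s * algebraMap R S s) * hδ.mul_self
  have hconj : algebraMap R S r + algebraMap R S (-s) * δ ≠ 0 := by
    intro h
    obtain ⟨rfl, hs⟩ := hδ.eq_zero_of_add_eq_zero _ _ h
    exact hξ0 (by simp [neg_eq_zero.1 hs])
  intro hbot
  have hmem : r * r - D * (s * s) ∈ J.comap (algebraMap R S) := by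
    rw [Ideal.mem_comap, hnorm]; exact J.mul_mem_right _ hξ
  rw [hbot, Ideal.mem_bot] at hmem
  exact mul_ne_zero hξ0 hconj (by rw [← hnorm, hmem, map_zero])

theorem exists_eq_span_mul [IsDomain R] [IsDiscreteValuationRing R] [IsDomain S]
    (hδ : IsSqrtBasis δ D) {π : R} (hπ : Irreducible π) {J : Ideal S} (hJ : J ≠ ⊥) :
    ∃ m k : ℕ, ∃ c : R, π ^ k ∣ D - c * c ∧
      J = Ideal.span {algebraMap R S (π ^ m)} *
        Ideal.span {algebraMap R S (π ^ k), algebraMap R S c + δ} := by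
  have hcomap_ne := hδ.comap_ne_bot hJ
  obtain ⟨n, hn⟩ := IsDiscreteValuationRing.ideal_eq_span_pow_irreducible hcomap_ne hπ
  obtain ⟨m, hm⟩ := IsDiscreteValuationRing.ideal_eq_span_pow_irreducible
    (fun h => hcomap_ne (eq_bot_iff.2 (h ▸ comap_le_coeffIdeal δ J))) hπ
  have hcomap (r : R) : algebraMap R S r ∈ J ↔ π ^ n ∣ r := by
    rw [← Ideal.mem_comap, hn, Ideal.mem_span_singleton]
  have hcoeff (s : R) : s ∈ coeffIdeal δ J ↔ π ^ m ∣ s := by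
    rw [hm, Ideal.mem_span_singleton]
  obtain ⟨c, hc⟩ := (hcoeff _).2 dvd_rfl
  obtain ⟨c₀, rfl⟩ : π ^ m ∣ c := by
    refine (hcoeff c).1 ⟨π ^ m * D, ?_⟩
    convert J.mul_mem_right δ hc using 1
    simp only [map_mul]; linear_combination (-algebraMap R S (π ^ m)) * hδ.mul_self
  obtain ⟨k, rfl⟩ : ∃ k, n = m + k := by
    refine Nat.exists_eq_add_of_le ((pow_dvd_pow_iff hπ.ne_zero hπ.not_isUnit).1 ?_)
    exact (hcoeff _).1 (comap_le_coeffIdeal δ J (hn ▸ Ideal.mem_span_singleton_self _))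
  have hk : π ^ k ∣ D - c₀ * c₀ := by
    have hmem : algebraMap R S (π ^ m * (D - c₀ * c₀)) ∈ J := by
      convert J.mul_mem_right (δ - algebraMap R S c₀) hc using 1
      simp only [map_mul, map_sub]; linear_combination (-algebraMap R S (π ^ m)) * hδ.mul_self
    rw [hcomap, pow_add] at hmem
    exact (mul_dvd_mul_iff_left (pow_ne_zero m hπ.ne_zero)).1 hmem
  refine ⟨m, k, c₀, hk, ?_⟩
  rw [hδ.eq_span_of_comap_eq hn hm hc, Ideal.span_singleton_mul_span_pair]
  simp only [pow_add, map_mul, mul_add]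

theorem exists_span_mul_eq_span_mul [IsDomain R] [IsDiscreteValuationRing R] [IsDomain S]
    (hδ : IsSqrtBasis δ D) {π : R} (hπ : Irreducible π) (h2 : IsUnit (2 : R))
    (hD : ∀ x : R, x * x ≠ D) {J : Ideal S} (hJ : J ≠ ⊥) :
    ∃ s : ℕ, ∃ α₁ α₂ : S, π ^ s ∣ D ∧ α₁ ≠ 0 ∧ α₂ ≠ 0 ∧
      Ideal.span {α₁} * J = Ideal.span {α₂} * Ideal.span {algebraMap R S (π ^ s), δ} := by
  obtain ⟨m, k, c, hk, rfl⟩ := hδ.exists_eq_span_mul hπ hJ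
  obtain ⟨g, s, ⟨t, ht⟩, hsg, hassoc⟩ := exists_associated_sub_mul_self hπ h2 hD hk
  have hL : Ideal.span {algebraMap R S (π ^ k), algebraMap R S c + δ} =
      Ideal.span {algebraMap R S (π ^ k), algebraMap R S g + δ} := by
    have hg : algebraMap R S g + δ =
        algebraMap R S c + δ + algebraMap R S t * algebraMap R S (π ^ k) := by
      rw [← map_mul, mul_comm, ← ht, map_sub]; ring
    rw [hg, Ideal.span_pair_add_mul_left]
  have hpow_ne (i : ℕ) : algebraMap R S (π ^ i) ≠ 0 :=
    (map_ne_zero_iff _ hδ.algebraMap_injective).2 (pow_ne_zero i hπ.ne_zero)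
  refine ⟨s, algebraMap R S (π ^ s), algebraMap R S (π ^ m) * (algebraMap R S g + δ),
    by simpa using dvd_add ((dvd_mul_right _ _).trans hassoc.dvd) (hsg.mul_left g),
    hpow_ne s, mul_ne_zero (hpow_ne m) (hδ.algebraMap_add_ne_zero g), ?_⟩
  rw [hL, mul_left_comm, ← span_add_mul_span_pair hδ.mul_self hsg hassoc, ← mul_assoc,
    Ideal.span_singleton_mul_span_singleton]

end IsSqrtBasis

end SqrtBasis

section Quadratic

variable {R : Type*} [CommRing R]

theorem isSqrtBasis_sub_algebraMap {S : Type*} [CommRing S] [Algebra R S] {θ : S} {a b h : R}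
    (hθ : θ * θ = algebraMap R S a * θ + algebraMap R S b) (hh : 2 * h = a)
    (hrep : ∀ z : S, ∃ r s : R, z = algebraMap R S r + algebraMap R S s * θ)
    (huniq : ∀ r s : R, algebraMap R S r + algebraMap R S s * θ = 0 → r = 0 ∧ s = 0) :
    IsSqrtBasis (θ - algebraMap R S h) (b + h * h) where
  mul_self := by
    rw [← hh] at hθ
    simp only [map_add, map_mul, map_ofNat] at hθ ⊢
    linear_combination hθ
  exists_eq z := by
    obtain ⟨r, s, rfl⟩ := hrep z
    exact ⟨r + s * h, s, by simp only [map_add, map_mul]; ring⟩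
  eq_zero_of_add_eq_zero r s hrs := by
    obtain ⟨hr, rfl⟩ := huniq (r - s * h) s (by
      simp only [map_sub, map_mul]
      linear_combination hrs)
    simpa using hr

theorem mul_self_ne_of_irreducible_map {K : Type*} [Field K] [Algebra R K] {a b h : R}
    (hh : 2 * h = a) (hirr : Irreducible ((X ^ 2 - C a * X - C b).map (algebraMap R K)))
    (x : R) : x * x ≠ b + h * h := by
  intro hx
  have hroot : IsRoot (X ^ 2 - C a * X - C b) (h + x) := by
    simp only [IsRoot, eval_sub, eval_pow, eval_mul, eval_X, eval_C]
    linear_combination hx + (h + x) * hh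
  have hdeg : ((X ^ 2 - C a * X - C b).map (algebraMap R K)).degree = 2 := by
    simp only [Polynomial.map_sub, Polynomial.map_mul, Polynomial.map_pow, map_X, map_C]
    compute_degree!
  have := degree_eq_one_of_irreducible_of_root hirr (hroot.map (f := algebraMap R K))
  rw [hdeg] at this
  exact absurd this (by decide)

theorem monic_X_pow_two_sub (a b : R) : (X ^ 2 - C a * X - C b : R[X]).Monic := by
  monicity!

variable {f : R[X]}

theorem exists_eq_algebraMap_add_mul_mk_X (hf : f.Monic) (hdeg : f.natDegree = 2)
    (z : R[X] ⧸ Ideal.span {f}) :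
    ∃ r s : R, z = algebraMap R _ r + algebraMap R _ s * Ideal.Quotient.mk _ X := by
  obtain ⟨p, rfl⟩ := Ideal.Quotient.mk_surjective z
  have hmod : Ideal.Quotient.mk (Ideal.span {f}) (p %ₘ f) = Ideal.Quotient.mk _ p :=
    (AdjoinRoot.modByMonicHom_mk hf p ▸ AdjoinRoot.mk_leftInverse hf _ :)
  have hlin := eq_X_add_C_of_natDegree_le_one (p := p %ₘ f)
    (by have := natDegree_modByMonic_lt p hf (by rintro rfl; simp at hdeg); omega)
  refine ⟨(p %ₘ f).coeff 0, (p %ₘ f).coeff 1, ?_⟩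
  rw [← hmod]
  nth_rw 1 [hlin]
  simp only [map_add, map_mul, add_comm]
  rfl

theorem eq_zero_of_algebraMap_add_mul_mk_X_eq_zero (hf : f.Monic) (hdeg : f.natDegree = 2)
    {r s : R} (h : algebraMap R (R[X] ⧸ Ideal.span {f}) r +
      algebraMap R _ s * Ideal.Quotient.mk _ X = 0) : r = 0 ∧ s = 0 := by
  have hdvd : f ∣ C r + C s * X := by
    rw [← Ideal.mem_span_singleton, ← Ideal.Quotient.eq_zero_iff_mem, ← h]
    simp only [map_add, map_mul]
    rfl
  have hzero : C r + C s * X = 0 := by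
    by_contra hne
    refine hf.not_dvd_of_natDegree_lt hne ?_ hdvd
    rw [hdeg]
    have : (C r + C s * X).natDegree ≤ 1 := by compute_degree
    omega
  exact ⟨by simpa using congrArg (coeff · 0) hzero, by simpa using congrArg (coeff · 1) hzero⟩

theorem isSqrtBasis_mk_X_sub [Nontrivial R] {a b h : R} (hh : 2 * h = a) :
    IsSqrtBasis (Ideal.Quotient.mk (Ideal.span {X ^ 2 - C a * X - C b}) X - algebraMap R _ h)
      (b + h * h) := by
  have hdeg : (X ^ 2 - C a * X - C b : R[X]).natDegree = 2 := by compute_degree!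
  refine isSqrtBasis_sub_algebraMap ?_ hh
    (exists_eq_algebraMap_add_mul_mk_X (monic_X_pow_two_sub a b) hdeg)
    (fun _ _ => eq_zero_of_algebraMap_add_mul_mk_X_eq_zero (monic_X_pow_two_sub a b) hdeg)
  have := Ideal.Quotient.mk_singleton_self (X ^ 2 - C a * X - C b : R[X])
  simp only [map_sub, map_mul, map_pow] at this
  linear_combination this

end Quadratic

theorem ideal_classes_two_unit_general
    (R : Type*) [CommRing R] [IsDomain R] [IsDiscreteValuationRing R]
    (K : Type*) [Field K] [Algebra R K]
    (π : R) (hπ : Irreducible π) (h2 : IsUnit (2 : R))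
    (a b : R) (f : R[X]) (hf : f = X ^ 2 - C a * X - C b)
    (hirr : Irreducible (f.map (algebraMap R K)))
    (θ : R[X] ⧸ Ideal.span {f}) (hθ : θ = Ideal.Quotient.mk (Ideal.span {f}) X) :
    ∀ J : Ideal (R[X] ⧸ Ideal.span {f}), J ≠ ⊥ →
      ∃ (k : ℕ) (J' : Ideal (R[X] ⧸ Ideal.span {f})),
        (J' : Set (R[X] ⧸ Ideal.span {f})) =
          (Submodule.span R
            {algebraMap R (R[X] ⧸ Ideal.span {f}) (π ^ k),
              θ - algebraMap R (R[X] ⧸ Ideal.span {f}) (Ring.inverse 2 * a)} :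
            Submodule R (R[X] ⧸ Ideal.span {f})) ∧
        ∃ α₁ α₂ : R[X] ⧸ Ideal.span {f}, α₁ ≠ 0 ∧ α₂ ≠ 0 ∧
          Ideal.span {α₁} * J = Ideal.span {α₂} * J' := by
  subst hf hθ
  have hh : 2 * (Ring.inverse 2 * a) = a := by
    rw [← mul_assoc, Ring.mul_inverse_cancel _ h2, one_mul]
  have : IsDomain (R[X] ⧸ Ideal.span {X ^ 2 - C a * X - C b}) :=
    AdjoinRoot.isDomain_of_prime (UniqueFactorizationMonoid.irreducible_iff_prime.1
      ((monic_X_pow_two_sub a b).irreducible_of_irreducible_map _ _ hirr))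
  have hδ := isSqrtBasis_mk_X_sub (R := R) (b := b) hh
  intro J hJ
  obtain ⟨s, α₁, α₂, hsD, hα₁, hα₂, hJ'⟩ :=
    hδ.exists_span_mul_eq_span_mul hπ h2 (mul_self_ne_of_irreducible_map hh hirr) hJ
  have hcoe := hδ.coe_span_pair (d := π ^ s) (g := 0) (by rwa [mul_zero, sub_zero])
  rw [map_zero, zero_add] at hcoe
  exact ⟨s, _, hcoe, α₁, α₂, hα₁, hα₂, hJ'⟩

/-- Let `R` be a DVR with uniformizer `π` in which `2` is a unit,
`f(x) = x² − ax − b ∈ R[x]` monic irreducible over the fraction field `K`, and `θ` the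
class of `x` in `R[θ] := R[x]/(f)`. Then every nonzero ideal of `R[θ]` is equivalent
to an ideal of the form `Rπᵏ + R(θ − a/2)` for some `k ≥ 0`. -/
theorem ideal_classes_two_unit
    (R : Type*) [CommRing R] [IsDomain R] [IsDiscreteValuationRing R]
    (K : Type*) [Field K] [Algebra R K] [IsFractionRing R K]
    (π : R) (hπ : Irreducible π) (h2 : IsUnit (2 : R))
    (a b : R) (f : R[X]) (hf : f = X ^ 2 - C a * X - C b)
    (hirr : Irreducible (f.map (algebraMap R K)))
    (θ : R[X] ⧸ Ideal.span {f}) (hθ : θ = Ideal.Quotient.mk (Ideal.span {f}) X) :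
    ∀ J : Ideal (R[X] ⧸ Ideal.span {f}), J ≠ ⊥ →
      ∃ (k : ℕ) (J' : Ideal (R[X] ⧸ Ideal.span {f})),
        (J' : Set (R[X] ⧸ Ideal.span {f})) =
          (Submodule.span R
            {algebraMap R (R[X] ⧸ Ideal.span {f}) (π ^ k),
              θ - algebraMap R (R[X] ⧸ Ideal.span {f}) (Ring.inverse 2 * a)} :
            Submodule R (R[X] ⧸ Ideal.span {f})) ∧
        ∃ α₁ α₂ : R[X] ⧸ Ideal.span {f}, α₁ ≠ 0 ∧ α₂ ≠ 0 ∧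
          Ideal.span {α₁} * J = Ideal.span {α₂} * J' :=
  ideal_classes_two_unit_general R K π hπ h2 a b f hf hirr θ hθ
end

section
/- Let R be a discrete valuation ring with uniformizer π and valuation v, with v(2) = e > 0, and let f(x) = x² − ax − b ∈ R[x] be monic irreducible over the fraction field K with v(a) ≥ e. Write Δ := a²/4 + b ∈ R and let θ be the class of x in R[θ] := R[x]/(f). If v(Δ) is odd, then every nonzero ideal of R[θ] is equivalent to exactly one of the ideals Rπᵏ + R(θ − a/2) with 0 ≤ k ≤ ⌊½v(Δ)⌋; in particular the set of equivalence classes of nonzero ideals of R[θ] has cardinality ⌊½v(Δ)⌋ + 1. -/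
open Polynomial QuadraticAlgebra

/-
With `η = θ - a/2` we have `η² = Δ`, so `R[θ]` is the quadratic algebra `R[ω]`, `ω² = Δ`, and
the ideals of the statement become `I_k = (π^k, ω)`. Since `v(Δ)` is odd, `x² - Δy²` vanishes
only at `0`, so `R[ω]` is a domain and every nonzero ideal contains a nonzero element of `R`;
as `R` is a principal ideal domain, such an ideal is then `g · (dR + (c + ω)R)` with
`d ∣ Δ - c²`. Multiplying by the conjugate `c - ω` turns `(d, c)` into `((Δ - c²)/d, -c)`, and
`v(Δ - c²) = min (2 v(c)) (v(Δ))` by parity; after at most two such steps `c = 0` and `d = π^k`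
with `k ≤ v(Δ)/2`. To separate the `I_k`, multiply a relation `α I_k = β I_l` by its conjugate
and use `I_k² = π^k I_k`: this gives `N(α) π^k I_k = N(β) π^l I_l` with both norms in `R`, and
comparing the `ω`-coordinates and the parts in `R` of both sides forces `k = l`.
-/

namespace Ideal
variable {S T : Type*} [CommRing S] [CommRing T]

def Equivalent (J₁ J₂ : Ideal S) : Prop :=
  ∃ α₁ α₂ : S, α₁ ≠ 0 ∧ α₂ ≠ 0 ∧ span {α₁} * J₁ = span {α₂} * J₂

namespace Equivalent

theorem refl [Nontrivial S] (J : Ideal S) : J.Equivalent J :=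
  ⟨1, 1, one_ne_zero, one_ne_zero, rfl⟩

theorem symm {J₁ J₂ : Ideal S} : J₁.Equivalent J₂ → J₂.Equivalent J₁ :=
  fun ⟨α₁, α₂, h₁, h₂, h⟩ => ⟨α₂, α₁, h₂, h₁, h.symm⟩

theorem trans [NoZeroDivisors S] {J₁ J₂ J₃ : Ideal S} :
    J₁.Equivalent J₂ → J₂.Equivalent J₃ → J₁.Equivalent J₃ := by
  rintro ⟨α₁, α₂, h₁, h₂, h⟩ ⟨β₂, β₃, g₂, g₃, g⟩
  refine ⟨β₂ * α₁, α₂ * β₃, mul_ne_zero g₂ h₁, mul_ne_zero h₂ g₃, ?_⟩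
  rw [← span_singleton_mul_span_singleton, ← span_singleton_mul_span_singleton, mul_assoc, h,
    mul_left_comm, g, mul_assoc]

theorem span_singleton_mul_left [Nontrivial S] {x : S} (hx : x ≠ 0) (J : Ideal S) :
    (span {x} * J).Equivalent J :=
  ⟨1, x, one_ne_zero, hx, by rw [span_singleton_one, top_mul]⟩

theorem equivalence [IsDomain S] : Equivalence (Equivalent (S := S)) :=
  ⟨refl, symm, trans⟩

variable {F : Type*} [EquivLike F S T] [RingEquivClass F S T] (e : F) {J₁ J₂ : Ideal S}

theorem map (h : J₁.Equivalent J₂) : (J₁.map e).Equivalent (J₂.map e) := by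
  obtain ⟨α₁, α₂, h₁, h₂, h⟩ := h
  refine ⟨e α₁, e α₂, by simpa using h₁, by simpa using h₂, ?_⟩
  simpa only [Ideal.map_mul, Ideal.map_span, Set.image_singleton] using congrArg (Ideal.map e) h

theorem map_iff : (J₁.map e).Equivalent (J₂.map e) ↔ J₁.Equivalent J₂ := by
  refine ⟨fun h => ?_, map e⟩
  have map_symm_map (J : Ideal S) : (J.map e).map (RingEquivClass.toRingEquiv e).symm = J :=
    Ideal.map_of_equiv (RingEquivClass.toRingEquiv e)
  simpa only [map_symm_map] using h.map (RingEquivClass.toRingEquiv e).symm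

theorem comap_iff {J : Ideal S} {I : Ideal T} :
    J.Equivalent (I.comap e) ↔ (J.map e).Equivalent I := by
  rw [← map_iff e, Ideal.map_comap_of_surjective _ (EquivLike.surjective e)]

end Equivalent
end Ideal

theorem Nat.card_quot_of_existsUnique {α : Type*} {r : α → α → Prop} (hr : Equivalence r)
    {n : ℕ} (x : ℕ → α) (h : ∀ a, ∃! k, k < n ∧ r a (x k)) : Nat.card (Quot r) = n := by
  let F : Fin n → Quot r := fun k => Quot.mk r (x k)
  have hF : F.Bijective := by
    refine ⟨fun k l hkl => Fin.ext ?_, fun q => ?_⟩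
    · have hkl : r (x k) (x l) := hr.eqvGen_iff.mp (Quot.eqvGen_exact hkl)
      exact (h (x k)).unique ⟨k.2, hr.refl _⟩ ⟨l.2, hkl⟩
    · obtain ⟨a, rfl⟩ := Quot.exists_rep q
      obtain ⟨k, ⟨hk, hak⟩, -⟩ := h a
      exact ⟨⟨k, hk⟩, Quot.sound (hr.symm hak)⟩
  rw [← Nat.card_eq_of_bijective F hF, Nat.card_fin]

theorem Irreducible.pow_dvd_iff_le_of_associated {M : Type*} [CommMonoidWithZero M]
    [IsCancelMulZero M] {π x : M} (hπ : Irreducible π) {n p : ℕ} (hx : Associated x (π ^ p)) :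
    π ^ n ∣ x ↔ n ≤ p :=
  hx.dvd_iff_dvd_right.trans (pow_dvd_pow_iff hπ.ne_zero hπ.not_isUnit)

section OddValuation
variable {R : Type*} [CommRing R] [IsDomain R] {π : R} (hπ : Irreducible π) {Δ : R} {m : ℕ}
  (hΔ : Associated (π ^ m) Δ) (hm : Odd m)
include hπ hΔ hm

theorem not_pow_dvd_sub_sq {c : R} {p : ℕ} (hc : Associated c (π ^ p)) :
    ¬ π ^ (2 * p + 1) ∣ Δ - c ^ 2 := by
  intro h
  have hc2 : Associated (c ^ 2) (π ^ (2 * p)) := by rw [mul_comm, pow_mul]; exact hc.pow_pow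
  have hm' : m ≠ 2 * p := by rintro rfl; exact Nat.not_odd_iff_even.mpr (even_two_mul p) hm
  rcases hm'.lt_or_gt with hlt | hgt
  · have h1 : π ^ (m + 1) ∣ c ^ 2 := (hπ.pow_dvd_iff_le_of_associated hc2).mpr hlt
    have h2 : π ^ (m + 1) ∣ Δ := by
      simpa using ((pow_dvd_pow π (by omega)).trans h).add h1
    exact absurd ((hπ.pow_dvd_iff_le_of_associated hΔ.symm).mp h2) (by omega)
  · have h1 : π ^ (2 * p + 1) ∣ Δ := (hπ.pow_dvd_iff_le_of_associated hΔ.symm).mpr hgt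
    have h2 : π ^ (2 * p + 1) ∣ c ^ 2 := by simpa using h1.sub h
    exact absurd ((hπ.pow_dvd_iff_le_of_associated hc2).mp h2) (by omega)

variable [IsDiscreteValuationRing R]

theorem sq_ne_mul_sq {x y : R} (hy : y ≠ 0) : x ^ 2 ≠ Δ * y ^ 2 := by
  intro h
  have hΔ0 : Δ ≠ 0 := hΔ.ne_zero_iff.mp (pow_ne_zero m hπ.ne_zero)
  have hx : x ≠ 0 := by rintro rfl; simp_all
  obtain ⟨p, hp⟩ := IsDiscreteValuationRing.associated_pow_irreducible hx hπ
  obtain ⟨q, hq⟩ := IsDiscreteValuationRing.associated_pow_irreducible hy hπ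
  have h1 : Associated (x ^ 2) (π ^ (2 * p)) := by rw [mul_comm, pow_mul]; exact hp.pow_pow
  have h2 : Associated (x ^ 2) (π ^ (m + 2 * q)) := by
    rw [h, pow_add, mul_comm 2, pow_mul]; exact hΔ.symm.mul_mul hq.pow_pow
  have hle := (hπ.pow_dvd_iff_le_of_associated h2).mp
    ((hπ.pow_dvd_iff_le_of_associated h1).mpr le_rfl)
  have hge := (hπ.pow_dvd_iff_le_of_associated h1).mp
    ((hπ.pow_dvd_iff_le_of_associated h2).mpr le_rfl)
  obtain ⟨r, rfl⟩ := hm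
  omega

theorem dvd_of_mul_eq_sub_sq {c d d' : R} (h : d * d' = Δ - c ^ 2) (hdc : ¬ d ∣ c) :
    d' ∣ c := by
  have hc0 : c ≠ 0 := by rintro rfl; exact hdc (dvd_zero d)
  obtain ⟨p, hp⟩ := IsDiscreteValuationRing.associated_pow_irreducible hc0 hπ
  have hne : d * d' ≠ 0 := h ▸ fun h0 => not_pow_dvd_sub_sq hπ hΔ hm hp (h0 ▸ dvd_zero _)
  obtain ⟨t, ht⟩ :=
    IsDiscreteValuationRing.associated_pow_irreducible (left_ne_zero_of_mul hne) hπ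
  obtain ⟨q, hq⟩ :=
    IsDiscreteValuationRing.associated_pow_irreducible (right_ne_zero_of_mul hne) hπ
  have hpt : p < t := by
    by_contra! hle
    exact hdc (ht.dvd_iff_dvd_left.mpr ((hπ.pow_dvd_iff_le_of_associated hp).mpr hle))
  have htq : t + q < 2 * p + 1 := by
    by_contra! hle
    refine not_pow_dvd_sub_sq hπ hΔ hm hp (h ▸ ?_)
    exact (hπ.pow_dvd_iff_le_of_associated (pow_add π t q ▸ ht.mul_mul hq)).mpr hle
  exact hq.dvd_iff_dvd_left.mpr ((hπ.pow_dvd_iff_le_of_associated hp).mpr (by omega))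

end OddValuation

namespace QuadraticAlgebra

section
variable {R : Type*} [CommRing R] {Δ d d' c c' : R} {z : QuadraticAlgebra R Δ 0}

variable (Δ) in
def stdIdeal (d c : R) : Ideal (QuadraticAlgebra R Δ 0) :=
  Ideal.span {algebraMap R _ d, algebraMap R _ c + ω}

theorem mem_span_pair_of_dvd (h : d ∣ z.re - c * z.im) :
    z ∈ Submodule.span R {algebraMap R (QuadraticAlgebra R Δ 0) d, algebraMap R _ c + ω} := by
  obtain ⟨q, hq⟩ := h
  refine Submodule.mem_span_pair.mpr ⟨q, z.im, ?_⟩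
  ext <;> simp [Algebra.smul_def]
  linear_combination -hq

theorem dvd_of_mem_stdIdeal (h : d ∣ Δ - c ^ 2) (hz : z ∈ stdIdeal Δ d c) :
    d ∣ z.re - c * z.im := by
  obtain ⟨a, b, rfl⟩ := Ideal.mem_span_pair.mp hz
  obtain ⟨w, hw⟩ := h
  exact ⟨a.re - c * a.im + w * b.im, by simp; linear_combination b.im * hw⟩

theorem mem_stdIdeal_iff (h : d ∣ Δ - c ^ 2) : z ∈ stdIdeal Δ d c ↔ d ∣ z.re - c * z.im :=
  ⟨dvd_of_mem_stdIdeal h, fun hz =>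
    Submodule.span_le_restrictScalars R _ _ (mem_span_pair_of_dvd hz)⟩

theorem mem_stdIdeal_zero_iff (h : d ∣ Δ) : z ∈ stdIdeal Δ d 0 ↔ d ∣ z.re := by
  simpa using mem_stdIdeal_iff (z := z) (c := 0) (by simpa using h)

theorem coe_stdIdeal (h : d ∣ Δ - c ^ 2) :
    (stdIdeal Δ d c : Set (QuadraticAlgebra R Δ 0)) =
      Submodule.span R {algebraMap R (QuadraticAlgebra R Δ 0) d, algebraMap R _ c + ω} :=
  Set.Subset.antisymm (fun _ hz => mem_span_pair_of_dvd (dvd_of_mem_stdIdeal h hz))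
    (Submodule.span_le_restrictScalars R _ _)

theorem stdIdeal_eq_of_dvd_sub (h : d ∣ Δ - c ^ 2) (hc : d ∣ c - c') :
    stdIdeal Δ d c = stdIdeal Δ d c' := by
  have h' : d ∣ Δ - c' ^ 2 := by
    convert h.add (hc.mul_right (c + c')) using 1; ring
  ext z
  rw [mem_stdIdeal_iff h, mem_stdIdeal_iff h', ← dvd_add_left (hc.mul_right z.im)]
  ring_nf

theorem stdIdeal_eq_of_associated (h : d ∣ Δ - c ^ 2) (hd : Associated d d') :
    stdIdeal Δ d c = stdIdeal Δ d' c := by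
  ext z
  rw [mem_stdIdeal_iff h, mem_stdIdeal_iff (hd.dvd_iff_dvd_left.mp h), hd.dvd_iff_dvd_left]

theorem span_sub_omega_mul_stdIdeal (h : d * d' = Δ - c ^ 2) :
    Ideal.span {algebraMap R _ c - ω} * stdIdeal Δ d c =
      Ideal.span {algebraMap R _ d} * stdIdeal Δ d' (-c) := by
  have hd : d ∣ Δ - c ^ 2 := ⟨d', h.symm⟩
  have hd' : d' ∣ Δ - (-c) ^ 2 := ⟨d, by rw [neg_sq, ← h, mul_comm]⟩
  ext z
  simp only [Ideal.mem_span_singleton_mul, mem_stdIdeal_iff hd, mem_stdIdeal_iff hd']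
  constructor
  · rintro ⟨w, ⟨q, hq⟩, rfl⟩
    refine ⟨⟨q * c - d' * w.im, -q⟩, ⟨-w.im, by simp; ring⟩, ?_⟩
    ext <;> simp
    · linear_combination (-c) * hq - w.im * h
    · linear_combination hq
  · rintro ⟨w, ⟨q, hq⟩, rfl⟩
    refine ⟨⟨-c * q - d * w.im, -q⟩, ⟨-w.im, by simp; ring⟩, ?_⟩
    ext <;> simp
    linear_combination (-d) * hq - q * h

theorem equivalent_stdIdeal_neg [Nontrivial R] (h : d * d' = Δ - c ^ 2) (hd : d ≠ 0) :
    Ideal.Equivalent (stdIdeal Δ d c) (stdIdeal Δ d' (-c)) :=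
  ⟨_, _, fun h0 => by simpa using congrArg im h0, by simpa using hd,
    span_sub_omega_mul_stdIdeal h⟩

theorem stdIdeal_mul_self (h : d ^ 2 ∣ Δ) :
    stdIdeal Δ d 0 * stdIdeal Δ d 0 = Ideal.span {algebraMap R _ d} * stdIdeal Δ d 0 := by
  have hd : d ∣ Δ := (dvd_pow_self d two_ne_zero).trans h
  refine le_antisymm (Ideal.mul_le.mpr fun x hx y hy => ?_)
    (Ideal.mul_mono_left ((Ideal.span_singleton_le_iff_mem _).mpr
      (Ideal.subset_span (Set.mem_insert _ _))))
  obtain ⟨x', hx'⟩ := (mem_stdIdeal_zero_iff hd).mp hx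
  obtain ⟨y', hy'⟩ := (mem_stdIdeal_zero_iff hd).mp hy
  obtain ⟨δ, hδ⟩ := h
  refine Ideal.mem_span_singleton_mul.mpr
    ⟨⟨d * (x' * y' + δ * x.im * y.im), x' * y.im + x.im * y'⟩,
      (mem_stdIdeal_zero_iff hd).mpr ⟨x' * y' + δ * x.im * y.im, rfl⟩, ?_⟩
  ext <;> simp [hx', hy', hδ] <;> ring

theorem map_star_stdIdeal :
    (stdIdeal Δ d 0).map (starRingEnd _) = stdIdeal Δ d 0 := by
  have h1 : starRingEnd _ (algebraMap R (QuadraticAlgebra R Δ 0) d) = algebraMap R _ d := by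
    ext <;> simp [starRingEnd_apply]
  have h2 : starRingEnd _ (algebraMap R (QuadraticAlgebra R Δ 0) 0 + ω) =
      -(algebraMap R _ 0 + ω) := by
    ext <;> simp [starRingEnd_apply]
  rw [stdIdeal, Ideal.map_span, Set.image_pair, h1, h2, Ideal.span_insert, Ideal.span_insert,
    Ideal.span_singleton_neg]

theorem dvd_of_mem_span_mul_stdIdeal {x : R} (h : d ∣ Δ - c ^ 2)
    (hz : z ∈ Ideal.span {algebraMap R _ x} * stdIdeal Δ d c) :
    x ∣ z.im ∧ x * d ∣ z.re - c * z.im := by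
  obtain ⟨w, hw, rfl⟩ := Ideal.mem_span_singleton_mul.mp hz
  obtain ⟨q, hq⟩ := (mem_stdIdeal_iff h).mp hw
  exact ⟨⟨w.im, by simp⟩, ⟨q, by simp; linear_combination x * hq⟩⟩

theorem dvd_of_span_mul_stdIdeal_eq {x y : R} (hd : d ∣ Δ) (hd' : d' ∣ Δ)
    (h : Ideal.span {algebraMap R _ x} * stdIdeal Δ d 0 =
      Ideal.span {algebraMap R _ y} * stdIdeal Δ d' 0) :
    x ∣ y ∧ x * d ∣ y * d' := by
  have hω : algebraMap R _ y * ω ∈ Ideal.span {algebraMap R _ y} * stdIdeal Δ d' 0 :=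
    Ideal.mul_mem_mul (Ideal.mem_span_singleton_self _) ((mem_stdIdeal_zero_iff hd').mpr (by simp))
  have hyd' : algebraMap R (QuadraticAlgebra R Δ 0) (y * d') ∈
      Ideal.span {algebraMap R _ y} * stdIdeal Δ d' 0 := by
    rw [map_mul]
    exact Ideal.mul_mem_mul (Ideal.mem_span_singleton_self _)
      ((mem_stdIdeal_zero_iff hd').mpr (by rw [algebraMap_re]))
  rw [← h] at hω hyd'
  have hd0 : d ∣ Δ - 0 ^ 2 := by simpa using hd
  exact ⟨by simpa using (dvd_of_mem_span_mul_stdIdeal hd0 hω).1, by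
    simpa only [algebraMap_re, algebraMap_im, mul_zero, sub_zero] using
      (dvd_of_mem_span_mul_stdIdeal hd0 hyd').2⟩

theorem eq_span_mul_stdIdeal {J : Ideal (QuadraticAlgebra R Δ 0)} {g : R} (h : d ∣ Δ - c ^ 2)
    (him : ∀ z ∈ J, g ∣ z.im) (hre : ∀ r, algebraMap R _ r ∈ J ↔ g * d ∣ r)
    (hy : algebraMap R _ g * (algebraMap R _ c + ω) ∈ J) :
    J = Ideal.span {algebraMap R _ g} * stdIdeal Δ d c := by
  refine le_antisymm (fun z hz => ?_) fun z hz => ?_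
  · obtain ⟨s, hs⟩ := him z hz
    obtain ⟨r, hr⟩ := (hre (z.re - s * (g * c))).mp (by
      convert J.sub_mem hz (J.mul_mem_left (algebraMap R _ s) hy) using 1
      ext <;> simp [hs]
      ring)
    refine Ideal.mem_span_singleton_mul.mpr
      ⟨⟨s * c + d * r, s⟩, (mem_stdIdeal_iff h).mpr ⟨r, by ring⟩, ?_⟩
    ext <;> simp [hs]
    linear_combination -hr
  · obtain ⟨w, hw, rfl⟩ := Ideal.mem_span_singleton_mul.mp hz
    obtain ⟨r, hr⟩ := (mem_stdIdeal_iff h).mp hw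
    convert J.add_mem (J.mul_mem_left (algebraMap R _ r) ((hre _).mpr dvd_rfl))
      (J.mul_mem_left (algebraMap R _ w.im) hy) using 1
    ext <;> simp
    · linear_combination g * hr
    · ring

theorem exists_eq_span_mul_stdIdeal [IsDomain R] [IsPrincipalIdealRing R]
    (hN : ∀ z : QuadraticAlgebra R Δ 0, norm z = 0 → z = 0)
    {J : Ideal (QuadraticAlgebra R Δ 0)} (hJ : J ≠ ⊥) :
    ∃ g d c : R, g ≠ 0 ∧ d ≠ 0 ∧ d ∣ Δ - c ^ 2 ∧
      J = Ideal.span {algebraMap R _ g} * stdIdeal Δ d c := by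
  obtain ⟨g, hg⟩ :=
    (IsPrincipalIdealRing.principal ((J.restrictScalars R).map (imₗ Δ 0))).principal
  obtain ⟨e, he⟩ := (IsPrincipalIdealRing.principal (J.comap (algebraMap R _))).principal
  have mem_im {r : R} : (∃ z ∈ J, z.im = r) ↔ g ∣ r :=
    (Submodule.ext_iff.mp hg r).trans Ideal.mem_span_singleton
  have mem_re {r : R} : algebraMap R _ r ∈ J ↔ e ∣ r :=
    (Submodule.ext_iff.mp he r).trans Ideal.mem_span_singleton
  obtain ⟨z, hzJ, hz0⟩ := Submodule.exists_mem_ne_zero_of_ne_bot hJ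
  have he0 : e ≠ 0 := by
    rintro rfl
    have : algebraMap R _ (norm z) ∈ J := by
      rw [algebraMap_norm_eq_mul_star]; exact J.mul_mem_right _ hzJ
    exact hz0 (hN z (zero_dvd_iff.mp (mem_re.mp this)))
  obtain ⟨d, rfl⟩ : g ∣ e :=
    mem_im.mp ⟨ω * algebraMap R _ e, J.mul_mem_left _ (mem_re.mpr dvd_rfl), by simp⟩
  have hg0 : g ≠ 0 := left_ne_zero_of_mul he0
  obtain ⟨y, hyJ, hy⟩ := mem_im.mpr (dvd_refl g)
  obtain ⟨c, hc⟩ : g ∣ y.re := mem_im.mp ⟨ω * y, J.mul_mem_left _ hyJ, by simp⟩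
  have hy' : algebraMap R _ g * (algebraMap R _ c + ω) ∈ J := by
    convert hyJ using 1; ext <;> simp [hc, hy]
  have hdc : d ∣ Δ - c ^ 2 := by
    refine (mul_dvd_mul_iff_left hg0).mp (mem_re.mp ?_)
    convert J.mul_mem_left (ω - algebraMap R _ c) hy' using 1
    ext <;> simp [sq] <;> ring
  exact ⟨g, d, c, hg0, right_ne_zero_of_mul he0, hdc,
    eq_span_mul_stdIdeal hdc (fun z hz => mem_im.mp ⟨z, hz, rfl⟩) (fun _ => mem_re) hy'⟩

end

section
variable {R : Type*} [CommRing R] [IsDomain R] {π : R} (hπ : Irreducible π) {Δ : R} {m : ℕ}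
  (hΔ : Associated (π ^ m) Δ)
include hπ hΔ

theorem eq_of_span_mul_stdIdeal_eq {k l : ℕ} (hk : k ≤ m) (hl : l ≤ m) {x y : R}
    (hx : x ≠ 0) (h : Ideal.span {algebraMap R _ x} * stdIdeal Δ (π ^ k) 0 =
      Ideal.span {algebraMap R _ y} * stdIdeal Δ (π ^ l) 0) : k = l := by
  have hk' : π ^ k ∣ Δ := (pow_dvd_pow π hk).trans hΔ.dvd
  have hl' : π ^ l ∣ Δ := (pow_dvd_pow π hl).trans hΔ.dvd
  obtain ⟨hxy, hxy'⟩ := dvd_of_span_mul_stdIdeal_eq hk' hl' h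
  obtain ⟨hyx, hyx'⟩ := dvd_of_span_mul_stdIdeal_eq hl' hk' h.symm
  have := (associated_of_dvd_dvd hxy' hyx').of_mul_left (associated_of_dvd_dvd hxy hyx) hx
  exact le_antisymm ((hπ.pow_dvd_iff_le_of_associated this).mp dvd_rfl)
    ((hπ.pow_dvd_iff_le_of_associated this.symm).mp dvd_rfl)

variable [IsDiscreteValuationRing R]

theorem norm_eq_zero_iff_of_odd (hm : Odd m) {z : QuadraticAlgebra R Δ 0} :
    norm z = 0 ↔ z = 0 := by
  refine ⟨fun h => ?_, fun h => h ▸ norm_zero⟩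
  have hre : z.re ^ 2 = Δ * z.im ^ 2 := by rw [norm_def] at h; linear_combination h
  by_cases him : z.im = 0
  · ext
    · simpa [him] using hre
    · exact him
  · exact absurd hre (sq_ne_mul_sq hπ hΔ hm him)

theorem isDomain_of_odd (hm : Odd m) : IsDomain (QuadraticAlgebra R Δ 0) :=
  have : NoZeroDivisors (QuadraticAlgebra R Δ 0) := ⟨fun {z w} h => by
    simpa [norm_eq_zero_iff_of_odd hπ hΔ hm] using congrArg norm h⟩
  NoZeroDivisors.to_isDomain _

theorem exists_equivalent_stdIdeal_of_dvd {d : R} (hd : d ∣ Δ) (hd0 : d ≠ 0) :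
    ∃ k ≤ m / 2, Ideal.Equivalent (stdIdeal Δ d 0) (stdIdeal Δ (π ^ k) 0) := by
  obtain ⟨s, hs⟩ := IsDiscreteValuationRing.associated_pow_irreducible hd0 hπ
  have hsm : s ≤ m := (hπ.pow_dvd_iff_le_of_associated hΔ.symm).mp (hs.dvd_iff_dvd_left.mp hd)
  rw [stdIdeal_eq_of_associated (by simpa using hd) hs]
  by_cases hsm2 : s ≤ m / 2
  · exact ⟨s, hsm2, Ideal.Equivalent.refl _⟩
  obtain ⟨u, hu⟩ := hΔ
  have h : π ^ s * (π ^ (m - s) * u) = Δ - 0 ^ 2 := by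
    rw [← hu, ← mul_assoc, ← pow_add, Nat.add_sub_cancel' hsm]; ring
  refine ⟨m - s, by omega, ?_⟩
  have := equivalent_stdIdeal_neg h (pow_ne_zero s hπ.ne_zero)
  rwa [neg_zero, stdIdeal_eq_of_associated (Dvd.intro_left _ h)
    (associated_mul_unit_left _ _ u.isUnit)] at this

theorem exists_equivalent_stdIdeal (hm : Odd m) {c d : R} (h : d ∣ Δ - c ^ 2) (hd0 : d ≠ 0) :
    ∃ k ≤ m / 2, Ideal.Equivalent (stdIdeal Δ d c) (stdIdeal Δ (π ^ k) 0) := by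
  have := isDomain_of_odd hπ hΔ hm
  by_cases hdc : d ∣ c
  · rw [stdIdeal_eq_of_dvd_sub (c' := 0) h (by simpa using hdc)]
    exact exists_equivalent_stdIdeal_of_dvd hπ hΔ (by simpa using h.add (hdc.pow two_ne_zero)) hd0
  obtain ⟨d', hd'⟩ := h
  have hd'c : d' ∣ c := dvd_of_mul_eq_sub_sq hπ hΔ hm hd'.symm hdc
  have hd'0 : d' ≠ 0 := by rintro rfl; exact hdc (zero_dvd_iff.mp hd'c ▸ dvd_zero d)
  obtain ⟨k, hk, hequiv⟩ := exists_equivalent_stdIdeal_of_dvd hπ hΔ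
    (by simpa using (Dvd.intro_left d hd'.symm).add (hd'c.pow two_ne_zero)) hd'0
  refine ⟨k, hk, (equivalent_stdIdeal_neg hd'.symm hd0).trans ?_⟩
  rwa [stdIdeal_eq_of_dvd_sub (c' := 0) (Dvd.intro_left d (by rw [neg_sq]; exact hd'.symm))
    (by simpa using hd'c)]

theorem eq_of_equivalent_stdIdeal (hm : Odd m) {k l : ℕ} (hk : k ≤ m / 2) (hl : l ≤ m / 2)
    (h : Ideal.Equivalent (stdIdeal Δ (π ^ k) 0) (stdIdeal Δ (π ^ l) 0)) : k = l := by
  obtain ⟨α, β, hα, hβ, h⟩ := h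
  have hstar := congrArg (Ideal.map (starRingEnd _)) h
  simp only [Ideal.map_mul, Ideal.map_span, Set.image_singleton, map_star_stdIdeal,
    starRingEnd_apply] at hstar
  have expand (γ : QuadraticAlgebra R Δ 0) {j : ℕ} (hj : j ≤ m / 2) :
      (Ideal.span {γ} * stdIdeal Δ (π ^ j) 0) * (Ideal.span {star γ} * stdIdeal Δ (π ^ j) 0) =
        Ideal.span {algebraMap R _ (norm γ * π ^ j)} * stdIdeal Δ (π ^ j) 0 := by
    have hsq : (π ^ j) ^ 2 ∣ Δ := by
      rw [← pow_mul]; exact (pow_dvd_pow π (by omega)).trans hΔ.dvd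
    rw [mul_mul_mul_comm, Ideal.span_singleton_mul_span_singleton, ← algebraMap_norm_eq_mul_star,
      stdIdeal_mul_self hsq, ← mul_assoc, Ideal.span_singleton_mul_span_singleton, ← map_mul]
  have hnorm := expand α hk
  rw [h, hstar, expand β hl] at hnorm
  refine eq_of_span_mul_stdIdeal_eq hπ hΔ (by omega) (by omega) ?_ hnorm.symm
  exact mul_ne_zero (by simpa [norm_eq_zero_iff_of_odd hπ hΔ hm] using hα)
    (pow_ne_zero k hπ.ne_zero)

theorem existsUnique_equivalent_stdIdeal (hm : Odd m) {J : Ideal (QuadraticAlgebra R Δ 0)}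
    (hJ : J ≠ ⊥) : ∃! k, k ≤ m / 2 ∧ Ideal.Equivalent J (stdIdeal Δ (π ^ k) 0) := by
  have := isDomain_of_odd hπ hΔ hm
  obtain ⟨g, d, c, hg, hd, hdc, rfl⟩ :=
    exists_eq_span_mul_stdIdeal (fun z => (norm_eq_zero_iff_of_odd hπ hΔ hm).mp) hJ
  obtain ⟨k, hk, hequiv⟩ := exists_equivalent_stdIdeal hπ hΔ hm hdc hd
  have hJk := (Ideal.Equivalent.span_singleton_mul_left
    ((map_ne_zero_iff _ algebraMap_injective).mpr hg) _).trans hequiv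
  exact ⟨k, ⟨hk, hJk⟩, fun l ⟨hl, hJl⟩ =>
    eq_of_equivalent_stdIdeal hπ hΔ hm hl hk (hJl.symm.trans hJk)⟩

end

section
variable {R : Type*} [CommRing R]

theorem aeval_sq_sub_C (s Δ : R) :
    aeval (algebraMap R (QuadraticAlgebra R Δ 0) s + ω) ((X - C s) ^ 2 - C Δ) = 0 := by
  ext <;> simp [sq]

noncomputable def quotientAlgEquiv (s Δ : R) :
    (R[X] ⧸ Ideal.span {(X - C s) ^ 2 - C Δ}) ≃ₐ[R] QuadraticAlgebra R Δ 0 :=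
  AlgEquiv.ofAlgHom
    (Ideal.Quotient.liftₐ _ (aeval (algebraMap R _ s + ω)) fun p hp => by
      obtain ⟨q, rfl⟩ := Ideal.mem_span_singleton'.mp hp
      rw [map_mul, aeval_sq_sub_C, mul_zero])
    (QuadraticAlgebra.lift ⟨Ideal.Quotient.mk _ (X - C s), by
      rw [← map_mul, zero_smul, add_zero, Algebra.smul_def, mul_one,
        ← Ideal.Quotient.mk_algebraMap, Ideal.Quotient.eq, Ideal.mem_span_singleton]
      exact ⟨1, by simp [sq]⟩⟩)
    (QuadraticAlgebra.algHom_ext (by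
      change aeval (algebraMap R _ s + ω) ((ω : QuadraticAlgebra R Δ 0).re • 1 +
        (ω : QuadraticAlgebra R Δ 0).im • (X - C s)) = ω
      simp))
    (Ideal.Quotient.algHom_ext R (Polynomial.algHom_ext (by
      simp only [AlgHom.comp_apply, Ideal.Quotient.mkₐ_eq_mk, AlgHom.id_apply]
      erw [Ideal.Quotient.lift_mk]
      simp [Algebra.smul_def, ← Ideal.Quotient.mk_algebraMap])))

theorem quotientAlgEquiv_mk (s Δ : R) (p : R[X]) :
    quotientAlgEquiv s Δ (Ideal.Quotient.mk _ p) = aeval (algebraMap R _ s + ω) p :=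
  rfl

theorem coe_comap_quotientAlgEquiv_stdIdeal {s Δ d c : R} (h : d ∣ Δ - c ^ 2) :
    ((stdIdeal Δ d c).comap (quotientAlgEquiv s Δ) :
        Set (R[X] ⧸ Ideal.span {(X - C s) ^ 2 - C Δ})) =
      (Submodule.span R {algebraMap R _ d, Ideal.Quotient.mk _ X - algebraMap R _ (s - c)} :
        Submodule R (R[X] ⧸ Ideal.span {(X - C s) ^ 2 - C Δ})) := by
  ext z
  rw [Ideal.coe_comap, Set.mem_preimage, coe_stdIdeal h, SetLike.mem_coe, SetLike.mem_coe,
    Submodule.mem_span_pair, Submodule.mem_span_pair]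
  refine exists₂_congr fun r t => ?_
  rw [← (quotientAlgEquiv s Δ).injective.eq_iff, map_add, map_smul, map_smul, AlgEquiv.commutes,
    map_sub, quotientAlgEquiv_mk, AlgEquiv.commutes]
  simp [add_comm (_ • ω)]

theorem comap_quotientAlgEquiv_stdIdeal_ne_bot {s Δ d c : R} (hd : d ≠ 0) :
    (stdIdeal Δ d c).comap (quotientAlgEquiv s Δ) ≠ ⊥ := by
  refine (Submodule.ne_bot_iff _).mpr ⟨(quotientAlgEquiv s Δ).symm (algebraMap R _ d), ?_,
    (map_ne_zero_iff _ (AlgEquiv.injective _)).mpr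
      ((map_ne_zero_iff _ algebraMap_injective).mpr hd)⟩
  rw [Ideal.mem_comap, AlgEquiv.apply_symm_apply]
  exact Ideal.subset_span (Set.mem_insert _ _)

variable [IsDomain R] [IsDiscreteValuationRing R] {π : R} (hπ : Irreducible π) {Δ : R} {m : ℕ}
  (hΔ : Associated (π ^ m) Δ) (hm : Odd m)
include hπ hΔ hm

theorem existsUnique_equivalent_comap_stdIdeal (s : R)
    {J : Ideal (R[X] ⧸ Ideal.span {(X - C s) ^ 2 - C Δ})} (hJ : J ≠ ⊥) :
    ∃! k, k ≤ m / 2 ∧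
      J.Equivalent ((stdIdeal Δ (π ^ k) 0).comap (quotientAlgEquiv s Δ)) := by
  simp only [Ideal.Equivalent.comap_iff]
  exact existsUnique_equivalent_stdIdeal hπ hΔ hm
    ((Ideal.map_eq_bot_iff_of_injective (quotientAlgEquiv s Δ).injective).not.mpr hJ)

end

end QuadraticAlgebra

theorem ideal_classes_two_not_unit_odd_valuation_general
    (R : Type*) [CommRing R] [IsDomain R] [IsDiscreteValuationRing R]
    (π : R) (hπ : Irreducible π)
    (a b : R) (a2 : R) (ha2 : a = 2 * a2)
    (f : R[X]) (hf : f = X ^ 2 - C a * X - C b)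
    (θ : R[X] ⧸ Ideal.span {f}) (hθ : θ = Ideal.Quotient.mk (Ideal.span {f}) X)
    (m : ℕ) (hmodd : Odd m) (hm : Associated (π ^ m) (a2 ^ 2 + b)) :
    (∀ J : Ideal (R[X] ⧸ Ideal.span {f}), J ≠ ⊥ →
      ∃! k : ℕ, k ≤ m / 2 ∧
        ∃ J' : Ideal (R[X] ⧸ Ideal.span {f}),
          (J' : Set (R[X] ⧸ Ideal.span {f})) =
            (Submodule.span R
              {algebraMap R (R[X] ⧸ Ideal.span {f}) (π ^ k),
                θ - algebraMap R (R[X] ⧸ Ideal.span {f}) a2} :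
              Submodule R (R[X] ⧸ Ideal.span {f})) ∧
          ∃ α₁ α₂ : R[X] ⧸ Ideal.span {f}, α₁ ≠ 0 ∧ α₂ ≠ 0 ∧
            Ideal.span {α₁} * J = Ideal.span {α₂} * J') ∧
    Nat.card
      (Quot (fun (J₁ J₂ : {J : Ideal (R[X] ⧸ Ideal.span {f}) // J ≠ ⊥}) =>
        ∃ α₁ α₂ : R[X] ⧸ Ideal.span {f}, α₁ ≠ 0 ∧ α₂ ≠ 0 ∧
          Ideal.span {α₁} * J₁.1 = Ideal.span {α₂} * J₂.1)) = m / 2 + 1 := by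
  obtain rfl : f = (X - C a2) ^ 2 - C (a2 ^ 2 + b) := by
    rw [hf, ha2, map_mul, map_ofNat]; simp only [map_add, map_pow]; ring
  subst hθ
  have := isDomain_of_odd hπ hm hmodd
  have := (quotientAlgEquiv a2 (a2 ^ 2 + b)).toMulEquiv.isDomain
  set I := fun k => (stdIdeal (a2 ^ 2 + b) (π ^ k) 0).comap (quotientAlgEquiv a2 (a2 ^ 2 + b))
  have hclass := fun J => existsUnique_equivalent_comap_stdIdeal hπ hm hmodd a2 (J := J)
  have hI {k : ℕ} (hk : k ≤ m) := coe_comap_quotientAlgEquiv_stdIdeal (s := a2) (c := 0)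
    (by simpa using (pow_dvd_pow π hk).trans hm.dvd : π ^ k ∣ a2 ^ 2 + b - 0 ^ 2)
  rw [sub_zero] at hI
  refine ⟨fun J hJ => ?_, ?_⟩
  · obtain ⟨k, ⟨hk, hJk⟩, huniq⟩ := hclass J hJ
    refine ⟨k, ⟨hk, I k, hI (by omega), hJk⟩,
      fun l ⟨hl, J', hJ', hJJ'⟩ => huniq l ⟨hl, ?_⟩⟩
    rwa [← SetLike.coe_injective (hJ'.trans (hI (by omega)).symm)]
  · exact Nat.card_quot_of_existsUnique (Ideal.Equivalent.equivalence.comap Subtype.val)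
      (fun k => ⟨I k, comap_quotientAlgEquiv_stdIdeal_ne_bot (pow_ne_zero k hπ.ne_zero)⟩)
      fun J => by simpa only [Nat.lt_succ_iff] using hclass J.1 J.2

/-- Let `R` be a DVR with uniformizer `π` and valuation `v`, with
`v(2) = e > 0`, and `f(x) = x² − ax − b ∈ R[x]` monic irreducible over the fraction
field `K` with `v(a) ≥ e`; write `a = 2·a₂` (so `a/2 = a₂ ∈ R`) and
`Δ := a²/4 + b = a₂² + b ∈ R`. If `v(Δ) = m` is odd, then every nonzero ideal of
`R[θ]` is equivalent to exactly one of the ideals `Rπᵏ + R(θ − a/2)` with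
`0 ≤ k ≤ ⌊m/2⌋`; in particular the set of equivalence classes of nonzero ideals of
`R[θ]` has cardinality `⌊m/2⌋ + 1`. -/
theorem ideal_classes_two_not_unit_odd_valuation
    (R : Type*) [CommRing R] [IsDomain R] [IsDiscreteValuationRing R]
    (K : Type*) [Field K] [Algebra R K] [IsFractionRing R K]
    (π : R) (hπ : Irreducible π)
    (e : ℕ) (he : 0 < e) (h2 : Associated (π ^ e) (2 : R))
    (a b : R) (ha : π ^ e ∣ a) (a2 : R) (ha2 : a = 2 * a2)
    (f : R[X]) (hf : f = X ^ 2 - C a * X - C b)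
    (hirr : Irreducible (f.map (algebraMap R K)))
    (θ : R[X] ⧸ Ideal.span {f}) (hθ : θ = Ideal.Quotient.mk (Ideal.span {f}) X)
    (m : ℕ) (hmodd : Odd m) (hm : Associated (π ^ m) (a2 ^ 2 + b)) :
    (∀ J : Ideal (R[X] ⧸ Ideal.span {f}), J ≠ ⊥ →
      ∃! k : ℕ, k ≤ m / 2 ∧
        ∃ J' : Ideal (R[X] ⧸ Ideal.span {f}),
          (J' : Set (R[X] ⧸ Ideal.span {f})) =
            (Submodule.span R
              {algebraMap R (R[X] ⧸ Ideal.span {f}) (π ^ k),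
                θ - algebraMap R (R[X] ⧸ Ideal.span {f}) a2} :
              Submodule R (R[X] ⧸ Ideal.span {f})) ∧
          ∃ α₁ α₂ : R[X] ⧸ Ideal.span {f}, α₁ ≠ 0 ∧ α₂ ≠ 0 ∧
            Ideal.span {α₁} * J = Ideal.span {α₂} * J') ∧
    Nat.card
      (Quot (fun (J₁ J₂ : {J : Ideal (R[X] ⧸ Ideal.span {f}) // J ≠ ⊥}) =>
        ∃ α₁ α₂ : R[X] ⧸ Ideal.span {f}, α₁ ≠ 0 ∧ α₂ ≠ 0 ∧
          Ideal.span {α₁} * J₁.1 = Ideal.span {α₂} * J₂.1)) = m / 2 + 1 :=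
  ideal_classes_two_not_unit_odd_valuation_general R π hπ a b a2 ha2 f hf θ hθ m hmodd hm
end
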